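/- arXiv:math/0505681 — 7 statements merged into one kernel-verified Lean document; each statement's English description precedes it below -/
import Mathlib

section
/- For any t ∈ ℝ, the characteristic function E[exp(it D_{n+1}/n)] equals ∫ [(1 - F(θ-x)) e^{it/n} + F(θ-x)]^n F(dx), and this converges as n → ∞ to ∫ exp(it(1 - F(θ - x))) F(dx). -/
open MeasureTheory ProbabilityTheory Set Filter Complex

set_option maxHeartbeats 1000000


lemma log_slope : Tendsto (fun w : ℂ => Complex.log (1 + w) / w) (nhdsWithin 0 {0}ᶜ) (nhds 1) := by
  have h : HasDerivAt (fun w : ℂ => Complex.log (1 + w)) 1 0 := by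
    have h1 : HasDerivAt (fun w : ℂ => 1 + w) 1 0 := by
      simpa using (hasDerivAt_id (0:ℂ)).const_add 1
    have h2 : HasDerivAt Complex.log (1:ℂ)⁻¹ (1 + 0 : ℂ) := by
      simpa using Complex.hasDerivAt_log (by simp [Complex.slitPlane] : (1+0:ℂ) ∈ Complex.slitPlane)
    have h3 := h2.comp 0 h1
    rw [inv_one, one_mul] at h3
    exact h3
  have := hasDerivAt_iff_tendsto_slope.mp h
  refine this.congr (fun w => ?_)
  simp [slope_def_field, div_eq_mul_inv, mul_comm]

lemma L0 {a : ℕ → ℂ} {z : ℂ} (ha : Tendsto a atTop (nhds z)) (hne : ∀ᶠ n in atTop, a n ≠ 0) :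
    Tendsto (fun n : ℕ => (1 + a n / n) ^ n) atTop (nhds (Complex.exp z)) := by
  have hinv : Tendsto (fun n : ℕ => ((n : ℂ))⁻¹) atTop (nhds 0) := by
    rw [tendsto_zero_iff_norm_tendsto_zero]
    simpa [Function.comp_def] using tendsto_inv_atTop_zero.comp (tendsto_natCast_atTop_atTop (R := ℝ))
  have hw : Tendsto (fun n : ℕ => a n / n) atTop (nhds 0) := by
    simpa [div_eq_mul_inv] using ha.mul hinv
  -- w n ≠ 0 eventually
  have hne' : ∀ᶠ n in atTop, a n / (n:ℂ) ≠ 0 := by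
    filter_upwards [hne, eventually_ge_atTop 1] with n h1 h2
    exact div_ne_zero h1 (by exact_mod_cast Nat.one_le_iff_ne_zero.mp h2)
  have hwin : Tendsto (fun n : ℕ => a n / n) atTop (nhdsWithin 0 {0}ᶜ) :=
    tendsto_nhdsWithin_iff.mpr ⟨hw, hne'⟩
  have hlog : Tendsto (fun n : ℕ => (n : ℂ) * Complex.log (1 + a n / n)) atTop (nhds z) := by
    have hratio := log_slope.comp hwin
    have : Tendsto (fun n : ℕ => a n * (Complex.log (1 + a n / n) / (a n / n))) atTop
        (nhds (z * 1)) := ha.mul hratio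
    rw [mul_one] at this
    refine this.congr' ?_
    filter_upwards [hne', eventually_ge_atTop 1] with n h1 h2
    have hn : (n : ℂ) ≠ 0 := by exact_mod_cast Nat.one_le_iff_ne_zero.mp h2
    have han : a n ≠ 0 := fun h => h1 (by simp [h])
    field_simp
  have h1w : ∀ᶠ n in atTop, (1 : ℂ) + a n / n ≠ 0 := by
    have : ∀ᶠ n in atTop, ‖a n / (n:ℂ)‖ < 1 := by
      have := hw.norm
      simpa using this.eventually (gt_mem_nhds (by norm_num : ‖(0:ℂ)‖ < 1))
    filter_upwards [this] with n h
    intro hc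
    have : a n / (n:ℂ) = -1 := by linear_combination hc
    rw [this] at h; simp at h
  have := (Complex.continuous_exp.tendsto z).comp hlog
  refine this.congr' ?_
  filter_upwards [h1w] with n h
  rw [Function.comp_apply, Complex.exp_nat_mul, Complex.exp_log h]

lemma exp_slope : Tendsto (fun w : ℂ => (Complex.exp w - 1) / w) (nhdsWithin 0 {0}ᶜ) (nhds 1) := by
  have h : HasDerivAt Complex.exp 1 0 := by simpa using Complex.hasDerivAt_exp 0
  have := hasDerivAt_iff_tendsto_slope.mp h
  refine this.congr (fun w => ?_)
  simp [slope_def_field, div_eq_mul_inv, mul_comm]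

lemma L1 (t p : ℝ) (hp0 : 0 ≤ p) (hp1 : p ≤ 1) :
    Tendsto (fun n : ℕ => ((1 - (p:ℂ)) * Complex.exp (I*t/n) + p)^n) atTop
      (nhds (Complex.exp (I*t*(1-p)))) := by
  rcases eq_or_ne p 1 with hp | hp
  · subst hp; simp
  rcases eq_or_ne t 0 with ht | ht
  · subst ht; simp
  have hit : (I * (t:ℂ)) ≠ 0 := mul_ne_zero I_ne_zero (by exact_mod_cast ht)
  have h1p : (1 : ℂ) - p ≠ 0 := by
    intro h
    exact hp (by exact_mod_cast (sub_eq_zero.mp h).symm)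
  set w : ℕ → ℂ := fun n => I * t / n with hwdef
  have hinv : Tendsto (fun n : ℕ => ((n : ℂ))⁻¹) atTop (nhds 0) := by
    rw [tendsto_zero_iff_norm_tendsto_zero]
    simpa [Function.comp_def] using tendsto_inv_atTop_zero.comp (tendsto_natCast_atTop_atTop (R := ℝ))
  have hw0 : Tendsto w atTop (nhds 0) := by
    simpa [hwdef, div_eq_mul_inv] using (tendsto_const_nhds (x := I * (t:ℂ))).mul hinv
  have hwne : ∀ᶠ n in atTop, w n ≠ 0 := by
    filter_upwards [eventually_ge_atTop 1] with n hn
    have : (n : ℂ) ≠ 0 := by exact_mod_cast Nat.one_le_iff_ne_zero.mp hn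
    exact div_ne_zero hit this
  have hwin : Tendsto w atTop (nhdsWithin 0 {0}ᶜ) := tendsto_nhdsWithin_iff.mpr ⟨hw0, hwne⟩
  -- a n
  set a : ℕ → ℂ := fun n => n * ((1 - (p:ℂ)) * (Complex.exp (w n) - 1)) with hadef
  have ha : Tendsto a atTop (nhds (I * t * (1 - p))) := by
    have h1 : Tendsto (fun n : ℕ => (1 - (p:ℂ)) * (((Complex.exp (w n) - 1) / w n) * (I * t)))
        atTop (nhds ((1 - (p:ℂ)) * (1 * (I * t)))) :=
      tendsto_const_nhds.mul ((exp_slope.comp hwin).mul tendsto_const_nhds)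
    have h2 : (1 - (p:ℂ)) * (1 * (I * t)) = I * t * (1 - p) := by ring
    rw [h2] at h1
    refine h1.congr' ?_
    filter_upwards [eventually_ge_atTop 1] with n hn
    have hnne : (n : ℂ) ≠ 0 := by exact_mod_cast Nat.one_le_iff_ne_zero.mp hn
    have hwne : w n ≠ 0 := div_ne_zero hit hnne
    have htc : (t:ℂ) ≠ 0 := by exact_mod_cast ht
    simp only [hadef, hwdef]
    field_simp
  have hane : ∀ᶠ n in atTop, a n ≠ 0 := by
    have hsmall : ∀ᶠ n in atTop, ‖w n‖ < 1 := by
      simpa using hw0.norm.eventually (gt_mem_nhds (by norm_num : ‖(0:ℂ)‖ < 1))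
    filter_upwards [hwne, hsmall, eventually_ge_atTop 1] with n hn hs h1
    have hnne : (n : ℂ) ≠ 0 := by exact_mod_cast Nat.one_le_iff_ne_zero.mp h1
    refine mul_ne_zero hnne (mul_ne_zero h1p ?_)
    rw [sub_ne_zero]
    intro hc
    rcases Complex.exp_eq_one_iff.mp hc with ⟨k, hk⟩
    have hk0 : k ≠ 0 := by
      rintro rfl; simp at hk; exact hn hk
    have : (1:ℝ) ≤ ‖w n‖ := by
      rw [hk]
      rw [norm_mul, norm_mul, norm_mul]
      have : (1:ℝ) ≤ ‖(k:ℂ)‖ := by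
        rw [Complex.norm_intCast]
        exact_mod_cast Int.one_le_abs hk0
      have h2 : ‖(2:ℂ)‖ = 2 := by norm_num
      have hpi : ‖((Real.pi:ℝ):ℂ)‖ = Real.pi := by
        rw [Complex.norm_real]; exact abs_of_pos Real.pi_pos
      rw [h2, hpi, Complex.norm_I]
      nlinarith [Real.pi_gt_three]
    linarith
  have := L0 ha hane
  refine this.congr' ?_
  filter_upwards [eventually_ge_atTop 1] with n hn
  have hnne : (n : ℂ) ≠ 0 := by exact_mod_cast Nat.one_le_iff_ne_zero.mp hn
  congr 1
  simp only [hadef, hwdef]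
  field_simp
  ring


lemma integral_pi_pow (μ : Measure ℝ) [IsProbabilityMeasure μ] (f : ℝ → ℂ) :
    ∀ n : ℕ, ∫ w : Fin n → ℝ, ∏ k, f (w k) ∂(Measure.pi fun _ => μ) = (∫ y, f y ∂μ) ^ n := by
  intro n
  induction n with
  | zero => simp
  | succ n ih =>
    have mp := measurePreserving_piFinSuccAbove (fun _ : Fin (n+1) => (μ : Measure ℝ)) 0
    have hemb := (MeasurableEquiv.piFinSuccAbove (fun _ : Fin (n+1) => ℝ) 0).measurableEmbedding
    have key := mp.integral_comp hemb (fun p : ℝ × (Fin n → ℝ) => f p.1 * ∏ k, f (p.2 k))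
    have lhs_eq : ∀ v : Fin (n+1) → ℝ,
        f ((MeasurableEquiv.piFinSuccAbove (fun _ : Fin (n+1) => ℝ) 0) v).1 *
          ∏ k, f (((MeasurableEquiv.piFinSuccAbove (fun _ : Fin (n+1) => ℝ) 0) v).2 k)
        = ∏ i, f (v i) := by
      intro v
      rw [Fin.prod_univ_succ]
      congr 1
    have key2 : ∫ w : Fin (n+1) → ℝ, ∏ k, f (w k) ∂(Measure.pi fun _ => μ)
        = ∫ p : ℝ × (Fin n → ℝ), f p.1 * ∏ k, f (p.2 k)
            ∂(μ.prod (Measure.pi fun _ : Fin n => μ)) := by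
      rw [← key]
      exact integral_congr_ae (Filter.Eventually.of_forall fun v => (lhs_eq v).symm)
    rw [key2, integral_prod_mul (f := f) (g := fun w : Fin n → ℝ => ∏ k, f (w k)), ih]
    ring

lemma step1 (μ : Measure ℝ) [IsProbabilityMeasure μ] (h : ℝ → ℝ → ℂ)
    (hmh : Measurable (fun p : ℝ × ℝ => h p.1 p.2)) (hb : ∀ x y, ‖h x y‖ ≤ 1) (n : ℕ) :
    ∫ v : Fin (n+1) → ℝ, (∏ k : Fin n, h (v 0) (v k.succ)) ∂(Measure.pi fun _ => μ)
      = ∫ x, (∫ y, h x y ∂μ) ^ n ∂μ := by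
  have mp := measurePreserving_piFinSuccAbove (fun _ : Fin (n+1) => (μ : Measure ℝ)) 0
  have hemb := (MeasurableEquiv.piFinSuccAbove (fun _ : Fin (n+1) => ℝ) 0).measurableEmbedding
  set g : ℝ × (Fin n → ℝ) → ℂ := fun p => ∏ k, h p.1 (p.2 k) with hgdef
  have key := mp.integral_comp hemb g
  have lhs_eq : ∀ v : Fin (n+1) → ℝ,
      g ((MeasurableEquiv.piFinSuccAbove (fun _ : Fin (n+1) => ℝ) 0) v)
        = ∏ k : Fin n, h (v 0) (v k.succ) := by
    intro v
    rw [hgdef]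
    congr 1
  have hgm : Measurable g := by
    apply Finset.measurable_prod
    intro k _
    exact hmh.comp ((measurable_fst).prodMk ((measurable_pi_apply k).comp measurable_snd))
  have hgint : Integrable g (μ.prod (Measure.pi fun _ : Fin n => μ)) := by
    refine Integrable.mono' (integrable_const 1) hgm.aestronglyMeasurable ?_
    refine Filter.Eventually.of_forall fun p => ?_
    calc ‖g p‖ ≤ ∏ k : Fin n, ‖h p.1 (p.2 k)‖ := le_of_eq (norm_prod _ _)
      _ ≤ ∏ _k : Fin n, (1:ℝ) := Finset.prod_le_prod (fun _ _ => norm_nonneg _)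
          (fun k _ => hb _ _)
      _ = 1 := by simp
  have key2 : ∫ v : Fin (n+1) → ℝ, (∏ k : Fin n, h (v 0) (v k.succ)) ∂(Measure.pi fun _ => μ)
      = ∫ p : ℝ × (Fin n → ℝ), g p ∂(μ.prod (Measure.pi fun _ : Fin n => μ)) := by
    rw [← key]
    exact integral_congr_ae (Filter.Eventually.of_forall fun v => (lhs_eq v).symm)
  rw [key2, integral_prod g hgint]
  refine integral_congr_ae (Filter.Eventually.of_forall fun x => ?_)
  simpa using integral_pi_pow μ (h x) n

lemma map_pi {Ω : Type*} [MeasurableSpace Ω] (P : Measure Ω) [IsProbabilityMeasure P]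
    (μ : Measure ℝ) [IsProbabilityMeasure μ]
    (X : ℕ → Ω → ℝ) (hmeas : ∀ i, Measurable (X i))
    (hlaw : ∀ i, Measure.map (X i) P = μ)
    (hindep : iIndepFun X P) (m : ℕ) :
    Measure.map (fun ω (i : Fin m) => X ((i:ℕ)+1) ω) P = Measure.pi (fun _ => μ) := by
  have hY : Measurable (fun ω (i : Fin m) => X ((i:ℕ)+1) ω) :=
    measurable_pi_lambda _ (fun i => hmeas _)
  refine (Measure.pi_eq ?_).symm
  intro s hs
  rw [Measure.map_apply hY (MeasurableSet.univ_pi hs)]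
  set s' : ℕ → Set ℝ := fun j => ⋂ (i : Fin m) (_ : (i:ℕ)+1 = j), s i with hs'def
  have hs'meas : ∀ j, MeasurableSet (s' j) :=
    fun j => MeasurableSet.iInter fun i => MeasurableSet.iInter fun _ => hs i
  have hs'e : ∀ i : Fin m, s' ((i:ℕ)+1) = s i := by
    intro i
    ext y
    simp only [hs'def, Set.mem_iInter]
    constructor
    · intro h; exact h i rfl
    · intro h i' hi'
      have : i' = i := Fin.val_injective (by omega)
      rwa [this]
  set e : Fin m → ℕ := fun i => (i:ℕ)+1 with hedef
  have he : Function.Injective e := fun a b hab => Fin.val_injective (by simpa [hedef] using hab)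
  set S : Finset ℕ := Finset.image e Finset.univ with hSdef
  have hpre : (fun ω (i : Fin m) => X ((i:ℕ)+1) ω) ⁻¹' (Set.univ.pi s)
      = ⋂ j ∈ S, X j ⁻¹' s' j := by
    ext ω
    simp only [Set.mem_preimage, Set.mem_univ_pi, hSdef, Set.mem_iInter, Finset.mem_image,
      Finset.mem_univ, true_and]
    constructor
    · rintro h j ⟨i, rfl⟩
      rw [hedef, hs'e i]
      exact h i
    · intro h i
      have := h (e i) ⟨i, rfl⟩
      rwa [hedef, hs'e i] at this
  rw [hpre]
  rw [hindep.meas_biInter (S := S) (s := fun j => X j ⁻¹' s' j)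
    (fun j _ => ⟨s' j, hs'meas j, rfl⟩)]
  rw [hSdef, Finset.prod_image (fun a _ b _ hab => he hab)]
  refine Finset.prod_congr rfl fun i _ => ?_
  rw [hedef, hs'e i, ← hlaw ((i:ℕ)+1), Measure.map_apply (hmeas _) (hs i)]

lemma integral_h (μ : Measure ℝ) [IsProbabilityMeasure μ] (c : ℂ) (a : ℝ) :
    ∫ y, (if a < y then c else 1) ∂μ
      = (1 - ((μ (Iic a)).toReal : ℂ)) * c + ((μ (Iic a)).toReal : ℂ) := by
  have hfun : (fun y => if a < y then c else 1)
      = fun y => (Ioi a).indicator (fun _ => c - 1) y + 1 := by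
    ext y
    by_cases hy : a < y
    · simp [Set.indicator_of_mem (Set.mem_Ioi.mpr hy), hy]
    · simp [Set.indicator_of_notMem (fun h => hy (Set.mem_Ioi.mp h)), hy]
  rw [hfun, integral_add ((integrable_const (c-1)).indicator measurableSet_Ioi)
    (integrable_const 1)]
  rw [integral_indicator_const _ measurableSet_Ioi, integral_const]
  have hIoi : μ (Ioi a) = 1 - μ (Iic a) := by
    rw [← Set.compl_Iic, measure_compl measurableSet_Iic (measure_ne_top μ _), measure_univ]
  have hle : μ (Iic a) ≤ 1 := prob_le_one
  rw [measureReal_def, measureReal_def, hIoi, ENNReal.toReal_sub_of_le hle ENNReal.one_ne_top, ENNReal.toReal_one]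
  simp only [measure_univ, ENNReal.toReal_one, one_smul, Complex.real_smul]
  push_cast
  ring

lemma count_eq (n : ℕ) (Q : ℕ → Prop) [DecidablePred Q] :
    ({j : ℕ | 2 ≤ j ∧ j ≤ n+1 ∧ Q j}).ncard
      = ((Finset.range n).filter (fun k => Q (k+2))).card := by
  have hset : {j : ℕ | 2 ≤ j ∧ j ≤ n+1 ∧ Q j}
      = ↑(((Finset.range n).filter (fun k => Q (k+2))).image (· + 2)) := by
    ext j
    simp only [Set.mem_setOf_eq, Finset.coe_image, Set.mem_image, Finset.mem_coe,
      Finset.mem_filter, Finset.mem_range]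
    constructor
    · rintro ⟨h2, hle, hq⟩
      exact ⟨j - 2, ⟨by omega, by rwa [show j - 2 + 2 = j by omega]⟩, by omega⟩
    · rintro ⟨k, ⟨hk, hq⟩, rfl⟩
      exact ⟨by omega, by omega, hq⟩
  rw [hset, Set.ncard_coe_finset, Finset.card_image_of_injective _ (fun a b h => by omega)]

lemma part1 {Ω : Type*} [MeasurableSpace Ω] (P : Measure Ω) [IsProbabilityMeasure P]
    (μ : Measure ℝ) [IsProbabilityMeasure μ]
    (X : ℕ → Ω → ℝ) (hmeas : ∀ i, Measurable (X i))
    (hlaw : ∀ i, Measure.map (X i) P = μ)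
    (hindep : iIndepFun X P)
    (θ : ℝ) (D : ℕ → Ω → ℕ)
    (hD : ∀ n ω, D n ω = ({j : ℕ | 2 ≤ j ∧ j ≤ n ∧ θ < X 1 ω + X j ω}).ncard)
    (t : ℝ) (n : ℕ) (hn : 1 ≤ n) :
    ∫ ω, Complex.exp (I * t * (D (n + 1) ω : ℂ) / n) ∂P
      = ∫ x, (((1 : ℂ) - ((μ (Iic (θ - x))).toReal : ℂ)) * Complex.exp (I * t / n)
          + ((μ (Iic (θ - x))).toReal : ℂ)) ^ n ∂μ := by
  classical
  set c : ℂ := Complex.exp (I * t / n) with hcdef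
  set h : ℝ → ℝ → ℂ := fun x y => if θ - x < y then c else 1 with hhdef
  -- Step 1: rewrite the integrand as a product
  have hprod : ∀ ω, Complex.exp (I * t * (D (n + 1) ω : ℂ) / n)
      = ∏ k ∈ Finset.range n, h (X 1 ω) (X (k+2) ω) := by
    intro ω
    have hDval : D (n+1) ω
        = ((Finset.range n).filter (fun k => θ < X 1 ω + X (k+2) ω)).card := by
      rw [hD]; exact count_eq n _
    rw [hDval, Finset.card_filter]
    push_cast
    rw [show (I * (t:ℂ) * (∑ k ∈ Finset.range n,
          if θ < X 1 ω + X (k+2) ω then (1:ℂ) else 0) / n)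
        = ∑ k ∈ Finset.range n,
          I * (t:ℂ) * (if θ < X 1 ω + X (k+2) ω then (1:ℂ) else 0) / n by
      rw [Finset.mul_sum, Finset.sum_div]]
    rw [Complex.exp_sum]
    refine Finset.prod_congr rfl fun k _ => ?_
    by_cases hq : θ < X 1 ω + X (k+2) ω
    · rw [if_pos hq, hhdef]
      simp only []
      rw [if_pos (by linarith : θ - X 1 ω < X (k+2) ω), mul_one, hcdef]
    · rw [if_neg hq, hhdef]
      simp only []
      rw [if_neg (by intro hcon; exact hq (by linarith)), mul_zero, zero_div,
        Complex.exp_zero]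
  -- measurability and bound for h
  have hmh : Measurable (fun p : ℝ × ℝ => h p.1 p.2) := by
    rw [hhdef]
    exact Measurable.ite (measurableSet_lt (measurable_const.sub measurable_fst)
      measurable_snd) measurable_const measurable_const
  have hcnorm : ‖c‖ = 1 := by
    rw [hcdef, show I * (t:ℂ) / n = ((t / n : ℝ) : ℂ) * I by push_cast; ring,
      Complex.norm_exp_ofReal_mul_I]
  have hb : ∀ x y, ‖h x y‖ ≤ 1 := by
    intro x y
    rw [hhdef]
    simp only []
    split_ifs
    · rw [hcnorm]
    · simp
  -- the vector map
  obtain ⟨m, rfl⟩ : ∃ m, n = m + 1 := ⟨n - 1, by omega⟩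
  set Y : Ω → (Fin (m+1+1) → ℝ) := fun ω i => X ((i:ℕ)+1) ω with hYdef
  have hY : Measurable Y := measurable_pi_lambda _ (fun i => hmeas _)
  set G : (Fin (m+1+1) → ℝ) → ℂ := fun v => ∏ k : Fin (m+1), h (v 0) (v k.succ) with hGdef
  have hGm : Measurable G := by
    apply Finset.measurable_prod
    intro k _
    exact Measurable.comp (g := fun p : ℝ × ℝ => h p.1 p.2)
      (f := fun v : Fin (m+1+1) → ℝ => (v 0, v k.succ)) hmh
      ((measurable_pi_apply 0).prodMk (measurable_pi_apply k.succ))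
  have hG_eq : ∀ ω, (∏ k ∈ Finset.range (m+1), h (X 1 ω) (X (k+2) ω)) = G (Y ω) := by
    intro ω
    rw [hGdef]
    simp only []
    rw [← Fin.prod_univ_eq_prod_range (fun k => h (X 1 ω) (X (k+2) ω)) (m+1)]
    refine Finset.prod_congr rfl fun k _ => ?_
    congr 1
  calc ∫ ω, Complex.exp (I * t * (D (m+1+1) ω : ℂ) / (m+1:ℕ)) ∂P
      = ∫ ω, G (Y ω) ∂P := by
        exact integral_congr_ae (Filter.Eventually.of_forall fun ω =>
          (hprod ω).trans (hG_eq ω))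
    _ = ∫ v, G v ∂(Measure.map Y P) :=
        (integral_map hY.aemeasurable hGm.aestronglyMeasurable).symm
    _ = ∫ v, G v ∂(Measure.pi fun _ : Fin (m+1+1) => μ) := by
        rw [hYdef, map_pi P μ X hmeas hlaw hindep (m+1+1)]
    _ = ∫ x, (∫ y, h x y ∂μ) ^ (m+1) ∂μ := step1 μ h hmh hb (m+1)
    _ = ∫ x, (((1 : ℂ) - ((μ (Iic (θ - x))).toReal : ℂ)) * c
          + ((μ (Iic (θ - x))).toReal : ℂ)) ^ (m+1) ∂μ := by
        exact integral_congr_ae (Filter.Eventually.of_forall fun x =>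
          congrArg (fun z : ℂ => z ^ (m+1)) (integral_h μ c (θ - x)))

/-- For any `t ∈ ℝ`, the characteristic function `E[exp(i t D_{n+1} / n)]`
equals `∫ ((1 - F(θ-x)) e^{it/n} + F(θ-x))^n μ(dx)`, and this converges, as `n → ∞`,
to `∫ exp(i t (1 - F(θ-x))) μ(dx)`.  Here `D_{n+1}` is the degree of vertex `1` in the
threshold graph on vertices `1, ..., n+1`. -/
theorem stmt_2 {Ω : Type*} [MeasurableSpace Ω] (P : Measure Ω) [IsProbabilityMeasure P]
    (μ : Measure ℝ) [IsProbabilityMeasure μ]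
    (X : ℕ → Ω → ℝ) (hmeas : ∀ i, Measurable (X i))
    (hlaw : ∀ i, Measure.map (X i) P = μ)
    (hindep : iIndepFun X P)
    (θ : ℝ) (hθ : 0 < θ)
    (F : ℝ → ℝ) (hF : F = fun x => (μ (Iic x)).toReal)
    (D : ℕ → Ω → ℕ)
    (hD : ∀ n ω, D n ω = ({j : ℕ | 2 ≤ j ∧ j ≤ n ∧ θ < X 1 ω + X j ω}).ncard)
    (t : ℝ) :
    (∀ n : ℕ, 1 ≤ n →
      ∫ ω, Complex.exp (I * t * (D (n + 1) ω : ℂ) / n) ∂P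
        = ∫ x, (((1 : ℂ) - (F (θ - x) : ℂ)) * Complex.exp (I * t / n)
            + (F (θ - x) : ℂ)) ^ n ∂μ) ∧
    Tendsto (fun n : ℕ => ∫ ω, Complex.exp (I * t * (D (n + 1) ω : ℂ) / n) ∂P) atTop
      (nhds (∫ x, Complex.exp (I * t * ((1 : ℂ) - (F (θ - x) : ℂ))) ∂μ)) := by
  subst hF
  have hpart1 : ∀ n : ℕ, 1 ≤ n →
      ∫ ω, Complex.exp (I * t * (D (n + 1) ω : ℂ) / n) ∂P
        = ∫ x, (((1 : ℂ) - ((μ (Iic (θ - x))).toReal : ℂ)) * Complex.exp (I * t / n)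
            + ((μ (Iic (θ - x))).toReal : ℂ)) ^ n ∂μ :=
    fun n hn => part1 P μ X hmeas hlaw hindep θ D hD t n hn
  refine ⟨hpart1, ?_⟩
  -- part 2
  set p : ℝ → ℝ := fun x => (μ (Iic (θ - x))).toReal with hpdef
  have hp0 : ∀ x, 0 ≤ p x := fun x => ENNReal.toReal_nonneg
  have hp1 : ∀ x, p x ≤ 1 := by
    intro x
    have h1 := ENNReal.toReal_mono ENNReal.one_ne_top (prob_le_one (μ := μ) (s := Iic (θ - x)))
    simpa using h1
  have hpm : Measurable p := by
    have hmono : Monotone (fun a : ℝ => (μ (Iic a)).toReal) := fun a b hab =>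
      ENNReal.toReal_mono (measure_ne_top _ _) (measure_mono (Iic_subset_Iic.2 hab))
    exact hmono.measurable.comp (measurable_const.sub measurable_id)
  set Fseq : ℕ → ℝ → ℂ := fun n x =>
    ((1 - (p x : ℂ)) * Complex.exp (I * t / n) + (p x : ℂ)) ^ n with hFseqdef
  have hcnorm : ∀ n : ℕ, ‖Complex.exp (I * t / (n:ℂ))‖ = 1 := by
    intro n
    rw [show I * (t:ℂ) / n = ((t / n : ℝ) : ℂ) * I by push_cast; ring,
      Complex.norm_exp_ofReal_mul_I]
  have hFmeas : ∀ n, AEStronglyMeasurable (Fseq n) μ := by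
    intro n
    refine Measurable.aestronglyMeasurable ?_
    exact (((measurable_const.sub (Complex.measurable_ofReal.comp hpm)).mul
      measurable_const).add (Complex.measurable_ofReal.comp hpm)).pow_const n
  have hbound : ∀ n, ∀ᵐ x ∂μ, ‖Fseq n x‖ ≤ (1:ℝ) := by
    intro n
    refine Filter.Eventually.of_forall fun x => ?_
    rw [hFseqdef]
    simp only []
    rw [norm_pow]
    have hbase : ‖(1 - (p x : ℂ)) * Complex.exp (I * t / n) + (p x : ℂ)‖ ≤ 1 := by
      calc ‖(1 - (p x : ℂ)) * Complex.exp (I * t / n) + (p x : ℂ)‖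
          ≤ ‖(1 - (p x : ℂ)) * Complex.exp (I * t / n)‖ + ‖((p x : ℝ) : ℂ)‖ :=
            norm_add_le _ _
        _ = ‖(1 - (p x : ℂ))‖ * 1 + p x := by
            rw [norm_mul, hcnorm n, Complex.norm_real, Real.norm_of_nonneg (hp0 x)]
        _ = (1 - p x) + p x := by
            rw [show (1 - (p x : ℂ)) = (((1 - p x : ℝ)) : ℂ) by push_cast; ring,
              Complex.norm_real, Real.norm_of_nonneg (by linarith [hp1 x]), mul_one]
        _ = 1 := by ring
    calc ‖(1 - (p x : ℂ)) * Complex.exp (I * t / n) + (p x : ℂ)‖ ^ n ≤ 1 ^ n :=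
          pow_le_pow_left₀ (norm_nonneg _) hbase n
      _ = 1 := one_pow n
  have hlim : ∀ᵐ x ∂μ, Tendsto (fun n => Fseq n x) atTop
      (nhds (Complex.exp (I * t * (1 - (p x : ℂ))))) :=
    Filter.Eventually.of_forall fun x => L1 t (p x) (hp0 x) (hp1 x)
  have hDCT := tendsto_integral_of_dominated_convergence (fun _ => (1:ℝ)) hFmeas
    (integrable_const 1) hbound hlim
  refine hDCT.congr' ?_
  filter_upwards [eventually_ge_atTop 1] with n hn
  exact (hpart1 n hn).symm
end

section
/- The pair (D_n(1)/n, D_n(2)/n) of normalized degrees of two fixed vertices is asymptotically independent: for all u, v ∈ ℝ, lim_{n→∞} E[exp(iu·d_n(1)/n + iv·d_n(2)/n)] = (∫ e^{iu(1-F(θ-a))} F(da)) · (∫ e^{iv(1-F(θ-b))} F(db)). -/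
open MeasureTheory ProbabilityTheory Set Filter Complex

/-! ### Auxiliary analytic lemmas -/

/-- `n (exp(c/n) - 1) → c`. -/
lemma aux_K1 (c : ℂ) :
    Tendsto (fun n : ℕ => (n : ℂ) * (Complex.exp (c / n) - 1)) atTop (nhds c) := by
  have h1 : HasDerivAt (fun t : ℂ => Complex.exp (c * t)) c 0 := by
    simpa using ((hasDerivAt_id (0 : ℂ)).const_mul c).cexp
  have h2 := hasDerivAt_iff_tendsto_slope.mp h1
  have h3 : Tendsto (fun n : ℕ => ((n : ℂ))⁻¹) atTop (nhdsWithin 0 {(0:ℂ)}ᶜ) := by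
    rw [tendsto_nhdsWithin_iff]
    constructor
    · have h : Tendsto (fun n : ℕ => ((n : ℝ))⁻¹) atTop (nhds 0) :=
        tendsto_inv_atTop_zero.comp tendsto_natCast_atTop_atTop
      have h' := (Complex.continuous_ofReal.tendsto 0).comp h
      refine h'.congr fun n => ?_
      simp
    · filter_upwards [eventually_ge_atTop 1] with n hn
      simp only [Set.mem_compl_iff, Set.mem_singleton_iff, inv_eq_zero]
      exact Nat.cast_ne_zero.mpr (by omega)
  have h4 := h2.comp h3
  apply h4.congr'
  filter_upwards [eventually_ge_atTop 1] with n hn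
  have hn' : (n : ℂ) ≠ 0 := Nat.cast_ne_zero.mpr (by omega)
  simp only [Function.comp_apply, slope_def_field]
  field_simp
  simp only [mul_zero, Complex.exp_zero]
  ring

lemma aux_pow_sub_pow {x y : ℂ} (hx : ‖x‖ ≤ 1) (hy : ‖y‖ ≤ 1) (n : ℕ) :
    ‖x ^ n - y ^ n‖ ≤ n * ‖x - y‖ := by
  induction n with
  | zero => simp
  | succ k ih =>
    have hxy : x ^ (k+1) - y ^ (k+1) = x * (x ^ k - y ^ k) + (x - y) * y ^ k := by ring
    rw [hxy]
    have h1 : ‖x * (x ^ k - y ^ k)‖ ≤ k * ‖x - y‖ := by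
      rw [norm_mul]
      calc ‖x‖ * ‖x ^ k - y ^ k‖ ≤ 1 * (k * ‖x - y‖) :=
        mul_le_mul hx ih (norm_nonneg _) zero_le_one
      _ = k * ‖x - y‖ := one_mul _
    have h2 : ‖(x - y) * y ^ k‖ ≤ ‖x - y‖ := by
      rw [norm_mul]
      calc ‖x - y‖ * ‖y ^ k‖ ≤ ‖x - y‖ * 1 := by
            refine mul_le_mul_of_nonneg_left ?_ (norm_nonneg _)
            rw [norm_pow]; exact pow_le_one₀ (norm_nonneg _) hy
      _ = ‖x - y‖ := mul_one _
    calc ‖x * (x ^ k - y ^ k) + (x - y) * y ^ k‖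
        ≤ ‖x * (x ^ k - y ^ k)‖ + ‖(x - y) * y ^ k‖ := norm_add_le _ _
      _ ≤ k * ‖x - y‖ + ‖x - y‖ := add_le_add h1 h2
      _ = (k + 1 : ℕ) * ‖x - y‖ := by push_cast; ring

/-- If `‖a n‖ ≤ 1` and `n (a n - 1) → i s`, then `a n ^ n → exp (i s)`. -/
lemma aux_K2 (a : ℕ → ℂ) (s : ℝ) (ha : ∀ n, ‖a n‖ ≤ 1)
    (h : Tendsto (fun n : ℕ => (n : ℂ) * (a n - 1)) atTop (nhds (I * s))) :
    Tendsto (fun n : ℕ => a n ^ n) atTop (nhds (Complex.exp (I * s))) := by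
  set z : ℂ := I * s with hz
  have hzre : ∀ n : ℕ, ‖Complex.exp (z / n)‖ ≤ 1 := by
    intro n
    rw [Complex.norm_exp]
    have : (z / n).re = 0 := by
      simp [hz, Complex.div_re]
    rw [this, Real.exp_zero]
  have hK1 := aux_K1 z
  have hdiff : Tendsto (fun n : ℕ => (n : ℂ) * (a n - Complex.exp (z / n))) atTop (nhds 0) := by
    have h' := h.sub hK1
    rw [sub_self] at h'
    refine h'.congr fun n => ?_
    ring
  rw [tendsto_iff_norm_sub_tendsto_zero]
  have hb : Tendsto (fun n : ℕ => ‖(n : ℂ) * (a n - Complex.exp (z / n))‖) atTop (nhds 0) := by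
    simpa using hdiff.norm
  apply squeeze_zero' (g := fun n : ℕ => ‖(n : ℂ) * (a n - Complex.exp (z / n))‖) ?_ ?_ hb
  · filter_upwards with n; exact norm_nonneg _
  · filter_upwards [eventually_ge_atTop 1] with n hn
    have hn' : (n : ℂ) ≠ 0 := Nat.cast_ne_zero.mpr (by omega)
    have hexp : Complex.exp z = Complex.exp (z / n) ^ n := by
      rw [← Complex.exp_nat_mul]
      congr 1
      field_simp
    rw [hexp, norm_mul, Complex.norm_natCast]
    exact aux_pow_sub_pow (ha n) (hzre n) n

lemma aux_norm_exp_I_mul (r : ℝ) : ‖Complex.exp (I * (r : ℂ))‖ = 1 := by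
  rw [Complex.norm_exp]
  simp [Complex.mul_re]

/-! ### Integral of a product over a pi measure -/

lemma aux_integral_pi_pow (μ : Measure ℝ) [IsProbabilityMeasure μ] (f : ℝ → ℂ) :
    ∀ n : ℕ, ∫ x : Fin n → ℝ, ∏ i, f (x i) ∂(Measure.pi fun _ => μ) = (∫ x, f x ∂μ) ^ n := by
  intro n
  induction n with
  | zero => simp
  | succ k ih =>
    have mp := (measurePreserving_piFinSuccAbove (fun _ : Fin (k+1) => μ) 0).symm
    have hpm : ∫ p : ℝ × (Fin k → ℝ), f p.1 * (fun y : Fin k → ℝ => ∏ i, f (y i)) p.2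
          ∂(μ.prod (Measure.pi fun _ => μ)) =
        (∫ x, f x ∂μ) * ∫ y : Fin k → ℝ, ∏ i, f (y i) ∂(Measure.pi fun _ => μ) :=
      integral_prod_mul f (fun y : Fin k → ℝ => ∏ i, f (y i))
    calc ∫ x : Fin (k+1) → ℝ, ∏ i, f (x i) ∂(Measure.pi fun _ => μ)
        = ∫ p : ℝ × (Fin k → ℝ), f p.1 * ∏ i, f (p.2 i) ∂(μ.prod (Measure.pi fun _ => μ)) := by
          rw [← mp.integral_comp']
          refine integral_congr_ae (Filter.Eventually.of_forall fun p => ?_)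
          simp [MeasurableEquiv.piFinSuccAbove_symm_apply, Fin.prod_univ_succ,
            Fin.insertNth_zero, Fin.zero_succAbove]
      _ = (∫ x, f x ∂μ) * ((∫ x, f x ∂μ) ^ k) := by rw [hpm, ih]
      _ = (∫ x, f x ∂μ) ^ (k+1) := by ring

/-! ### The joint law of finitely many of the `X i` is the product measure -/

lemma aux_map_pi {Ω : Type*} [MeasurableSpace Ω] (P : Measure Ω) [IsProbabilityMeasure P]
    (μ : Measure ℝ) [IsProbabilityMeasure μ] (X : ℕ → Ω → ℝ) (hmeas : ∀ i, Measurable (X i))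
    (hlaw : ∀ i, Measure.map (X i) P = μ)
    (hindep : iIndepFun X P) (m : ℕ) :
    Measure.map (fun ω (i : Fin m) => X (i.val + 1) ω) P = Measure.pi (fun _ => μ) := by
  have hT : Measurable (fun ω (i : Fin m) => X (i.val + 1) ω) :=
    measurable_pi_lambda _ fun i => hmeas _
  refine (Measure.pi_eq (μ := fun _ : Fin m => μ) fun s hs => ?_).symm
  rw [Measure.map_apply hT (MeasurableSet.univ_pi hs)]
  classical
  set sets : ℕ → Set ℝ := fun j =>
    if h : j - 1 < m ∧ 1 ≤ j then s ⟨j - 1, h.1⟩ else Set.univ with hsets_def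
  have hsets : ∀ i : Fin m, sets (i.val + 1) = s i := by
    intro i
    have h : i.val + 1 - 1 < m ∧ 1 ≤ i.val + 1 := ⟨by simpa using i.isLt, by omega⟩
    simp only [hsets_def, dif_pos h]
    congr
  have hsetsm : ∀ j, MeasurableSet (sets j) := by
    intro j
    simp only [hsets_def]
    split_ifs with h
    · exact hs _
    · exact MeasurableSet.univ
  set e : Fin m ↪ ℕ := ⟨fun i => i.val + 1, show Function.Injective (fun i : Fin m => i.val + 1) from fun a b hab => by
    simpa [Fin.ext_iff] using hab⟩ with he
  set S : Finset ℕ := Finset.univ.map e with hS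
  have hpre : (fun ω (i : Fin m) => X (i.val + 1) ω) ⁻¹' (Set.pi Set.univ s)
      = ⋂ j ∈ S, X j ⁻¹' sets j := by
    ext ω
    simp only [Set.mem_preimage, Set.mem_pi, Set.mem_univ, forall_true_left, Set.mem_iInter,
      hS, Finset.mem_map, Finset.mem_univ, true_and, he, Function.Embedding.coeFn_mk]
    constructor
    · rintro h j ⟨i, rfl⟩
      rw [hsets i]; exact h i
    · intro h i
      have := h (i.val + 1) ⟨i, rfl⟩
      rwa [hsets i] at this
  rw [hpre, hindep.measure_inter_preimage_eq_mul S (fun j _ => hsetsm j)]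
  rw [hS, Finset.prod_map]
  refine Finset.prod_congr rfl fun i _ => ?_
  have : P (X (e i) ⁻¹' sets (e i)) = μ (sets (e i)) := by
    rw [← hlaw (e i), Measure.map_apply (hmeas _) (hsetsm _)]
  rw [this]
  simp only [he, Function.Embedding.coeFn_mk, hsets i]

/-! ### The elementary integrand and its integral -/

/-- The random exponent appearing in one factor. -/
noncomputable def auxW (θ u v a b x : ℝ) : ℝ :=
  u * (if θ < x + a then 1 else 0) + v * (if θ < x + b then 1 else 0)

/-- One factor of the product. -/
noncomputable def auxH (θ u v : ℝ) (n : ℕ) (a b x : ℝ) : ℂ :=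
  Complex.exp (I * ((auxW θ u v a b x / n : ℝ) : ℂ))

/-- The conditional characteristic-function factor. -/
noncomputable def auxPhi (μ : Measure ℝ) (θ u v : ℝ) (n : ℕ) (a b : ℝ) : ℂ :=
  ∫ x, auxH θ u v n a b x ∂μ

lemma aux_norm_H (θ u v : ℝ) (n : ℕ) (a b x : ℝ) : ‖auxH θ u v n a b x‖ = 1 :=
  aux_norm_exp_I_mul _

lemma aux_H_meas {δ : Type*} [MeasurableSpace δ] (θ u v : ℝ) (n : ℕ)
    {f g h : δ → ℝ} (hf : Measurable f) (hg : Measurable g) (hh : Measurable h) :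
    Measurable (fun d => auxH θ u v n (f d) (g d) (h d)) := by
  unfold auxH auxW
  refine Complex.measurable_exp.comp (Measurable.const_mul ?_ I)
  refine Complex.measurable_ofReal.comp (Measurable.div_const ?_ _)
  have h1 : Measurable fun d => (if θ < h d + f d then (1:ℝ) else 0) :=
    Measurable.ite (measurableSet_lt measurable_const (hh.add hf))
      measurable_const measurable_const
  have h2 : Measurable fun d => (if θ < h d + g d then (1:ℝ) else 0) :=
    Measurable.ite (measurableSet_lt measurable_const (hh.add hg))
      measurable_const measurable_const
  exact (h1.const_mul u).add (h2.const_mul v)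

lemma aux_phi_norm (μ : Measure ℝ) [IsProbabilityMeasure μ] (θ u v : ℝ) (n : ℕ) (a b : ℝ) :
    ‖auxPhi μ θ u v n a b‖ ≤ 1 := by
  have h := norm_integral_le_of_norm_le_const (μ := μ) (C := 1)
    (f := fun x => auxH θ u v n a b x) (Filter.Eventually.of_forall fun x => by
      rw [aux_norm_H])
  simpa [auxPhi] using h

/-- Explicit formula for `auxPhi`. -/
lemma aux_phi_eq (μ : Measure ℝ) [IsProbabilityMeasure μ] (θ u v : ℝ) (n : ℕ) (a b : ℝ) :
    auxPhi μ θ u v n a b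
      = 1 + (Complex.exp (I * ((u / n : ℝ) : ℂ)) - 1) * ((μ (Ioi (θ - a))).toReal : ℂ)
          + (Complex.exp (I * ((v / n : ℝ) : ℂ)) - 1) * ((μ (Ioi (θ - b))).toReal : ℂ)
          + (Complex.exp (I * ((u / n : ℝ) : ℂ)) - 1) * (Complex.exp (I * ((v / n : ℝ) : ℂ)) - 1)
              * ((μ (Ioi (θ - a) ∩ Ioi (θ - b))).toReal : ℂ) := by
  classical
  set A : ℂ := Complex.exp (I * ((u / n : ℝ) : ℂ)) with hA
  set B : ℂ := Complex.exp (I * ((v / n : ℝ) : ℂ)) with hB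
  have hpt : ∀ x : ℝ, auxH θ u v n a b x
      = 1 + (Ioi (θ - a)).indicator (fun _ => A - 1) x
          + (Ioi (θ - b)).indicator (fun _ => B - 1) x
          + (Ioi (θ - a) ∩ Ioi (θ - b)).indicator (fun _ => (A - 1) * (B - 1)) x := by
    intro x
    have hma : x ∈ Ioi (θ - a) ↔ θ < x + a := by simp [Set.mem_Ioi, sub_lt_iff_lt_add]
    have hmb : x ∈ Ioi (θ - b) ↔ θ < x + b := by simp [Set.mem_Ioi, sub_lt_iff_lt_add]
    by_cases h1 : θ < x + a <;> by_cases h2 : θ < x + b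
    · have e1 : x ∈ Ioi (θ - a) := hma.mpr h1
      have e2 : x ∈ Ioi (θ - b) := hmb.mpr h2
      rw [Set.indicator_of_mem e1, Set.indicator_of_mem e2,
        Set.indicator_of_mem (Set.mem_inter e1 e2)]
      have : auxW θ u v a b x / n = u / n + v / n := by
        unfold auxW; rw [if_pos h1, if_pos h2]; ring
      unfold auxH
      rw [this, Complex.ofReal_add, mul_add, Complex.exp_add, ← hA, ← hB]
      ring
    · have e1 : x ∈ Ioi (θ - a) := hma.mpr h1
      have e2 : x ∉ Ioi (θ - b) := fun h => h2 (hmb.mp h)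
      rw [Set.indicator_of_mem e1, Set.indicator_of_notMem e2,
        Set.indicator_of_notMem (fun h => e2 h.2)]
      have : auxW θ u v a b x / n = u / n := by
        unfold auxW; rw [if_pos h1, if_neg h2]; ring
      unfold auxH
      rw [this, ← hA]
      ring
    · have e1 : x ∉ Ioi (θ - a) := fun h => h1 (hma.mp h)
      have e2 : x ∈ Ioi (θ - b) := hmb.mpr h2
      rw [Set.indicator_of_notMem e1, Set.indicator_of_mem e2,
        Set.indicator_of_notMem (fun h => e1 h.1)]
      have : auxW θ u v a b x / n = v / n := by
        unfold auxW; rw [if_neg h1, if_pos h2]; ring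
      unfold auxH
      rw [this, ← hB]
      ring
    · have e1 : x ∉ Ioi (θ - a) := fun h => h1 (hma.mp h)
      have e2 : x ∉ Ioi (θ - b) := fun h => h2 (hmb.mp h)
      rw [Set.indicator_of_notMem e1, Set.indicator_of_notMem e2,
        Set.indicator_of_notMem (fun h => e1 h.1)]
      have : auxW θ u v a b x / n = 0 := by
        unfold auxW; rw [if_neg h1, if_neg h2]; ring
      unfold auxH
      rw [this]
      simp
  have i1 : Integrable (fun _ : ℝ => (1 : ℂ)) μ := integrable_const _
  have i2 : Integrable ((Ioi (θ - a)).indicator (fun _ => A - 1)) μ :=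
    (integrable_const _).indicator measurableSet_Ioi
  have i3 : Integrable ((Ioi (θ - b)).indicator (fun _ => B - 1)) μ :=
    (integrable_const _).indicator measurableSet_Ioi
  have i4 : Integrable ((Ioi (θ - a) ∩ Ioi (θ - b)).indicator (fun _ => (A - 1) * (B - 1))) μ :=
    (integrable_const _).indicator (measurableSet_Ioi.inter measurableSet_Ioi)
  have i12 : Integrable (fun x : ℝ => (1:ℂ) + (Ioi (θ - a)).indicator (fun _ => A - 1) x) μ := by
    exact i1.add i2
  have i123 : Integrable (fun x : ℝ => (1:ℂ) + (Ioi (θ - a)).indicator (fun _ => A - 1) x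
      + (Ioi (θ - b)).indicator (fun _ => B - 1) x) μ := by
    exact i12.add i3
  have : auxPhi μ θ u v n a b
      = ∫ x, ((1:ℂ) + (Ioi (θ - a)).indicator (fun _ => A - 1) x
          + (Ioi (θ - b)).indicator (fun _ => B - 1) x
          + (Ioi (θ - a) ∩ Ioi (θ - b)).indicator (fun _ => (A - 1) * (B - 1)) x) ∂μ :=
    integral_congr_ae (Filter.Eventually.of_forall hpt)
  rw [this, integral_add i123 i4, integral_add i12 i3,
    integral_add i1 i2, integral_indicator_const _ measurableSet_Ioi,
    integral_indicator_const _ measurableSet_Ioi,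
    integral_indicator_const _ (measurableSet_Ioi.inter measurableSet_Ioi),
    integral_const]
  simp only [measureReal_def, measure_univ, ENNReal.toReal_one, one_smul, smul_eq_mul, Complex.real_smul]
  push_cast
  ring

/-! ### Pointwise convergence of `auxPhi ^ n` -/

lemma aux_phi_tendsto (μ : Measure ℝ) [IsProbabilityMeasure μ] (θ u v : ℝ) (a b : ℝ) :
    Tendsto (fun n : ℕ => auxPhi μ θ u v n a b ^ n) atTop
      (nhds (Complex.exp (I * ((μ (Ioi (θ - a))).toReal : ℂ) * u)
        * Complex.exp (I * ((μ (Ioi (θ - b))).toReal : ℂ) * v))) := by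
  set pa : ℝ := (μ (Ioi (θ - a))).toReal with hpa
  set pb : ℝ := (μ (Ioi (θ - b))).toReal with hpb
  set pab : ℝ := (μ (Ioi (θ - a) ∩ Ioi (θ - b))).toReal with hpab
  have castu : ∀ n : ℕ, Complex.exp (I * ((u / n : ℝ) : ℂ)) = Complex.exp ((I * u) / n) := by
    intro n; congr 1; push_cast; ring
  have castv : ∀ n : ℕ, Complex.exp (I * ((v / n : ℝ) : ℂ)) = Complex.exp ((I * v) / n) := by
    intro n; congr 1; push_cast; ring
  have tA : Tendsto (fun n : ℕ => (n : ℂ) * (Complex.exp (I * ((u / n : ℝ) : ℂ)) - 1)) atTop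
      (nhds (I * u)) := by
    refine (aux_K1 (I * u)).congr fun n => ?_
    rw [castu]
  have tB : Tendsto (fun n : ℕ => (n : ℂ) * (Complex.exp (I * ((v / n : ℝ) : ℂ)) - 1)) atTop
      (nhds (I * v)) := by
    refine (aux_K1 (I * v)).congr fun n => ?_
    rw [castv]
  have hinv : Tendsto (fun n : ℕ => ((n : ℂ))⁻¹) atTop (nhds 0) := by
    have h : Tendsto (fun n : ℕ => ((n : ℝ))⁻¹) atTop (nhds 0) :=
      tendsto_inv_atTop_zero.comp tendsto_natCast_atTop_atTop
    have h' := (Complex.continuous_ofReal.tendsto 0).comp h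
    refine (h'.congr fun n => ?_).mono_right (by simp)
    simp
  have tB0 : Tendsto (fun n : ℕ => Complex.exp (I * ((v / n : ℝ) : ℂ)) - 1) atTop (nhds 0) := by
    have := hinv.mul tB
    rw [zero_mul] at this
    refine this.congr' ?_
    filter_upwards [eventually_ge_atTop 1] with n hn
    have hn' : (n : ℂ) ≠ 0 := Nat.cast_ne_zero.mpr (by omega)
    field_simp
  have hmain : Tendsto (fun n : ℕ => (n : ℂ) * (auxPhi μ θ u v n a b - 1)) atTop
      (nhds (I * ((u * pa + v * pb : ℝ) : ℂ))) := by
    have hcomb := ((tA.mul_const (pa : ℂ)).add (tB.mul_const (pb : ℂ))).add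
      ((tA.mul tB0).mul_const (pab : ℂ))
    have hval : (I * u) * pa + (I * v) * pb + ((I * u) * 0) * pab
        = I * ((u * pa + v * pb : ℝ) : ℂ) := by push_cast; ring
    rw [hval] at hcomb
    refine hcomb.congr fun n => ?_
    rw [aux_phi_eq]
    ring
  have hnorm : ∀ n : ℕ, ‖auxPhi μ θ u v n a b‖ ≤ 1 := fun n => aux_phi_norm μ θ u v n a b
  have := aux_K2 (fun n => auxPhi μ θ u v n a b) (u * pa + v * pb) hnorm hmain
  have hexp : Complex.exp (I * ((u * pa + v * pb : ℝ) : ℂ))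
      = Complex.exp (I * (pa : ℂ) * u) * Complex.exp (I * (pb : ℂ) * v) := by
    rw [← Complex.exp_add]
    congr 1
    push_cast
    ring
  rwa [hexp] at this

/-! ### The key identity -/

lemma aux_key {Ω : Type*} [MeasurableSpace Ω] (P : Measure Ω) [IsProbabilityMeasure P]
    (μ : Measure ℝ) [IsProbabilityMeasure μ] (X : ℕ → Ω → ℝ) (hmeas : ∀ i, Measurable (X i))
    (hlaw : ∀ i, Measure.map (X i) P = μ)
    (hindep : iIndepFun X P) (θ u v : ℝ) (n : ℕ) :
    ∫ ω, ∏ i : Fin n, auxH θ u v n (X (n+1) ω) (X (n+2) ω) (X (i.val+1) ω) ∂P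
      = ∫ b, ∫ a, (auxPhi μ θ u v n a b) ^ n ∂μ ∂μ := by
  set g : (Fin (n+2) → ℝ) → ℂ := fun x =>
    ∏ i : Fin n, auxH θ u v n (x (Fin.castSucc (Fin.last n))) (x (Fin.last (n+1)))
      (x (Fin.castSucc (Fin.castSucc i))) with hg_def
  have hg : Measurable g := by
    refine Finset.measurable_prod _ fun i _ => ?_
    exact aux_H_meas θ u v n (measurable_pi_apply _) (measurable_pi_apply _)
      (measurable_pi_apply _)
  have hgnorm : ∀ x, ‖g x‖ = 1 := by
    intro x
    rw [hg_def, norm_prod]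
    exact Finset.prod_eq_one fun i _ => aux_norm_H θ u v n _ _ _
  have hT : Measurable (fun ω (i : Fin (n+2)) => X (i.val + 1) ω) :=
    measurable_pi_lambda _ fun i => hmeas _
  -- Step 1 : to the product measure
  have step1 : ∫ ω, ∏ i : Fin n, auxH θ u v n (X (n+1) ω) (X (n+2) ω) (X (i.val+1) ω) ∂P
      = ∫ x, g x ∂(Measure.pi fun _ : Fin (n+2) => μ) := by
    rw [← aux_map_pi P μ X hmeas hlaw hindep (n+2),
      integral_map hT.aemeasurable hg.aestronglyMeasurable]
    refine integral_congr_ae (Filter.Eventually.of_forall fun ω => ?_)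
    simp [hg_def]
  -- Step 2 : peel the last coordinate
  have mp1 := (measurePreserving_piFinSuccAbove (fun _ : Fin (n+2) => μ) (Fin.last (n+1))).symm
  have step2 : ∫ x, g x ∂(Measure.pi fun _ : Fin (n+2) => μ)
      = ∫ p : ℝ × (Fin (n+1) → ℝ),
          (∏ i : Fin n, auxH θ u v n (p.2 (Fin.last n)) p.1 (p.2 (Fin.castSucc i)))
          ∂(μ.prod (Measure.pi fun _ : Fin (n+1) => μ)) := by
    rw [← mp1.integral_comp' g]
    refine integral_congr_ae (Filter.Eventually.of_forall fun p => ?_)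
    have : (MeasurableEquiv.piFinSuccAbove (fun _ : Fin (n+2) => ℝ) (Fin.last (n+1))).symm p
        = Fin.snoc p.2 p.1 := by
      simp [MeasurableEquiv.piFinSuccAbove_symm_apply, Fin.insertNth_last']
      rfl
    show g ((MeasurableEquiv.piFinSuccAbove (fun _ : Fin (n+2) => ℝ) (Fin.last (n+1))).symm p)
      = ∏ i : Fin n, auxH θ u v n (p.2 (Fin.last n)) p.1 (p.2 (Fin.castSucc i))
    rw [this, hg_def]
    simp only [Fin.snoc_castSucc, Fin.snoc_last]
  -- Step 3 : Fubini on the outer product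
  set G : ℝ × (Fin (n+1) → ℝ) → ℂ := fun p =>
    ∏ i : Fin n, auxH θ u v n (p.2 (Fin.last n)) p.1 (p.2 (Fin.castSucc i)) with hG_def
  have hGmeas : Measurable G := by
    refine Finset.measurable_prod _ fun i _ => ?_
    exact aux_H_meas θ u v n ((measurable_pi_apply _).comp measurable_snd) measurable_fst
      ((measurable_pi_apply _).comp measurable_snd)
  have hGnorm : ∀ p, ‖G p‖ = 1 := by
    intro p
    rw [hG_def, norm_prod]
    exact Finset.prod_eq_one fun i _ => aux_norm_H θ u v n _ _ _
  have hGint : Integrable G (μ.prod (Measure.pi fun _ : Fin (n+1) => μ)) := by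
    refine Integrable.mono' (integrable_const 1) hGmeas.aestronglyMeasurable ?_
    exact Filter.Eventually.of_forall fun p => le_of_eq (hGnorm p)
  have step3 := integral_prod G hGint
  -- Step 4 : inner integral
  have step4 : ∀ b : ℝ,
      ∫ y : Fin (n+1) → ℝ, ∏ i : Fin n, auxH θ u v n (y (Fin.last n)) b (y (Fin.castSucc i))
        ∂(Measure.pi fun _ : Fin (n+1) => μ)
      = ∫ a, auxPhi μ θ u v n a b ^ n ∂μ := by
    intro b
    have mp2 := (measurePreserving_piFinSuccAbove (fun _ : Fin (n+1) => μ) (Fin.last n)).symm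
    rw [← mp2.integral_comp'
      (fun y => ∏ i : Fin n, auxH θ u v n (y (Fin.last n)) b (y (Fin.castSucc i)))]
    have hpt : ∀ q : ℝ × (Fin n → ℝ),
        (∏ i : Fin n, auxH θ u v n
          (((MeasurableEquiv.piFinSuccAbove (fun _ : Fin (n+1) => ℝ) (Fin.last n)).symm q)
            (Fin.last n)) b
          (((MeasurableEquiv.piFinSuccAbove (fun _ : Fin (n+1) => ℝ) (Fin.last n)).symm q)
            (Fin.castSucc i)))
        = ∏ i : Fin n, auxH θ u v n q.1 b (q.2 i) := by
      intro q
      have : (MeasurableEquiv.piFinSuccAbove (fun _ : Fin (n+1) => ℝ) (Fin.last n)).symm q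
          = Fin.snoc q.2 q.1 := by
        simp [MeasurableEquiv.piFinSuccAbove_symm_apply, Fin.insertNth_last']
        rfl
      rw [this]
      simp only [Fin.snoc_castSucc, Fin.snoc_last]
    rw [integral_congr_ae (Filter.Eventually.of_forall hpt)]
    set K : ℝ × (Fin n → ℝ) → ℂ := fun q => ∏ i : Fin n, auxH θ u v n q.1 b (q.2 i) with hK_def
    have hKmeas : Measurable K := by
      refine Finset.measurable_prod _ fun i _ => ?_
      exact aux_H_meas θ u v n measurable_fst measurable_const
        ((measurable_pi_apply _).comp measurable_snd)
    have hKint : Integrable K (μ.prod (Measure.pi fun _ : Fin n => μ)) := by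
      refine Integrable.mono' (integrable_const 1) hKmeas.aestronglyMeasurable ?_
      refine Filter.Eventually.of_forall fun q => le_of_eq ?_
      rw [hK_def, norm_prod]
      exact Finset.prod_eq_one fun i _ => aux_norm_H θ u v n _ _ _
    rw [integral_prod K hKint]
    refine integral_congr_ae (Filter.Eventually.of_forall fun a => ?_)
    exact aux_integral_pi_pow μ (auxH θ u v n a b) n
  rw [step1, step2, step3]
  exact integral_congr_ae (Filter.Eventually.of_forall fun b => step4 b)

lemma aux_ncard (n : ℕ) (p : ℕ → Prop) [DecidablePred p] :
    ({j : ℕ | 1 ≤ j ∧ j ≤ n ∧ p j}).ncard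
      = ∑ i : Fin n, if p (i.val + 1) then 1 else 0 := by
  have hset : {j : ℕ | 1 ≤ j ∧ j ≤ n ∧ p j} = ↑((Finset.Icc 1 n).filter p) := by
    ext j; simp [Finset.mem_filter, Finset.mem_Icc, and_assoc]
  rw [hset, Set.ncard_coe_finset, Finset.card_filter]
  have hicc : Finset.Icc 1 n
      = (Finset.range n).map ⟨fun i => i + 1, show Function.Injective (fun i : ℕ => i + 1) from fun a b h => by simpa using h⟩ := by
    ext j
    simp only [Finset.mem_map, Finset.mem_range, Finset.mem_Icc, Function.Embedding.coeFn_mk]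
    constructor
    · rintro ⟨h1, h2⟩; exact ⟨j - 1, by omega, by omega⟩
    · rintro ⟨i, hi, rfl⟩; omega
  rw [hicc, Finset.sum_map]
  simp only [Function.Embedding.coeFn_mk]
  rw [← Fin.sum_univ_eq_sum_range (fun i => if p (i + 1) then 1 else 0) n]

/-! ### Main theorem -/

set_option maxHeartbeats 1000000 in
/-- Asymptotic independence of the normalized degrees: with
`d_n(1) = #{j ≤ n : X j + X (n+1) > θ}` and `d_n(2) = #{j ≤ n : X j + X (n+2) > θ}`,
for all `u, v ∈ ℝ`,
`lim_n E[exp(iu d_n(1)/n + iv d_n(2)/n)]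
  = (∫ e^{iu(1-F(θ-a))} μ(da)) (∫ e^{iv(1-F(θ-b))} μ(db))`. -/
theorem stmt_6 {Ω : Type*} [MeasurableSpace Ω] (P : Measure Ω) [IsProbabilityMeasure P]
    (μ : Measure ℝ) [IsProbabilityMeasure μ]
    (X : ℕ → Ω → ℝ) (hmeas : ∀ i, Measurable (X i))
    (hlaw : ∀ i, Measure.map (X i) P = μ)
    (hindep : iIndepFun X P)
    (θ : ℝ) (hθ : 0 < θ)
    (F : ℝ → ℝ) (hF : F = fun x => (μ (Iic x)).toReal)
    (d1 d2 : ℕ → Ω → ℕ)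
    (hd1 : ∀ n ω, d1 n ω = ({j : ℕ | 1 ≤ j ∧ j ≤ n ∧ θ < X j ω + X (n + 1) ω}).ncard)
    (hd2 : ∀ n ω, d2 n ω = ({j : ℕ | 1 ≤ j ∧ j ≤ n ∧ θ < X j ω + X (n + 2) ω}).ncard)
    (u v : ℝ) :
    Tendsto (fun n : ℕ =>
        ∫ ω, Complex.exp (I * u * (d1 n ω : ℂ) / n + I * v * (d2 n ω : ℂ) / n) ∂P)
      atTop
      (nhds ((∫ a, Complex.exp (I * u * ((1 : ℂ) - (F (θ - a) : ℂ))) ∂μ)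
        * (∫ b, Complex.exp (I * v * ((1 : ℂ) - (F (θ - b) : ℂ))) ∂μ))) := by
  classical
  -- basic facts about `F` and tail probabilities
  have hIoi : ∀ t : ℝ, (μ (Ioi t)).toReal = 1 - F t := by
    intro t
    rw [hF]
    have hc : Ioi t = (Iic t)ᶜ := (compl_Iic (a := t)).symm
    rw [hc, measure_compl measurableSet_Iic (measure_ne_top μ _), measure_univ,
      ENNReal.toReal_sub_of_le prob_le_one ENNReal.one_ne_top, ENNReal.toReal_one]
  have hFmono : Monotone F := by
    rw [hF]
    intro x y hxy
    exact ENNReal.toReal_mono (measure_ne_top μ _) (measure_mono (Iic_subset_Iic.mpr hxy))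
  have hFmeas : Measurable F := hFmono.measurable
  have hGm : Measurable (fun t : ℝ => (μ (Ioi t)).toReal) := by
    have h : (fun t : ℝ => (μ (Ioi t)).toReal) = fun t => 1 - F t := funext hIoi
    rw [h]
    exact measurable_const.sub hFmeas
  -- Step A : identity for each n
  have hEn : ∀ n : ℕ,
      ∫ ω, Complex.exp (I * u * (d1 n ω : ℂ) / n + I * v * (d2 n ω : ℂ) / n) ∂P
        = ∫ b, ∫ a, auxPhi μ θ u v n a b ^ n ∂μ ∂μ := by
    intro n
    rw [← aux_key P μ X hmeas hlaw hindep θ u v n]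
    refine integral_congr_ae (Filter.Eventually.of_forall fun ω => ?_)
    have h1 : (d1 n ω : ℝ)
        = ∑ i : Fin n, (if θ < X (i.val + 1) ω + X (n + 1) ω then (1:ℝ) else 0) := by
      rw [hd1 n ω, aux_ncard n (fun j => θ < X j ω + X (n + 1) ω)]
      push_cast
      rfl
    have h2 : (d2 n ω : ℝ)
        = ∑ i : Fin n, (if θ < X (i.val + 1) ω + X (n + 2) ω then (1:ℝ) else 0) := by
      rw [hd2 n ω, aux_ncard n (fun j => θ < X j ω + X (n + 2) ω)]
      push_cast
      rfl
    have hsum : ∑ i : Fin n, auxW θ u v (X (n+1) ω) (X (n+2) ω) (X (i.val+1) ω)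
        = u * (d1 n ω : ℝ) + v * (d2 n ω : ℝ) := by
      rw [h1, h2]
      unfold auxW
      rw [Finset.sum_add_distrib, ← Finset.mul_sum, ← Finset.mul_sum]
    have hexp : I * u * (d1 n ω : ℂ) / n + I * v * (d2 n ω : ℂ) / n
        = ∑ i : Fin n,
            I * ((auxW θ u v (X (n+1) ω) (X (n+2) ω) (X (i.val+1) ω) / n : ℝ) : ℂ) := by
      rw [show I * u * (d1 n ω : ℂ) / n + I * v * (d2 n ω : ℂ) / n
          = I * (((u * (d1 n ω : ℝ) + v * (d2 n ω : ℝ)) / n : ℝ) : ℂ) by push_cast; ring]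
      rw [← hsum, Finset.sum_div, Complex.ofReal_sum, Finset.mul_sum]
    show Complex.exp (I * u * (d1 n ω : ℂ) / n + I * v * (d2 n ω : ℂ) / n)
      = ∏ i : Fin n, auxH θ u v n (X (n+1) ω) (X (n+2) ω) (X (i.val+1) ω)
    rw [hexp, Complex.exp_sum]
    rfl
  -- Step B : the limit
  have hphimeas : ∀ n : ℕ, Measurable (fun p : ℝ × ℝ => auxPhi μ θ u v n p.2 p.1) := by
    intro n
    have hrw : (fun p : ℝ × ℝ => auxPhi μ θ u v n p.2 p.1)
        = fun p : ℝ × ℝ =>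
            1 + (Complex.exp (I * ((u / n : ℝ) : ℂ)) - 1) * ((μ (Ioi (θ - p.2))).toReal : ℂ)
              + (Complex.exp (I * ((v / n : ℝ) : ℂ)) - 1) * ((μ (Ioi (θ - p.1))).toReal : ℂ)
              + (Complex.exp (I * ((u / n : ℝ) : ℂ)) - 1)
                  * (Complex.exp (I * ((v / n : ℝ) : ℂ)) - 1)
                  * ((μ (Ioi ((θ - p.2) ⊔ (θ - p.1)))).toReal : ℂ) := by
      funext p
      rw [aux_phi_eq μ θ u v n p.2 p.1, Set.Ioi_inter_Ioi]
    rw [hrw]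
    have m1 : Measurable fun p : ℝ × ℝ => (μ (Ioi (θ - p.2))).toReal :=
      hGm.comp (measurable_const.sub measurable_snd)
    have m2 : Measurable fun p : ℝ × ℝ => (μ (Ioi (θ - p.1))).toReal :=
      hGm.comp (measurable_const.sub measurable_fst)
    have m3 : Measurable fun p : ℝ × ℝ => (μ (Ioi ((θ - p.2) ⊔ (θ - p.1)))).toReal :=
      hGm.comp ((measurable_const.sub measurable_snd).sup (measurable_const.sub measurable_fst))
    exact ((measurable_const.add
        ((Complex.measurable_ofReal.comp m1).const_mul _)).add
        ((Complex.measurable_ofReal.comp m2).const_mul _)).add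
        (((Complex.measurable_ofReal.comp m3).const_mul _))
  set L1 : ℝ → ℂ := fun a => Complex.exp (I * ((μ (Ioi (θ - a))).toReal : ℂ) * u) with hL1
  set L2 : ℝ → ℂ := fun b => Complex.exp (I * ((μ (Ioi (θ - b))).toReal : ℂ) * v) with hL2
  have hinner : ∀ b : ℝ, Tendsto (fun n : ℕ => ∫ a, auxPhi μ θ u v n a b ^ n ∂μ) atTop
      (nhds ((∫ a, L1 a ∂μ) * L2 b)) := by
    intro b
    have hm : ∀ n : ℕ, Measurable (fun a => auxPhi μ θ u v n a b) := by
      intro n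
      have h1 : Measurable ((fun p : ℝ × ℝ => auxPhi μ θ u v n p.2 p.1) ∘ (Prod.mk b)) :=
        (hphimeas n).comp measurable_prodMk_left
      exact h1
    have hDCT := tendsto_integral_of_dominated_convergence (μ := μ)
      (F := fun n a => auxPhi μ θ u v n a b ^ n) (f := fun a => L1 a * L2 b)
      (bound := fun _ => 1)
      (fun n => ((hm n).pow_const n).aestronglyMeasurable)
      (integrable_const 1)
      (fun n => Filter.Eventually.of_forall fun a => by
        rw [norm_pow]
        exact pow_le_one₀ (norm_nonneg _) (aux_phi_norm μ θ u v n a b))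
      (Filter.Eventually.of_forall fun a => aux_phi_tendsto μ θ u v a b)
    rwa [integral_mul_const] at hDCT
  have houter : Tendsto (fun n : ℕ => ∫ b, ∫ a, auxPhi μ θ u v n a b ^ n ∂μ ∂μ) atTop
      (nhds (∫ b, (∫ a, L1 a ∂μ) * L2 b ∂μ)) := by
    refine tendsto_integral_of_dominated_convergence (μ := μ)
      (F := fun n b => ∫ a, auxPhi μ θ u v n a b ^ n ∂μ)
      (f := fun b => (∫ a, L1 a ∂μ) * L2 b) (bound := fun _ => 1) ?_ (integrable_const 1) ?_ ?_
    · intro n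
      exact (StronglyMeasurable.integral_prod_right'
        (((hphimeas n).pow_const n).stronglyMeasurable)).aestronglyMeasurable
    · intro n
      refine Filter.Eventually.of_forall fun b => ?_
      have := norm_integral_le_of_norm_le_const (μ := μ) (C := 1)
        (f := fun a => auxPhi μ θ u v n a b ^ n)
        (Filter.Eventually.of_forall fun a => by
          rw [norm_pow]
          exact pow_le_one₀ (norm_nonneg _) (aux_phi_norm μ θ u v n a b))
      simpa using this
    · exact Filter.Eventually.of_forall fun b => hinner b
  have hval : ∫ b, (∫ a, L1 a ∂μ) * L2 b ∂μ
      = (∫ a, Complex.exp (I * u * ((1 : ℂ) - (F (θ - a) : ℂ))) ∂μ)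
        * (∫ b, Complex.exp (I * v * ((1 : ℂ) - (F (θ - b) : ℂ))) ∂μ) := by
    rw [integral_const_mul]
    have e1 : ∀ t : ℝ, ((μ (Ioi (θ - t))).toReal : ℂ) = (1 : ℂ) - (F (θ - t) : ℂ) := by
      intro t
      rw [hIoi]
      push_cast
      ring
    have g1 : ∫ a, L1 a ∂μ = ∫ a, Complex.exp (I * u * ((1 : ℂ) - (F (θ - a) : ℂ))) ∂μ := by
      refine integral_congr_ae (Filter.Eventually.of_forall fun a => ?_)
      rw [hL1]
      simp only
      rw [e1 a]
      ring_nf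
    have g2 : ∫ b, L2 b ∂μ = ∫ b, Complex.exp (I * v * ((1 : ℂ) - (F (θ - b) : ℂ))) ∂μ := by
      refine integral_congr_ae (Filter.Eventually.of_forall fun b => ?_)
      rw [hL2]
      simp only
      rw [e1 b]
      ring_nf
    rw [g1, g2]
  rw [← hval]
  exact houter.congr fun n => (hEn n).symm
end

section
/- Suppose there exist u, v in the support of F with u < θ/2 < v and u + v > θ. Then the probability measures H(da,db) = 1{a+b>θ} F(da)F(db)/α_F(θ) and G(da)G(db), where G(da) = (1-F(θ-a)) F(da)/α_F(θ) and α_F(θ) = P(X_1 + X_2 > θ), are not equal. -/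
open MeasureTheory Set

/-!
Near `u` the measure `μ` has mass but no pair of points there sums beyond `θ`, so `H`
vanishes on `A ×ˢ A` for a small interval `A` around `u`. Yet every `a ∈ A` is completed
to a sum above `θ` by every point near `v`, so `G A > 0`, and hence `(G.prod G) (A ×ˢ A) > 0`.
-/

theorem measurableSet_setOf_lt_fst_add_snd (θ : ℝ) :
    MeasurableSet {p : ℝ × ℝ | θ < p.1 + p.2} :=
  measurableSet_lt measurable_const (measurable_fst.add measurable_snd)

theorem restrict_setOf_lt_fst_add_snd_prod_self_eq_zero (ν : Measure (ℝ × ℝ)) {θ : ℝ}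
    {s : Set ℝ} (hs : s ⊆ Iic (θ / 2)) :
    ν.restrict {p : ℝ × ℝ | θ < p.1 + p.2} (s ×ˢ s) = 0 := by
  have hdisj : s ×ˢ s ∩ {p : ℝ × ℝ | θ < p.1 + p.2} = ∅ :=
    eq_empty_of_forall_notMem fun p ⟨⟨ha, hb⟩, (hlt : θ < p.1 + p.2)⟩ => by
      linarith [mem_Iic.mp (hs ha), mem_Iic.mp (hs hb)]
  rw [Measure.restrict_apply' (measurableSet_setOf_lt_fst_add_snd θ), hdisj, measure_empty]

theorem withDensity_measure_Ioi_sub_pos (μ : Measure ℝ) {θ : ℝ} {s t : Set ℝ}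
    (hs : MeasurableSet s) (hμs : 0 < μ s) (hμt : 0 < μ t)
    (hst : ∀ a ∈ s, ∀ b ∈ t, θ < a + b) :
    0 < μ.withDensity (fun a => μ (Ioi (θ - a))) s := by
  have hbound : ∀ a ∈ s, μ t ≤ μ (Ioi (θ - a)) := fun a ha =>
    measure_mono fun b hb => by simp only [mem_Ioi]; linarith [hst a ha b hb]
  calc 0 < μ t * μ s := ENNReal.mul_pos hμt.ne' hμs.ne'
    _ = ∫⁻ _ in s, μ t ∂μ := by rw [setLIntegral_const]
    _ ≤ ∫⁻ a in s, μ (Ioi (θ - a)) ∂μ := setLIntegral_mono' hs hbound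
    _ = μ.withDensity (fun a => μ (Ioi (θ - a))) s := (withDensity_apply _ hs).symm

theorem stmt_7_general (μ : Measure ℝ) [IsProbabilityMeasure μ] (θ : ℝ)
    (u v : ℝ)
    (hu : ∀ ε > 0, 0 < μ (Ioc (u - ε) (u + ε)))
    (hv : ∀ ε > 0, 0 < μ (Ioc (v - ε) (v + ε)))
    (huθ : u < θ / 2) (huv : θ < u + v)
    (α : ENNReal) (hα : α = (μ.prod μ) {p : ℝ × ℝ | θ < p.1 + p.2})
    (H : Measure (ℝ × ℝ))
    (hH : H = α⁻¹ • (μ.prod μ).restrict {p : ℝ × ℝ | θ < p.1 + p.2})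
    (G : Measure ℝ)
    (hG : G = α⁻¹ • μ.withDensity (fun a => μ (Ioi (θ - a)))) :
    H ≠ G.prod G := by
  set ε := min (θ / 2 - u) ((u + v - θ) / 2)
  have hε : 0 < ε := lt_min (by linarith) (by linarith)
  have hε₁ : ε ≤ θ / 2 - u := min_le_left _ _
  have hε₂ : ε ≤ (u + v - θ) / 2 := min_le_right _ _
  set A := Ioc (u - ε) (u + ε)
  have hA : A ⊆ Iic (θ / 2) := fun a ha => mem_Iic.mpr (by linarith [ha.2])
  have hAB : ∀ a ∈ A, ∀ b ∈ Ioc (v - ε) (v + ε), θ < a + b := fun a ha b hb => by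
    linarith [ha.1, hb.1]
  have hαinv : α⁻¹ ≠ 0 := ENNReal.inv_ne_zero.mpr (hα ▸ measure_ne_top _ _)
  have hHA : H (A ×ˢ A) = 0 := by
    rw [hH, Measure.smul_apply, restrict_setOf_lt_fst_add_snd_prod_self_eq_zero _ hA,
      smul_zero]
  have hGA : G A ≠ 0 := by
    rw [hG, Measure.smul_apply, smul_eq_mul]
    exact mul_ne_zero hαinv
      (withDensity_measure_Ioi_sub_pos μ measurableSet_Ioc (hu ε hε) (hv ε hε) hAB).ne'
  intro hHG
  rw [hHG, hG, Measure.prod_prod, ← hG] at hHA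
  exact mul_ne_zero hGA hGA hHA

/-- Suppose there exist `u, v` in the support of `F` (i.e. the law `μ`
charges every neighbourhood of them) with `u < θ/2 < v` and `u + v > θ`. Then the
probability measure `H(da,db) = 1{a+b>θ} μ(da)μ(db) / α_F(θ)` is not equal to the
product measure `G ⊗ G`, where `G(da) = (1-F(θ-a)) μ(da) / α_F(θ)` and
`α_F(θ) = P(X₁ + X₂ > θ)`. -/
theorem stmt_7 (μ : Measure ℝ) [IsProbabilityMeasure μ] (θ : ℝ) (hθ : 0 < θ)
    (u v : ℝ)
    (hu : ∀ ε > 0, 0 < μ (Ioc (u - ε) (u + ε)))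
    (hv : ∀ ε > 0, 0 < μ (Ioc (v - ε) (v + ε)))
    (huθ : u < θ / 2) (hvθ : θ / 2 < v) (huv : θ < u + v)
    (α : ENNReal) (hα : α = (μ.prod μ) {p : ℝ × ℝ | θ < p.1 + p.2})
    (H : Measure (ℝ × ℝ))
    (hH : H = α⁻¹ • (μ.prod μ).restrict {p : ℝ × ℝ | θ < p.1 + p.2})
    (G : Measure ℝ)
    (hG : G = α⁻¹ • μ.withDensity (fun a => μ (Ioi (θ - a)))) :
    H ≠ G.prod G :=
  stmt_7_general μ θ u v hu hv huθ huv α hα H hH G hG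
end

section
/- If the function (a,b) ↦ 1{a+b>θ} α_F(θ) - (1-F(θ-a))(1-F(θ-b)) vanishes F×F-almost surely, then there do not exist u, v in the support of F with u < θ/2 < v and u + v > θ. -/
open MeasureTheory Set

/-!
Near a support point `u < θ/2` pick a small interval `S`, and near `v` an interval `S'`, so
that `a + b ≤ θ` on `S × S` and `a + b > θ` on `S × S'`; both intervals have positive mass.
The latter forces `α_F(θ) > 0`. The hypothesis says that `1{a+b>θ} α_F(θ)` agrees a.e. with
the product `g(a) g(b)`, `g = 1 - F(θ - ·)`. Vanishing on `S × S` forces `g = 0` a.e. on `S`,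
while not vanishing on `S × S'` forces `g ≠ 0` a.e. on `S`, which contradicts `μ S > 0`.
-/

theorem MeasureTheory.Measure.eq_zero_or_eq_zero_of_prod_subset_null {α β : Type*}
    [MeasurableSpace α] [MeasurableSpace β] {μ : Measure α} {ν : Measure β} [SFinite ν]
    {s : Set α} {t : Set β} {N : Set (α × β)} (hN : μ.prod ν N = 0) (hsub : s ×ˢ t ⊆ N) :
    μ s = 0 ∨ ν t = 0 := by
  have := measure_mono_null hsub hN
  rwa [Measure.prod_prod, mul_eq_zero] at this

theorem MeasureTheory.Measure.eq_zero_or_eq_zero_of_ae_eq_mul {α R : Type*}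
    [MeasurableSpace α] [MulZeroClass R] [NoZeroDivisors R] {μ : Measure α} [SFinite μ]
    {k : α × α → R} {g : α → R} {s t : Set α} (hk : ∀ᵐ p ∂μ.prod μ, k p = g p.1 * g p.2)
    (hss : ∀ a ∈ s, ∀ b ∈ s, k (a, b) = 0) (hst : ∀ a ∈ s, ∀ b ∈ t, k (a, b) ≠ 0) :
    μ s = 0 ∨ μ t = 0 := by
  rw [ae_iff] at hk
  have hg_ne : μ {a ∈ s | g a ≠ 0} = 0 := by
    refine (Measure.eq_zero_or_eq_zero_of_prod_subset_null hk ?_).elim id id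
    rintro ⟨a, b⟩ ⟨⟨ha, hga⟩, hb, hgb⟩
    simpa [hss a ha b hb, eq_comm] using mul_ne_zero hga hgb
  have hg_eq : μ {a ∈ s | g a = 0} = 0 ∨ μ t = 0 := by
    refine Measure.eq_zero_or_eq_zero_of_prod_subset_null hk ?_
    rintro ⟨a, b⟩ ⟨⟨ha, hga⟩, hb⟩
    simpa [hga] using hst a ha b hb
  refine hg_eq.imp (fun h => measure_mono_null (fun a ha => ?_) (measure_union_null hg_ne h)) id
  exact (em (g a = 0)).elim (fun h => Or.inr ⟨ha, h⟩) fun h => Or.inl ⟨ha, h⟩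

theorem MeasureTheory.measure_Ioc_ne_zero_of_toReal_measure_Iic_lt {α : Type*} [LinearOrder α]
    [MeasurableSpace α] {μ : Measure α} [IsFiniteMeasure μ] {x y : α}
    (h : (μ (Iic x)).toReal < (μ (Iic y)).toReal) : μ (Ioc x y) ≠ 0 := by
  intro h0
  have hle : μ (Iic y) ≤ μ (Iic x) := calc
    μ (Iic y) ≤ μ (Iic x ∪ Ioc x y) := measure_mono fun z hz => by
      rcases le_or_gt z x with hzx | hzx
      exacts [Or.inl hzx, Or.inr ⟨hzx, hz⟩]
    _ ≤ μ (Iic x) := by simpa [h0] using measure_union_le (μ := μ) (Iic x) (Ioc x y)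
  exact h.not_ge (ENNReal.toReal_mono (measure_ne_top _ _) hle)

theorem stmt_8_general (μ : Measure ℝ) [IsProbabilityMeasure μ] (θ : ℝ)
    (F : ℝ → ℝ) (hF : F = fun x => (μ (Iic x)).toReal)
    (α : ℝ) (hα : α = ((μ.prod μ) {p : ℝ × ℝ | θ < p.1 + p.2}).toReal)
    (hvanish : ∀ᵐ p ∂(μ.prod μ),
      (if θ < p.1 + p.2 then (1 : ℝ) else 0) * α
        - (1 - F (θ - p.1)) * (1 - F (θ - p.2)) = 0) :
    ¬ ∃ u v : ℝ,
        (∀ ε > 0, F (u - ε) < F (u + ε)) ∧ (∀ ε > 0, F (v - ε) < F (v + ε)) ∧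
        u < θ / 2 ∧ θ / 2 < v ∧ θ < u + v := by
  rintro ⟨u, v, hu, hv, hu2, -, huv⟩
  set ε := min ((θ - 2 * u) / 4) ((u + v - θ) / 4)
  have hε : 0 < ε := lt_min (by linarith) (by linarith)
  have hε₁ : ε ≤ (θ - 2 * u) / 4 := min_le_left _ _
  have hε₂ : ε ≤ (u + v - θ) / 4 := min_le_right _ _
  have hS := measure_Ioc_ne_zero_of_toReal_measure_Iic_lt (by simpa only [hF] using hu ε hε)
  have hS' := measure_Ioc_ne_zero_of_toReal_measure_Iic_lt (by simpa only [hF] using hv ε hε)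
  have hsum_le : ∀ a ∈ Ioc (u - ε) (u + ε), ∀ b ∈ Ioc (u - ε) (u + ε), ¬θ < a + b :=
    fun a ha b hb => by linarith [ha.2, hb.2]
  have hsum_gt : ∀ a ∈ Ioc (u - ε) (u + ε), ∀ b ∈ Ioc (v - ε) (v + ε), θ < a + b :=
    fun a ha b hb => by linarith [ha.1, hb.1]
  have hα0 : α ≠ 0 := by
    rw [hα, ENNReal.toReal_ne_zero]
    refine ⟨fun h0 => ?_, measure_ne_top _ _⟩
    exact (Measure.eq_zero_or_eq_zero_of_prod_subset_null h0
      fun p hp => hsum_gt p.1 hp.1 p.2 hp.2).elim hS hS'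
  have hprod : ∀ᵐ p ∂μ.prod μ, (if θ < p.1 + p.2 then (1 : ℝ) else 0) * α
      = (1 - F (θ - p.1)) * (1 - F (θ - p.2)) := hvanish.mono fun p hp => sub_eq_zero.mp hp
  refine (Measure.eq_zero_or_eq_zero_of_ae_eq_mul (g := fun a => 1 - F (θ - a)) hprod
    (fun a ha b hb => ?_) (fun a ha b hb => ?_)).elim hS hS'
  · simp [hsum_le a ha b hb]
  · simpa [hsum_gt a ha b hb] using hα0

/-- If `(a,b) ↦ 1{a+b>θ} α_F(θ) - (1-F(θ-a))(1-F(θ-b))` vanishes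
`μ × μ`-almost surely, where `α_F(θ) = ∫∫ 1{a+b>θ} μ(da) μ(db)`, then there do not
exist `u, v` in the support of `F` with `u < θ/2 < v` and `u + v > θ`. -/
theorem stmt_8 (μ : Measure ℝ) [IsProbabilityMeasure μ] (θ : ℝ) (hθ : 0 < θ)
    (F : ℝ → ℝ) (hF : F = fun x => (μ (Iic x)).toReal)
    (α : ℝ) (hα : α = ((μ.prod μ) {p : ℝ × ℝ | θ < p.1 + p.2}).toReal)
    (hvanish : ∀ᵐ p ∂(μ.prod μ),
      (if θ < p.1 + p.2 then (1 : ℝ) else 0) * α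
        - (1 - F (θ - p.1)) * (1 - F (θ - p.2)) = 0) :
    ¬ ∃ u v : ℝ,
        (∀ ε > 0, F (u - ε) < F (u + ε)) ∧ (∀ ε > 0, F (v - ε) < F (v + ε)) ∧
        u < θ / 2 ∧ θ / 2 < v ∧ θ < u + v :=
  stmt_8_general μ θ F hF α hα hvanish
end

section
/- Let T_n(1) = #{2 ≤ i < j ≤ n+1 : h(X_1, X_i, X_j) = 1} be the number of triangles containing vertex 1. Then T_n(1)/C(n,2) converges in distribution, as n → ∞, to the random variable ∫∫ h(X, x_1, x_2) F(dx_1) F(dx_2) where X has law F and is independent of the integration variables. -/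
open MeasureTheory ProbabilityTheory Set Filter
open scoped ENNReal Topology

section AuxGeneral

/-- Convergence in measure implies convergence of integrals of bounded continuous test
functions. -/
lemma aux_tendsto_integral {Ω : Type*} [MeasurableSpace Ω] (P : Measure Ω)
    [IsProbabilityMeasure P] (V : ℕ → Ω → ℝ) (W : Ω → ℝ)
    (hV : ∀ n, AEStronglyMeasurable (V n) P) (h : TendstoInMeasure P V atTop W)
    (f : BoundedContinuousFunction ℝ ℝ) :
    Tendsto (fun n => ∫ ω, f (V n ω) ∂P) atTop (nhds (∫ ω, f (W ω) ∂P)) := by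
  refine tendsto_of_subseq_tendsto fun ns hns => ?_
  have h2 : TendstoInMeasure P (fun n => V (ns n)) atTop W := fun ε hε => (h ε hε).comp hns
  obtain ⟨ms, -, hae⟩ := h2.exists_seq_tendsto_ae
  refine ⟨ms, ?_⟩
  apply tendsto_integral_of_dominated_convergence (fun _ => ‖f‖)
  · exact fun n => f.continuous.comp_aestronglyMeasurable (hV _)
  · exact integrable_const _
  · exact fun n => ae_of_all _ fun ω => f.norm_coe_le_norm _
  · filter_upwards [hae] with ω hω using (f.continuous.tendsto _).comp hω

/-- The index set of pairs. -/
def auxPn (n : ℕ) : Finset (ℕ × ℕ) :=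
  (Finset.Icc 2 (n+1) ×ˢ Finset.Icc 2 (n+1)).filter fun q : ℕ×ℕ => q.1 < q.2

lemma aux_mem_Pn {n : ℕ} {q : ℕ × ℕ} :
    q ∈ auxPn n ↔ 2 ≤ q.1 ∧ q.1 < q.2 ∧ q.2 ≤ n + 1 := by
  obtain ⟨i, j⟩ := q
  simp only [auxPn, Finset.mem_filter, Finset.mem_product, Finset.mem_Icc]
  constructor
  · rintro ⟨⟨⟨h1, h2⟩, h3, h4⟩, h5⟩; exact ⟨h1, h5, h4⟩
  · rintro ⟨h1, h2, h3⟩; exact ⟨⟨⟨h1, by omega⟩, by omega, h3⟩, h2⟩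

lemma aux_card (n : ℕ) : (auxPn n).card = n.choose 2 := by
  induction n with
  | zero => simp [auxPn]
  | succ n ih =>
    have hset : auxPn (n+1)
        = auxPn n ∪ (Finset.Icc 2 (n+1)).image (fun i => (i, n+2)) := by
      ext ⟨a, b⟩
      simp only [auxPn, Finset.mem_filter, Finset.mem_product, Finset.mem_Icc,
        Finset.mem_union, Finset.mem_image, Prod.mk.injEq]
      constructor
      · rintro ⟨⟨⟨h1, h2⟩, h3, h4⟩, h5⟩
        rcases eq_or_lt_of_le h4 with h | h
        · exact Or.inr ⟨a, ⟨h1, by omega⟩, rfl, h.symm⟩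
        · exact Or.inl ⟨⟨⟨h1, by omega⟩, h3, by omega⟩, h5⟩
      · rintro (⟨⟨⟨h1, h2⟩, h3, h4⟩, h5⟩ | ⟨i, ⟨h1, h2⟩, rfl, rfl⟩) <;> omega
    have hdisj : Disjoint (auxPn n) ((Finset.Icc 2 (n+1)).image (fun i => (i, n+2))) := by
      rw [Finset.disjoint_left]
      rintro ⟨a, b⟩ hmem hmem'
      rw [aux_mem_Pn] at hmem
      simp only [Finset.mem_image, Prod.mk.injEq] at hmem'
      obtain ⟨i, hi, rfl, rfl⟩ := hmem'
      simp only [Finset.mem_Icc] at hi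
      omega
    rw [hset, Finset.card_union_of_disjoint hdisj, ih,
      Finset.card_image_of_injective _ (fun a b h => (Prod.mk.injEq _ _ _ _).mp h |>.1),
      Nat.card_Icc]
    have h2 : (n+1).choose 2 = n.choose 1 + n.choose 2 := Nat.choose_succ_succ n 1
    rw [h2, Nat.choose_one_right]
    omega

/-- The triangle event set. -/
def auxB (θ : ℝ) : Set (ℝ × (ℝ × ℝ)) :=
  {z | θ < z.1 + z.2.1 ∧ θ < z.2.1 + z.2.2 ∧ θ < z.2.2 + z.1}

lemma auxB_meas (θ : ℝ) : MeasurableSet (auxB θ) := by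
  apply MeasurableSet.inter
  · exact measurableSet_lt measurable_const
      (measurable_fst.add (measurable_fst.comp measurable_snd))
  apply MeasurableSet.inter
  · exact measurableSet_lt measurable_const
      ((measurable_fst.comp measurable_snd).add (measurable_snd.comp measurable_snd))
  · exact measurableSet_lt measurable_const
      ((measurable_snd.comp measurable_snd).add measurable_fst)

lemma aux_phi_meas (θ : ℝ) : Measurable ((auxB θ).indicator (1 : ℝ × (ℝ × ℝ) → ℝ)) :=
  measurable_one.indicator (auxB_meas θ)

lemma aux_phi_nonneg (θ : ℝ) (z : ℝ × (ℝ × ℝ)) :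
    0 ≤ (auxB θ).indicator (1 : ℝ × (ℝ × ℝ) → ℝ) z :=
  Set.indicator_nonneg (fun _ _ => zero_le_one) z

lemma aux_phi_le_one (θ : ℝ) (z : ℝ × (ℝ × ℝ)) :
    (auxB θ).indicator (1 : ℝ × (ℝ × ℝ) → ℝ) z ≤ 1 := by
  classical
  by_cases h : z ∈ auxB θ <;>
    simp [Set.indicator_of_mem, Set.indicator_of_notMem, h]

lemma aux_integrable_of_bounded {α : Type*} [MeasurableSpace α] {ν : Measure α}
    [IsFiniteMeasure ν] {f : α → ℝ} (hf : AEStronglyMeasurable f ν) {C : ℝ}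
    (h : ∀ a, ‖f a‖ ≤ C) : Integrable f ν :=
  ⟨hf, HasFiniteIntegral.of_bounded (ae_of_all _ h)⟩

end AuxGeneral

section AuxG

variable {μ : Measure ℝ} [IsProbabilityMeasure μ] {θ : ℝ} {g : ℝ → ℝ}
  (hg : ∀ x, g x = ((μ.prod μ) {p : ℝ × ℝ |
      θ < x + p.1 ∧ θ < p.1 + p.2 ∧ θ < p.2 + x}).toReal)

include hg

lemma aux_g_eq : g = fun x => ((μ.prod μ) (Prod.mk x ⁻¹' auxB θ)).toReal := by
  funext x; rw [hg x]; rfl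

lemma aux_g_meas : Measurable g := by
  rw [aux_g_eq hg]
  exact (measurable_measure_prodMk_left (auxB_meas θ)).ennreal_toReal

lemma aux_g_nonneg (x : ℝ) : 0 ≤ g x := by rw [hg x]; exact ENNReal.toReal_nonneg

lemma aux_g_le_one (x : ℝ) : g x ≤ 1 := by
  rw [hg x]
  calc ((μ.prod μ) _).toReal ≤ (1 : ℝ≥0∞).toReal :=
        ENNReal.toReal_mono ENNReal.one_ne_top prob_le_one
    _ = 1 := ENNReal.toReal_one

lemma aux_slice (x : ℝ) :
    ∫ u, (auxB θ).indicator (1 : ℝ × (ℝ × ℝ) → ℝ) (x, u) ∂(μ.prod μ) = g x := by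
  have h1 : (fun u : ℝ × ℝ => (auxB θ).indicator (1 : ℝ × (ℝ × ℝ) → ℝ) (x, u))
      = (Prod.mk x ⁻¹' auxB θ).indicator (1 : ℝ × ℝ → ℝ) := by
    funext u; rfl
  rw [h1, integral_indicator_one ((auxB_meas θ).preimage measurable_prodMk_left), hg x]
  rfl

end AuxG

section AuxLaw

variable {Ω : Type*} [MeasurableSpace Ω] (P : Measure Ω) [IsProbabilityMeasure P]
    (μ : Measure ℝ) [IsProbabilityMeasure μ]
    (X : ℕ → Ω → ℝ) (hmeas : ∀ i, Measurable (X i))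
    (hlaw : ∀ i, Measure.map (X i) P = μ)
    (hindep : iIndepFun X P)

include hmeas hlaw hindep

lemma aux_law2 {i j : ℕ} (hij : i ≠ j) :
    Measure.map (fun ω => (X i ω, X j ω)) P = μ.prod μ := by
  have h := hindep.indepFun hij
  rw [indepFun_iff_map_prod_eq_prod_map_map (hmeas i).aemeasurable (hmeas j).aemeasurable] at h
  rw [h, hlaw i, hlaw j]

lemma aux_law3 {i j : ℕ} (h1i : 1 ≠ i) (h1j : 1 ≠ j) (hij : i ≠ j) :
    Measure.map (fun ω => (X 1 ω, (X i ω, X j ω))) P = μ.prod (μ.prod μ) := by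
  have hind : IndepFun (X 1) (fun ω => (X i ω, X j ω)) P :=
    (hindep.indepFun_prodMk hmeas i j 1 h1i.symm h1j.symm).symm
  rw [indepFun_iff_map_prod_eq_prod_map_map (hmeas 1).aemeasurable
    ((hmeas i).prodMk (hmeas j)).aemeasurable] at hind
  rw [hind, hlaw 1, aux_law2 P μ X hmeas hlaw hindep hij]

lemma aux_law5 {i j k l : ℕ} (h1i : 1 ≠ i) (h1j : 1 ≠ j) (h1k : 1 ≠ k) (h1l : 1 ≠ l)
    (hij : i ≠ j) (hkl : k ≠ l) (hik : i ≠ k) (hil : i ≠ l) (hjk : j ≠ k) (hjl : j ≠ l) :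
    Measure.map (fun ω => (X 1 ω, ((X i ω, X j ω), (X k ω, X l ω)))) P
      = μ.prod ((μ.prod μ).prod (μ.prod μ)) := by
  classical
  have hdisj : Disjoint ({1} : Finset ℕ) ({i, j, k, l} : Finset ℕ) := by
    rw [Finset.disjoint_singleton_left]
    simp only [Finset.mem_insert, Finset.mem_singleton]
    push_neg
    exact ⟨h1i, h1j, h1k, h1l⟩
  have hbase := hindep.indepFun_finset {1} {i, j, k, l} hdisj hmeas
  have hi : i ∈ ({i, j, k, l} : Finset ℕ) := by simp
  have hj : j ∈ ({i, j, k, l} : Finset ℕ) := by simp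
  have hk : k ∈ ({i, j, k, l} : Finset ℕ) := by simp
  have hl : l ∈ ({i, j, k, l} : Finset ℕ) := by simp
  have hind : IndepFun (X 1) (fun ω => ((X i ω, X j ω), (X k ω, X l ω))) P := by
    have := hbase.comp (φ := fun v : (({1} : Finset ℕ) → ℝ) => v ⟨1, by simp⟩)
      (ψ := fun v : ((({i, j, k, l} : Finset ℕ) : Type) → ℝ) =>
        ((v ⟨i, hi⟩, v ⟨j, hj⟩), (v ⟨k, hk⟩, v ⟨l, hl⟩)))
      (measurable_pi_apply _ : Measurable fun v : (({1} : Finset ℕ) → ℝ) => v ⟨1, by simp⟩)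
      (by fun_prop : Measurable fun v : ((({i, j, k, l} : Finset ℕ) : Type) → ℝ) =>
        ((v ⟨i, hi⟩, v ⟨j, hj⟩), (v ⟨k, hk⟩, v ⟨l, hl⟩)))
    exact this
  have hinner : Measure.map (fun ω => ((X i ω, X j ω), (X k ω, X l ω))) P
      = (μ.prod μ).prod (μ.prod μ) := by
    have h2 := hindep.indepFun_prodMk_prodMk hmeas i j k l hik hil hjk hjl
    rw [indepFun_iff_map_prod_eq_prod_map_map ((hmeas i).prodMk (hmeas j)).aemeasurable
      ((hmeas k).prodMk (hmeas l)).aemeasurable] at h2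
    rw [h2, aux_law2 P μ X hmeas hlaw hindep hij, aux_law2 P μ X hmeas hlaw hindep hkl]
  rw [indepFun_iff_map_prod_eq_prod_map_map (hmeas 1).aemeasurable
    (((hmeas i).prodMk (hmeas j)).prodMk ((hmeas k).prodMk (hmeas l))).aemeasurable] at hind
  rw [hind, hlaw 1, hinner]

end AuxLaw

section AuxInt

variable {Ω : Type*} [MeasurableSpace Ω] (P : Measure Ω) [IsProbabilityMeasure P]
    (μ : Measure ℝ) [IsProbabilityMeasure μ]
    (X : ℕ → Ω → ℝ) (hmeas : ∀ i, Measurable (X i))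
    (hlaw : ∀ i, Measure.map (X i) P = μ)
    (hindep : iIndepFun X P)
    {θ : ℝ} {g : ℝ → ℝ}
    (hg : ∀ x, g x = ((μ.prod μ) {p : ℝ × ℝ |
        θ < x + p.1 ∧ θ < p.1 + p.2 ∧ θ < p.2 + x}).toReal)

include hmeas hlaw hindep hg

lemma aux_I5 {i j k l : ℕ} (h1i : 1 ≠ i) (h1j : 1 ≠ j) (h1k : 1 ≠ k) (h1l : 1 ≠ l)
    (hij : i ≠ j) (hkl : k ≠ l) (hik : i ≠ k) (hil : i ≠ l) (hjk : j ≠ k) (hjl : j ≠ l) :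
    ∫ ω, (auxB θ).indicator (1 : ℝ × (ℝ × ℝ) → ℝ) (X 1 ω, (X i ω, X j ω))
        * (auxB θ).indicator (1 : ℝ × (ℝ × ℝ) → ℝ) (X 1 ω, (X k ω, X l ω)) ∂P
      = ∫ x, g x ^ 2 ∂μ := by
  have hZ : Measurable fun ω => (X 1 ω, ((X i ω, X j ω), (X k ω, X l ω))) :=
    (hmeas 1).prodMk (((hmeas i).prodMk (hmeas j)).prodMk ((hmeas k).prodMk (hmeas l)))
  have hFm : Measurable fun z : ℝ × ((ℝ × ℝ) × (ℝ × ℝ)) =>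
      (auxB θ).indicator (1 : ℝ × (ℝ × ℝ) → ℝ) (z.1, z.2.1)
        * (auxB θ).indicator (1 : ℝ × (ℝ × ℝ) → ℝ) (z.1, z.2.2) :=
    ((aux_phi_meas θ).comp (measurable_fst.prodMk (measurable_fst.comp measurable_snd))).mul
      ((aux_phi_meas θ).comp (measurable_fst.prodMk (measurable_snd.comp measurable_snd)))
  have h1 : ∫ ω, (auxB θ).indicator (1 : ℝ × (ℝ × ℝ) → ℝ) (X 1 ω, (X i ω, X j ω))
        * (auxB θ).indicator (1 : ℝ × (ℝ × ℝ) → ℝ) (X 1 ω, (X k ω, X l ω)) ∂P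
      = ∫ z : ℝ × ((ℝ × ℝ) × (ℝ × ℝ)),
          (auxB θ).indicator (1 : ℝ × (ℝ × ℝ) → ℝ) (z.1, z.2.1)
            * (auxB θ).indicator (1 : ℝ × (ℝ × ℝ) → ℝ) (z.1, z.2.2)
          ∂(Measure.map (fun ω => (X 1 ω, ((X i ω, X j ω), (X k ω, X l ω)))) P) :=
    (integral_map hZ.aemeasurable hFm.aestronglyMeasurable).symm
  rw [h1, aux_law5 P μ X hmeas hlaw hindep h1i h1j h1k h1l hij hkl hik hil hjk hjl]
  have hint : Integrable (fun z : ℝ × ((ℝ × ℝ) × (ℝ × ℝ)) =>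
      (auxB θ).indicator (1 : ℝ × (ℝ × ℝ) → ℝ) (z.1, z.2.1)
        * (auxB θ).indicator (1 : ℝ × (ℝ × ℝ) → ℝ) (z.1, z.2.2))
      (μ.prod ((μ.prod μ).prod (μ.prod μ))) := by
    refine aux_integrable_of_bounded hFm.aestronglyMeasurable (C := 1) fun z => ?_
    rw [Real.norm_eq_abs, abs_of_nonneg (mul_nonneg (aux_phi_nonneg θ _) (aux_phi_nonneg θ _))]
    exact mul_le_one₀ (aux_phi_le_one θ _) (aux_phi_nonneg θ _) (aux_phi_le_one θ _)
  rw [MeasureTheory.integral_prod _ hint]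
  refine integral_congr_ae (ae_of_all _ fun x => ?_)
  calc (∫ w : (ℝ × ℝ) × (ℝ × ℝ),
          (auxB θ).indicator (1 : ℝ × (ℝ × ℝ) → ℝ) (x, w.1)
            * (auxB θ).indicator (1 : ℝ × (ℝ × ℝ) → ℝ) (x, w.2)
          ∂((μ.prod μ).prod (μ.prod μ)))
      = (∫ u, (auxB θ).indicator (1 : ℝ × (ℝ × ℝ) → ℝ) (x, u) ∂(μ.prod μ))
        * (∫ v, (auxB θ).indicator (1 : ℝ × (ℝ × ℝ) → ℝ) (x, v) ∂(μ.prod μ)) :=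
        integral_prod_mul (f := fun u : ℝ × ℝ => (auxB θ).indicator (1 : ℝ × (ℝ × ℝ) → ℝ) (x, u))
          (g := fun v : ℝ × ℝ => (auxB θ).indicator (1 : ℝ × (ℝ × ℝ) → ℝ) (x, v))
    _ = g x * g x := by rw [aux_slice hg x]
    _ = g x ^ 2 := (pow_two (g x)).symm

lemma aux_I3 {i j : ℕ} (h1i : 1 ≠ i) (h1j : 1 ≠ j) (hij : i ≠ j) :
    ∫ ω, (auxB θ).indicator (1 : ℝ × (ℝ × ℝ) → ℝ) (X 1 ω, (X i ω, X j ω)) * g (X 1 ω) ∂P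
      = ∫ x, g x ^ 2 ∂μ := by
  have hZ : Measurable fun ω => (X 1 ω, (X i ω, X j ω)) :=
    (hmeas 1).prodMk ((hmeas i).prodMk (hmeas j))
  have hFm : Measurable fun z : ℝ × (ℝ × ℝ) =>
      (auxB θ).indicator (1 : ℝ × (ℝ × ℝ) → ℝ) z * g z.1 :=
    (aux_phi_meas θ).mul ((aux_g_meas hg).comp measurable_fst)
  have h1 : ∫ ω, (auxB θ).indicator (1 : ℝ × (ℝ × ℝ) → ℝ) (X 1 ω, (X i ω, X j ω))
        * g (X 1 ω) ∂P
      = ∫ z : ℝ × (ℝ × ℝ), (auxB θ).indicator (1 : ℝ × (ℝ × ℝ) → ℝ) z * g z.1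
          ∂(Measure.map (fun ω => (X 1 ω, (X i ω, X j ω))) P) :=
    (integral_map hZ.aemeasurable hFm.aestronglyMeasurable).symm
  rw [h1, aux_law3 P μ X hmeas hlaw hindep h1i h1j hij]
  have hint : Integrable (fun z : ℝ × (ℝ × ℝ) =>
      (auxB θ).indicator (1 : ℝ × (ℝ × ℝ) → ℝ) z * g z.1) (μ.prod (μ.prod μ)) := by
    refine aux_integrable_of_bounded hFm.aestronglyMeasurable (C := 1) fun z => ?_
    rw [Real.norm_eq_abs,
      abs_of_nonneg (mul_nonneg (aux_phi_nonneg θ _) (aux_g_nonneg hg _))]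
    exact mul_le_one₀ (aux_phi_le_one θ _) (aux_g_nonneg hg _) (aux_g_le_one hg _)
  rw [MeasureTheory.integral_prod _ hint]
  refine integral_congr_ae (ae_of_all _ fun x => ?_)
  calc (∫ u : ℝ × ℝ, (auxB θ).indicator (1 : ℝ × (ℝ × ℝ) → ℝ) (x, u) * g x ∂(μ.prod μ))
      = (∫ u : ℝ × ℝ, (auxB θ).indicator (1 : ℝ × (ℝ × ℝ) → ℝ) (x, u) ∂(μ.prod μ)) * g x :=
        integral_mul_const _ _
    _ = g x * g x := by rw [aux_slice hg x]
    _ = g x ^ 2 := (pow_two (g x)).symm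

omit hmeas hlaw hindep in
include hg in
lemma aux_I1_pre (hXm : Measurable (X 1)) (hX1 : Measure.map (X 1) P = μ) :
    ∫ ω, g (X 1 ω) ^ 2 ∂P = ∫ x, g x ^ 2 ∂μ := by
  have hFm : Measurable fun x : ℝ => g x ^ 2 := (aux_g_meas hg).pow_const 2
  have := integral_map (φ := X 1) (μ := P) hXm.aemeasurable hFm.aestronglyMeasurable
  rw [hX1] at this
  exact this.symm

end AuxInt
/-- Let `T_n(1) = #{2 ≤ i < j ≤ n+1 : h(X 1, X i, X j) = 1}` be the
number of triangles containing vertex `1` (with `h` the triangle indicator kernel).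
Then `T_n(1) / C(n,2)` converges in distribution, as `n → ∞`, to
`∫∫ h(X, x₁, x₂) μ(dx₁) μ(dx₂)` where `X ∼ μ`. Convergence in distribution is expressed
via bounded continuous test functions. -/
theorem stmt_13 {Ω : Type*} [MeasurableSpace Ω] (P : Measure Ω) [IsProbabilityMeasure P]
    (μ : Measure ℝ) [IsProbabilityMeasure μ]
    (X : ℕ → Ω → ℝ) (hmeas : ∀ i, Measurable (X i))
    (hlaw : ∀ i, Measure.map (X i) P = μ)
    (hindep : iIndepFun X P)
    (θ : ℝ) (hθ : 0 < θ)
    (T1 : ℕ → Ω → ℕ)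
    (hT1 : ∀ n ω, T1 n ω = ({q : ℕ × ℕ | 2 ≤ q.1 ∧ q.1 < q.2 ∧ q.2 ≤ n + 1 ∧
        θ < X 1 ω + X q.1 ω ∧ θ < X q.1 ω + X q.2 ω ∧ θ < X q.2 ω + X 1 ω}).ncard)
    (g : ℝ → ℝ)
    (hg : ∀ x, g x = ((μ.prod μ) {p : ℝ × ℝ |
        θ < x + p.1 ∧ θ < p.1 + p.2 ∧ θ < p.2 + x}).toReal) :
    ∀ f : BoundedContinuousFunction ℝ ℝ,
      Tendsto (fun n : ℕ => ∫ ω, f ((T1 n ω : ℝ) / (n.choose 2 : ℝ)) ∂P) atTop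
        (nhds (∫ ω, f (g (X 1 ω)) ∂P)) := by
  intro f
  classical
  set W : Ω → ℝ := fun ω => g (X 1 ω) with hW
  set a : ℕ × ℕ → Ω → ℝ :=
    fun q ω => (auxB θ).indicator (1 : ℝ × (ℝ × ℝ) → ℝ) (X 1 ω, (X q.1 ω, X q.2 ω)) with ha
  set V : ℕ → Ω → ℝ := fun n ω => (T1 n ω : ℝ) / ((n.choose 2 : ℕ) : ℝ) with hV
  have hgm : Measurable g := aux_g_meas hg
  have hg0 : ∀ x, 0 ≤ g x := aux_g_nonneg hg
  have hg1 : ∀ x, g x ≤ 1 := aux_g_le_one hg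
  have ham : ∀ q : ℕ × ℕ, Measurable (a q) := fun q =>
    (aux_phi_meas θ).comp ((hmeas 1).prodMk ((hmeas q.1).prodMk (hmeas q.2)))
  have ha0 : ∀ (q : ℕ × ℕ) ω, 0 ≤ a q ω := fun q ω => aux_phi_nonneg θ _
  have ha1 : ∀ (q : ℕ × ℕ) ω, a q ω ≤ 1 := fun q ω => aux_phi_le_one θ _
  -- sum representation of T1
  have hsum : ∀ n ω, (T1 n ω : ℝ) = ∑ q ∈ auxPn n, a q ω := by
    intro n ω
    have hset : {q : ℕ × ℕ | 2 ≤ q.1 ∧ q.1 < q.2 ∧ q.2 ≤ n + 1 ∧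
        θ < X 1 ω + X q.1 ω ∧ θ < X q.1 ω + X q.2 ω ∧ θ < X q.2 ω + X 1 ω}
        = ↑((auxPn n).filter fun q =>
            θ < X 1 ω + X q.1 ω ∧ θ < X q.1 ω + X q.2 ω ∧ θ < X q.2 ω + X 1 ω) := by
      ext q
      simp only [Set.mem_setOf_eq, Finset.coe_filter, aux_mem_Pn]
      tauto
    have haq : ∀ q : ℕ × ℕ, a q ω = if (θ < X 1 ω + X q.1 ω ∧ θ < X q.1 ω + X q.2 ω ∧
        θ < X q.2 ω + X 1 ω) then (1:ℝ) else 0 := by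
      intro q
      simp only [ha, Set.indicator_apply, auxB, Set.mem_setOf_eq, Pi.one_apply]
    rw [hT1 n ω, hset, Set.ncard_coe_finset]
    calc ((((auxPn n).filter fun q =>
            θ < X 1 ω + X q.1 ω ∧ θ < X q.1 ω + X q.2 ω ∧ θ < X q.2 ω + X 1 ω).card : ℕ) : ℝ)
        = ∑ q ∈ auxPn n, if (θ < X 1 ω + X q.1 ω ∧ θ < X q.1 ω + X q.2 ω ∧
            θ < X q.2 ω + X 1 ω) then (1:ℝ) else 0 := (Finset.sum_boole _ _).symm
      _ = ∑ q ∈ auxPn n, a q ω := Finset.sum_congr rfl fun q _ => (haq q).symm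
  have hVsum : ∀ n ω, V n ω = (∑ q ∈ auxPn n, a q ω) / ((n.choose 2 : ℕ) : ℝ) := by
    intro n ω
    simp only [hV]
    rw [hsum n ω]
  have hVmeas : ∀ n, Measurable (V n) := by
    intro n
    have he : V n = fun ω => (∑ q ∈ auxPn n, a q ω) / ((n.choose 2 : ℕ) : ℝ) :=
      funext (hVsum n)
    rw [he]
    exact (Finset.measurable_sum _ fun q _ => ham q).div_const _
  have hWmeas : Measurable W := hgm.comp (hmeas 1)
  have hW0 : ∀ ω, 0 ≤ W ω := fun ω => hg0 _
  have hW1 : ∀ ω, W ω ≤ 1 := fun ω => hg1 _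
  have hV0 : ∀ n ω, 0 ≤ V n ω := fun n ω => by
    rw [hVsum]
    exact div_nonneg (Finset.sum_nonneg fun q _ => ha0 q ω) (Nat.cast_nonneg _)
  have hV1 : ∀ n ω, V n ω ≤ 1 := by
    intro n ω
    rw [hVsum]
    rcases eq_or_ne ((n.choose 2 : ℕ) : ℝ) 0 with h0 | h0
    · rw [h0, div_zero]; exact zero_le_one
    · rw [div_le_one (lt_of_le_of_ne (Nat.cast_nonneg _) (Ne.symm h0))]
      calc ∑ q ∈ auxPn n, a q ω ≤ ∑ _q ∈ auxPn n, (1:ℝ) :=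
            Finset.sum_le_sum fun q _ => ha1 q ω
        _ = ((auxPn n).card : ℝ) := by simp
        _ = ((n.choose 2 : ℕ) : ℝ) := by rw [aux_card]
  set I2 : ℝ := ∫ x, g x ^ 2 ∂μ with hI2
  have hI2nn : 0 ≤ I2 := integral_nonneg fun x => sq_nonneg _
  have hIpq : ∀ p q : ℕ × ℕ, Integrable (fun ω => a p ω * a q ω) P := fun p q =>
    aux_integrable_of_bounded ((ham p).mul (ham q)).aestronglyMeasurable (C := 1) fun ω => by
      rw [Real.norm_eq_abs, abs_of_nonneg (mul_nonneg (ha0 _ _) (ha0 _ _))]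
      exact mul_le_one₀ (ha1 _ _) (ha0 _ _) (ha1 _ _)
  have hIpW : ∀ p : ℕ × ℕ, Integrable (fun ω => a p ω * W ω) P := fun p =>
    aux_integrable_of_bounded ((ham p).mul hWmeas).aestronglyMeasurable (C := 1) fun ω => by
      rw [Real.norm_eq_abs, abs_of_nonneg (mul_nonneg (ha0 _ _) (hW0 _))]
      exact mul_le_one₀ (ha1 _ _) (hW0 _) (hW1 _)
  have hIW2 : Integrable (fun ω => W ω ^ 2) P :=
    aux_integrable_of_bounded (hWmeas.pow_const 2).aestronglyMeasurable (C := 1) fun ω => by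
      rw [Real.norm_eq_abs, abs_of_nonneg (sq_nonneg _)]
      calc W ω ^ 2 ≤ 1 ^ 2 := pow_le_pow_left₀ (hW0 ω) (hW1 ω) 2
        _ = 1 := one_pow 2
  have hJ1 : ∀ p q : ℕ × ℕ, ∫ ω, a p ω * a q ω ∂P ≤ 1 := fun p q => by
    calc ∫ ω, a p ω * a q ω ∂P ≤ ∫ _ω, (1:ℝ) ∂P :=
          integral_mono (hIpq p q) (integrable_const 1)
            (fun ω => mul_le_one₀ (ha1 _ _) (ha0 _ _) (ha1 _ _))
      _ = 1 := by simp
  have key5 : ∀ p q : ℕ × ℕ, 2 ≤ p.1 → p.1 < p.2 → 2 ≤ q.1 → q.1 < q.2 →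
      p.1 ≠ q.1 → p.1 ≠ q.2 → p.2 ≠ q.1 → p.2 ≠ q.2 →
      ∫ ω, a p ω * a q ω ∂P = I2 := by
    intro p q h1 h2 h3 h4 h5 h6 h7 h8
    rw [hI2]
    simp only [ha]
    exact aux_I5 P μ X hmeas hlaw hindep hg (by omega) (by omega) (by omega) (by omega)
      (by omega) (by omega) h5 h6 h7 h8
  have key3 : ∀ p : ℕ × ℕ, 2 ≤ p.1 → p.1 < p.2 → ∫ ω, a p ω * W ω ∂P = I2 := by
    intro p h1 h2
    rw [hI2]
    simp only [ha, hW]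
    exact aux_I3 P μ X hmeas hlaw hindep hg (by omega) (by omega) (by omega)
  have key1 : ∫ ω, W ω ^ 2 ∂P = I2 := by
    rw [hI2]
    simp only [hW]
    exact aux_I1_pre P μ X hg (hmeas 1) (hlaw 1)
  -- main second-moment bound
  have hmain : ∀ n : ℕ, 2 ≤ n →
      ∫ ω, (V n ω - W ω) ^ 2 ∂P ≤ 4 * ((n:ℝ) + 2) / ((n.choose 2 : ℕ) : ℝ) := by
    intro n hn
    set c : ℝ := ((n.choose 2 : ℕ) : ℝ) with hc
    have hcpos : 0 < c := by
      rw [hc]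
      exact_mod_cast Nat.choose_pos (by omega)
    have hcne : c ≠ 0 := ne_of_gt hcpos
    have hptw : ∀ ω, (V n ω - W ω) ^ 2
        = (∑ p ∈ auxPn n, ∑ q ∈ auxPn n, a p ω * a q ω) / c ^ 2
          - 2 * ((∑ p ∈ auxPn n, a p ω * W ω) / c) + W ω ^ 2 := by
      intro ω
      have e1 : (∑ p ∈ auxPn n, a p ω) * (∑ q ∈ auxPn n, a q ω)
          = ∑ p ∈ auxPn n, ∑ q ∈ auxPn n, a p ω * a q ω := Finset.sum_mul_sum _ _ _ _
      have e2 : (∑ p ∈ auxPn n, a p ω) * W ω = ∑ p ∈ auxPn n, a p ω * W ω :=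
        Finset.sum_mul _ _ _
      rw [hVsum n ω, ← hc, ← e1, ← e2]
      field_simp
      ring
    have hintA : Integrable
        (fun ω => (∑ p ∈ auxPn n, ∑ q ∈ auxPn n, a p ω * a q ω) / c ^ 2) P :=
      (integrable_finset_sum _ fun p _ =>
        integrable_finset_sum _ fun q _ => hIpq p q).div_const _
    have hintAB : Integrable
        (fun ω => (∑ p ∈ auxPn n, ∑ q ∈ auxPn n, a p ω * a q ω) / c ^ 2
          - 2 * ((∑ p ∈ auxPn n, a p ω * W ω) / c)) P := by
      apply Integrable.sub
      · exact (integrable_finset_sum _ fun p _ =>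
          integrable_finset_sum _ fun q _ => hIpq p q).div_const _
      · exact ((integrable_finset_sum _ fun p _ => hIpW p).div_const _).const_mul _
    have hintB : Integrable
        (fun ω => 2 * ((∑ p ∈ auxPn n, a p ω * W ω) / c)) P :=
      ((integrable_finset_sum _ fun p _ => hIpW p).div_const _).const_mul _
    have hA : ∫ ω, (∑ p ∈ auxPn n, ∑ q ∈ auxPn n, a p ω * a q ω) / c ^ 2 ∂P
        = (∑ p ∈ auxPn n, ∑ q ∈ auxPn n, ∫ ω, a p ω * a q ω ∂P) / c ^ 2 := by
      rw [integral_div]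
      congr 1
      rw [integral_finset_sum _ (fun p _ => integrable_finset_sum _ fun q _ => hIpq p q)]
      exact Finset.sum_congr rfl fun p _ => integral_finset_sum _ fun q _ => hIpq p q
    have hB : ∫ ω, 2 * ((∑ p ∈ auxPn n, a p ω * W ω) / c) ∂P = 2 * I2 := by
      rw [integral_const_mul, integral_div, integral_finset_sum _ fun p _ => hIpW p]
      have hs : ∑ p ∈ auxPn n, ∫ ω, a p ω * W ω ∂P = c * I2 := by
        rw [Finset.sum_congr rfl fun p hp =>
          key3 p (aux_mem_Pn.mp hp).1 (aux_mem_Pn.mp hp).2.1]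
        rw [Finset.sum_const, aux_card, nsmul_eq_mul, hc]
      rw [hs, mul_div_cancel_left₀ _ hcne]
    have hEq : ∫ ω, (V n ω - W ω) ^ 2 ∂P
        = (∑ p ∈ auxPn n, ∑ q ∈ auxPn n, ∫ ω, a p ω * a q ω ∂P) / c ^ 2 - I2 := by
      calc ∫ ω, (V n ω - W ω) ^ 2 ∂P
          = ∫ ω, ((∑ p ∈ auxPn n, ∑ q ∈ auxPn n, a p ω * a q ω) / c ^ 2
              - 2 * ((∑ p ∈ auxPn n, a p ω * W ω) / c) + W ω ^ 2) ∂P :=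
            integral_congr_ae (ae_of_all _ fun ω => hptw ω)
        _ = (∑ p ∈ auxPn n, ∑ q ∈ auxPn n, ∫ ω, a p ω * a q ω ∂P) / c ^ 2
              - 2 * I2 + I2 := by
            rw [integral_add hintAB hIW2, integral_sub hintA hintB, hA, hB, key1]
        _ = _ := by ring
    have hinner : ∀ p ∈ auxPn n, ∑ q ∈ auxPn n, ∫ ω, a p ω * a q ω ∂P
        ≤ 4 * ((n:ℝ) + 2) + c * I2 := by
      intro p hp
      obtain ⟨hp1, hp2, hp3⟩ := aux_mem_Pn.mp hp
      set sh : ℕ × ℕ → Prop := fun q => p.1 = q.1 ∨ p.1 = q.2 ∨ p.2 = q.1 ∨ p.2 = q.2 with hsh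
      rw [← Finset.sum_filter_add_sum_filter_not (auxPn n) sh]
      have hb1 : ∑ q ∈ (auxPn n).filter sh, ∫ ω, a p ω * a q ω ∂P ≤ 4 * ((n:ℝ) + 2) := by
        have hsub : (auxPn n).filter sh ⊆
            (({p.1, p.2} : Finset ℕ) ×ˢ Finset.Icc 2 (n+1))
              ∪ (Finset.Icc 2 (n+1) ×ˢ ({p.1, p.2} : Finset ℕ)) := by
          intro q hq
          rw [Finset.mem_filter, aux_mem_Pn] at hq
          obtain ⟨⟨hq1, hq2, hq3⟩, hqs⟩ := hq
          rw [Finset.mem_union, Finset.mem_product, Finset.mem_product]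
          simp only [hsh] at hqs
          rcases hqs with h | h | h | h
          · exact Or.inl ⟨by simp [← h], Finset.mem_Icc.mpr ⟨by omega, hq3⟩⟩
          · exact Or.inr ⟨Finset.mem_Icc.mpr ⟨hq1, by omega⟩, by simp [← h]⟩
          · exact Or.inl ⟨by simp [← h], Finset.mem_Icc.mpr ⟨by omega, hq3⟩⟩
          · exact Or.inr ⟨Finset.mem_Icc.mpr ⟨hq1, by omega⟩, by simp [← h]⟩
        have hcardle : (((auxPn n).filter sh).card : ℕ) ≤ 4 * (n + 2) := by
          have h2 : ({p.1, p.2} : Finset ℕ).card ≤ 2 :=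
            le_trans (Finset.card_insert_le _ _) (by simp)
          have hn' : n + 1 + 1 - 2 ≤ n + 2 := by omega
          calc ((auxPn n).filter sh).card
              ≤ ((({p.1, p.2} : Finset ℕ) ×ˢ Finset.Icc 2 (n+1))
                ∪ (Finset.Icc 2 (n+1) ×ˢ ({p.1, p.2} : Finset ℕ))).card :=
                Finset.card_le_card hsub
            _ ≤ (({p.1, p.2} : Finset ℕ) ×ˢ Finset.Icc 2 (n+1)).card
                + (Finset.Icc 2 (n+1) ×ˢ ({p.1, p.2} : Finset ℕ)).card :=
                Finset.card_union_le _ _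
            _ = ({p.1, p.2} : Finset ℕ).card * (n + 1 + 1 - 2)
                + (n + 1 + 1 - 2) * ({p.1, p.2} : Finset ℕ).card := by
                rw [Finset.card_product, Finset.card_product, Nat.card_Icc]
            _ ≤ 2 * (n + 2) + (n + 2) * 2 :=
                Nat.add_le_add (Nat.mul_le_mul h2 hn') (Nat.mul_le_mul hn' h2)
            _ = 4 * (n + 2) := by ring
        calc ∑ q ∈ (auxPn n).filter sh, ∫ ω, a p ω * a q ω ∂P
            ≤ ∑ _q ∈ (auxPn n).filter sh, (1:ℝ) :=
              Finset.sum_le_sum fun q _ => hJ1 p q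
          _ = (((auxPn n).filter sh).card : ℝ) := by simp
          _ ≤ 4 * ((n:ℝ) + 2) := by exact_mod_cast hcardle
      have hb2 : ∑ q ∈ (auxPn n).filter (fun q => ¬ sh q), ∫ ω, a p ω * a q ω ∂P
          ≤ c * I2 := by
        have heach : ∀ q ∈ (auxPn n).filter (fun q => ¬ sh q),
            ∫ ω, a p ω * a q ω ∂P = I2 := by
          intro q hq
          rw [Finset.mem_filter, aux_mem_Pn] at hq
          obtain ⟨⟨hq1, hq2, hq3⟩, hqs⟩ := hq
          simp only [hsh] at hqs
          push_neg at hqs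
          exact key5 p q hp1 hp2 hq1 hq2 hqs.1 hqs.2.1 hqs.2.2.1 hqs.2.2.2
        rw [Finset.sum_congr rfl heach, Finset.sum_const, nsmul_eq_mul]
        have hcardc : ((((auxPn n).filter (fun q => ¬ sh q)).card : ℕ) : ℝ) ≤ c := by
          rw [hc, ← aux_card n]
          exact_mod_cast Finset.card_filter_le _ _
        exact mul_le_mul_of_nonneg_right hcardc hI2nn
      exact add_le_add hb1 hb2
    have hSbound : ∑ p ∈ auxPn n, ∑ q ∈ auxPn n, ∫ ω, a p ω * a q ω ∂P
        ≤ c * (4 * ((n:ℝ) + 2) + c * I2) := by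
      calc ∑ p ∈ auxPn n, ∑ q ∈ auxPn n, ∫ ω, a p ω * a q ω ∂P
          ≤ ∑ _p ∈ auxPn n, (4 * ((n:ℝ) + 2) + c * I2) := Finset.sum_le_sum hinner
        _ = ((auxPn n).card : ℝ) * (4 * ((n:ℝ) + 2) + c * I2) := by
            rw [Finset.sum_const, nsmul_eq_mul]
        _ = c * (4 * ((n:ℝ) + 2) + c * I2) := by rw [aux_card, hc]
    rw [hEq]
    calc (∑ p ∈ auxPn n, ∑ q ∈ auxPn n, ∫ ω, a p ω * a q ω ∂P) / c ^ 2 - I2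
        ≤ (c * (4 * ((n:ℝ) + 2) + c * I2)) / c ^ 2 - I2 := by gcongr
      _ = 4 * ((n:ℝ) + 2) / c := by field_simp; ring
  -- L² convergence
  have hbnd : Tendsto (fun n : ℕ => 4 * ((n:ℝ) + 2) / ((n.choose 2 : ℕ) : ℝ)) atTop (𝓝 0) := by
    have hup : Tendsto (fun n : ℕ => 24 / ((n:ℝ) - 1)) atTop (𝓝 0) := by
      apply Tendsto.div_atTop tendsto_const_nhds
      have := tendsto_atTop_add_const_right atTop (-1 : ℝ) tendsto_natCast_atTop_atTop
      simpa [sub_eq_add_neg] using this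
    apply squeeze_zero' (Eventually.of_forall fun n => by positivity) ?_ hup
    filter_upwards [eventually_ge_atTop 3] with n hn
    have hn3 : (3:ℝ) ≤ (n:ℝ) := by exact_mod_cast hn
    have hcc : ((n.choose 2 : ℕ) : ℝ) = (n:ℝ) * ((n:ℝ) - 1) / 2 := Nat.cast_choose_two (K := ℝ) n
    rw [hcc, div_le_div_iff₀ (by nlinarith) (by nlinarith)]
    nlinarith
  have hL2 : Tendsto (fun n => ∫ ω, (V n ω - W ω) ^ 2 ∂P) atTop (𝓝 0) :=
    squeeze_zero' (Eventually.of_forall fun n => integral_nonneg fun ω => sq_nonneg _)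
      (eventually_atTop.mpr ⟨2, hmain⟩) hbnd
  have hIntD : ∀ n, Integrable (fun ω => (V n ω - W ω) ^ 2) P := fun n =>
    aux_integrable_of_bounded (((hVmeas n).sub hWmeas).pow_const 2).aestronglyMeasurable
      (C := 1) fun ω => by
        rw [Real.norm_eq_abs, abs_of_nonneg (sq_nonneg _)]
        have h1 : |V n ω - W ω| ≤ 1 := by
          rw [abs_sub_le_iff]
          constructor <;> linarith [hV0 n ω, hV1 n ω, hW0 ω, hW1 ω]
        calc (V n ω - W ω) ^ 2 = |V n ω - W ω| ^ 2 := (sq_abs _).symm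
          _ ≤ 1 ^ 2 := pow_le_pow_left₀ (abs_nonneg _) h1 2
          _ = 1 := one_pow 2
  have hTIM : TendstoInMeasure P V atTop W := by
    rw [tendstoInMeasure_iff_dist]
    intro ε hε
    have hub : ∀ n, P {ω | ε ≤ dist (V n ω) (W ω)}
        ≤ ENNReal.ofReal ((∫ ω, (V n ω - W ω) ^ 2 ∂P) / ε ^ 2) := by
      intro n
      have hsub : {ω | ε ≤ dist (V n ω) (W ω)} ⊆ {ω | ε ^ 2 ≤ (V n ω - W ω) ^ 2} := by
        intro ω hω
        simp only [Set.mem_setOf_eq, Real.dist_eq] at hω ⊢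
        calc ε ^ 2 ≤ |V n ω - W ω| ^ 2 := pow_le_pow_left₀ hε.le hω 2
          _ = (V n ω - W ω) ^ 2 := sq_abs _
      have hmark := mul_meas_ge_le_integral_of_nonneg
        (ae_of_all P fun ω => sq_nonneg (V n ω - W ω)) (hIntD n) (ε ^ 2)
      have hε2 : 0 < ε ^ 2 := by positivity
      have hPA : (P {ω | ε ≤ dist (V n ω) (W ω)}).toReal
          ≤ (∫ ω, (V n ω - W ω) ^ 2 ∂P) / ε ^ 2 := by
        have hm1 : (P {ω | ε ≤ dist (V n ω) (W ω)}).toReal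
            ≤ (P {ω | ε ^ 2 ≤ (V n ω - W ω) ^ 2}).toReal :=
          ENNReal.toReal_mono (measure_ne_top _ _) (measure_mono hsub)
        rw [le_div_iff₀ hε2]
        calc (P {ω | ε ≤ dist (V n ω) (W ω)}).toReal * ε ^ 2
            ≤ (P {ω | ε ^ 2 ≤ (V n ω - W ω) ^ 2}).toReal * ε ^ 2 :=
              mul_le_mul_of_nonneg_right hm1 hε2.le
          _ = ε ^ 2 * (P {ω | ε ^ 2 ≤ (V n ω - W ω) ^ 2}).toReal := mul_comm _ _
          _ ≤ _ := hmark
      calc P {ω | ε ≤ dist (V n ω) (W ω)}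
          = ENNReal.ofReal ((P {ω | ε ≤ dist (V n ω) (W ω)}).toReal) :=
            (ENNReal.ofReal_toReal (measure_ne_top _ _)).symm
        _ ≤ ENNReal.ofReal ((∫ ω, (V n ω - W ω) ^ 2 ∂P) / ε ^ 2) :=
            ENNReal.ofReal_le_ofReal hPA
    refine tendsto_of_tendsto_of_tendsto_of_le_of_le tendsto_const_nhds ?_
      (fun n => zero_le) hub
    have h0 : Tendsto (fun n => (∫ ω, (V n ω - W ω) ^ 2 ∂P) / ε ^ 2) atTop (𝓝 0) := by
      simpa using hL2.div_const (ε ^ 2)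
    simpa using ENNReal.tendsto_ofReal h0
  have hfinal := aux_tendsto_integral P V W
    (fun n => (hVmeas n).aestronglyMeasurable) hTIM f
  simp only [hV, hW] at hfinal
  exact hfinal
end

section
/- If C_r(x) := ∫_0^r ρ^{d-1} (1 - F(θρ^β - x)) dρ converges to C(x) < ∞ as r → ∞ for every x, then Δ_r converges in distribution to a random variable Δ whose characteristic function is φ_Δ(t) = ∫ F(dx) exp(-λ c_d C(x)(1 - e^{it})), where c_d is the volume of the (d-1)-dimensional unit sphere. -/
open MeasureTheory ProbabilityTheory Set Filter Complex


noncomputable section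
namespace Stmt17

def pois (c : ℝ) (n : ℕ) : ℝ := Real.exp (-c) * c ^ n / n.factorial

lemma pois_nonneg {c : ℝ} (hc : 0 ≤ c) (n : ℕ) : 0 ≤ pois c n := by
  unfold pois; positivity

lemma continuous_pois (n : ℕ) : Continuous fun c => pois c n := by
  unfold pois; fun_prop

lemma hasSum_pois_mul (c : ℝ) (z : ℂ) :
    HasSum (fun n : ℕ => ((pois c n : ℝ) : ℂ) * z ^ n) (Complex.exp (-(c : ℂ) * (1 - z))) := by
  have h : HasSum (fun n : ℕ => ((c : ℂ) * z) ^ n / n.factorial)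
      (NormedSpace.exp ((c : ℂ) * z)) :=
    NormedSpace.expSeries_div_hasSum_exp ((c : ℂ) * z)
  have h2 := h.mul_left (Complex.exp (-(c : ℂ)))
  have hexp : Complex.exp (-(c : ℂ)) * NormedSpace.exp ((c : ℂ) * z)
      = Complex.exp (-(c : ℂ) * (1 - z)) := by
    rw [← Complex.exp_eq_exp_ℂ, ← Complex.exp_add]; ring_nf
  rw [hexp] at h2
  refine h2.congr_fun fun n => ?_
  unfold pois
  push_cast [Complex.ofReal_exp]
  rw [mul_pow]
  ring

lemma hasSum_pois (c : ℝ) : HasSum (pois c) 1 := by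
  have h := hasSum_pois_mul c 1
  simp only [sub_self, mul_zero, Complex.exp_zero, one_pow, mul_one] at h
  rw [show (1:ℂ) = ((1:ℝ):ℂ) by norm_num] at h
  exact Complex.hasSum_ofReal.mp h

end Stmt17

namespace Stmt17
open scoped Real ENNReal NNReal

lemma norm_aux (x : ℝ) : ‖Complex.exp ((x : ℂ) * I)‖ = 1 := by
  rw [Complex.norm_exp_ofReal_mul_I]

lemma norm_exp_I_mul (c : ℝ) (t : ℝ) : ‖Complex.exp ((I * c) * t)‖ = 1 := by
  have : (I * (c:ℂ)) * (t:ℂ) = ((c * t : ℝ) : ℂ) * I := by push_cast; ring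
  rw [this, norm_aux]

lemma fourier_coeff {a : ℕ → ℝ} (ha : Summable a) (ha0 : ∀ n, 0 ≤ a n) (m : ℕ) :
    ∫ t in Ioc (-π) π,
        (Complex.exp (-(I * t * m)) * ∑' n : ℕ, ((a n : ℝ) : ℂ) * Complex.exp (I * t * n))
      = ((2 * π : ℝ) : ℂ) * a m := by
  have hpi : (-π : ℝ) ≤ π := by linarith [Real.pi_pos]
  set c : ℕ → ℂ := fun n => I * ((n : ℂ) - (m : ℂ)) with hc
  have hpt : ∀ t : ℝ,
      Complex.exp (-(I * t * m)) * ∑' n : ℕ, ((a n : ℝ) : ℂ) * Complex.exp (I * t * n)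
        = ∑' n : ℕ, ((a n : ℝ) : ℂ) * Complex.exp (c n * t) := by
    intro t
    rw [← tsum_mul_left]
    refine tsum_congr fun n => ?_
    have : Complex.exp (-(I * t * m)) * (((a n : ℝ) : ℂ) * Complex.exp (I * t * n))
        = ((a n : ℝ) : ℂ) * (Complex.exp (I * t * n) * Complex.exp (-(I * t * m))) := by ring
    rw [this, ← Complex.exp_add]
    congr 2
    simp only [hc]; ring
  simp only [hpt]
  have hnorm : ∀ (n : ℕ) (t : ℝ), ‖((a n : ℝ) : ℂ) * Complex.exp (c n * t)‖ = a n := by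
    intro n t
    have h2 : Complex.exp (c n * t) = Complex.exp ((((n : ℝ) - m) * t : ℝ) * I) := by
      congr 1; simp only [hc]; push_cast; ring
    rw [norm_mul, h2, norm_aux, mul_one, Complex.norm_real, Real.norm_eq_abs,
      _root_.abs_of_nonneg (ha0 n)]
  rw [MeasureTheory.integral_tsum]
  · have hterm : ∀ n : ℕ, n ≠ m →
        (∫ t in Ioc (-π) π, ((a n : ℝ) : ℂ) * Complex.exp (c n * t)) = 0 := by
      intro n hn
      rw [← intervalIntegral.integral_of_le hpi, intervalIntegral.integral_const_mul]
      have hc0 : c n ≠ 0 := by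
        simp only [hc, mul_ne_zero_iff]
        refine ⟨Complex.I_ne_zero, sub_ne_zero.2 ?_⟩
        exact_mod_cast fun h => hn (Nat.cast_injective h)
      rw [integral_exp_mul_complex hc0]
      have : Complex.exp (c n * (π : ℝ)) = Complex.exp (c n * ((-π : ℝ) : ℝ)) := by
        set k : ℤ := (n : ℤ) - (m : ℤ) with hk
        have key : c n * ((π : ℝ) : ℂ) = c n * (((-π : ℝ)) : ℂ) + (k : ℂ) * (2 * (π : ℂ) * I) := by
          simp only [hc, hk]; push_cast; ring
        rw [key, Complex.exp_add, Complex.exp_int_mul_two_pi_mul_I k, mul_one]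
      rw [this]; simp
    rw [tsum_eq_single m hterm]
    rw [← intervalIntegral.integral_of_le hpi, intervalIntegral.integral_const_mul]
    have : c m = 0 := by simp [hc]
    rw [this]
    simp only [zero_mul, Complex.exp_zero, intervalIntegral.integral_const, mul_one,
      Complex.real_smul]
    push_cast
    ring
  · intro n
    exact (Continuous.aestronglyMeasurable (by fun_prop)).restrict
  · have hcount : ∀ n : ℕ, (∫⁻ t in Ioc (-π) π, ‖((a n : ℝ) : ℂ) * Complex.exp (c n * t)‖₊)
        = ENNReal.ofReal (a n) * ENNReal.ofReal (2 * π) := by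
      intro n
      have : (fun t : ℝ => (‖((a n : ℝ) : ℂ) * Complex.exp (c n * t)‖₊ : ℝ≥0∞))
          = fun _ => ENNReal.ofReal (a n) := by
        funext t
        rw [← enorm_eq_nnnorm, ← ofReal_norm_eq_enorm, hnorm]
      rw [this, lintegral_const, Measure.restrict_apply_univ, Real.volume_Ioc]
      congr 1
      ring_nf
    simp only [enorm_eq_nnnorm, hcount]
    rw [ENNReal.tsum_mul_right, ← ENNReal.ofReal_tsum_of_nonneg ha0 ha]
    exact ENNReal.mul_ne_top ENNReal.ofReal_ne_top ENNReal.ofReal_ne_top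

lemma coeff_unique {a b : ℕ → ℝ} (ha : Summable a) (hb : Summable b)
    (ha0 : ∀ n, 0 ≤ a n) (hb0 : ∀ n, 0 ≤ b n)
    (h : ∀ t : ℝ, ∑' n : ℕ, ((a n : ℝ) : ℂ) * Complex.exp (I * t * n)
      = ∑' n : ℕ, ((b n : ℝ) : ℂ) * Complex.exp (I * t * n)) : a = b := by
  funext m
  have h1 := fourier_coeff ha ha0 m
  have h2 := fourier_coeff hb hb0 m
  simp only [h] at h1
  rw [h1] at h2
  have hπ : ((2 * π : ℝ) : ℂ) ≠ 0 := by
    simp only [ne_eq, Complex.ofReal_eq_zero]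
    positivity
  exact_mod_cast mul_left_cancel₀ hπ h2

end Stmt17

namespace Stmt17
open scoped Real ENNReal NNReal

lemma pois_le_one {c : ℝ} (hc : 0 ≤ c) (n : ℕ) : pois c n ≤ 1 :=
  le_hasSum (hasSum_pois c) n fun i _ => pois_nonneg hc i

lemma norm_exp_I_mul_real (t : ℝ) : ‖Complex.exp (I * (t : ℂ))‖ = 1 := by
  have h : I * (t : ℂ) = ((t : ℝ) : ℂ) * I := by ring
  rw [h, norm_aux]

lemma exp_I_t_n (t : ℝ) (n : ℕ) :
    Complex.exp (I * (t : ℂ) * (n : ℂ)) = Complex.exp (I * (t : ℂ)) ^ n := by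
  rw [← Complex.exp_nat_mul]; congr 1; ring

section Mixture
variable {μ : Measure ℝ} [IsProbabilityMeasure μ] {a : ℝ → ℝ}

lemma integrable_pois (hmeas : Measurable a) (h0 : ∀ x, 0 ≤ a x) (n : ℕ) :
    Integrable (fun x => pois (a x) n) μ := by
  refine Integrable.mono' (integrable_const 1)
    (((continuous_pois n).measurable.comp hmeas).aestronglyMeasurable) ?_
  filter_upwards with x
  rw [Real.norm_eq_abs, _root_.abs_of_nonneg (pois_nonneg (h0 x) n)]
  exact pois_le_one (h0 x) n

lemma lintegral_pois (hmeas : Measurable a) (h0 : ∀ x, 0 ≤ a x) (n : ℕ) :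
    (∫⁻ x, ENNReal.ofReal (pois (a x) n) ∂μ)
      = ENNReal.ofReal (∫ x, pois (a x) n ∂μ) :=
  (ofReal_integral_eq_lintegral_ofReal (integrable_pois hmeas h0 n)
    (Filter.Eventually.of_forall fun x => pois_nonneg (h0 x) n)).symm

lemma tsum_ofReal_W (hmeas : Measurable a) (h0 : ∀ x, 0 ≤ a x) :
    ∑' n : ℕ, ENNReal.ofReal (∫ x, pois (a x) n ∂μ) = 1 := by
  have h1 : ∀ n : ℕ, ENNReal.ofReal (∫ x, pois (a x) n ∂μ)
      = ∫⁻ x, ENNReal.ofReal (pois (a x) n) ∂μ := fun n => (lintegral_pois hmeas h0 n).symm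
  simp only [h1]
  have hmeasfun : ∀ n : ℕ, AEMeasurable (fun x => ENNReal.ofReal (pois (a x) n)) μ := fun n =>
    (ENNReal.measurable_ofReal.comp ((continuous_pois n).measurable.comp hmeas)).aemeasurable
  rw [← lintegral_tsum hmeasfun]
  have h2 : ∀ x : ℝ, ∑' n : ℕ, ENNReal.ofReal (pois (a x) n) = 1 := by
    intro x
    rw [← ENNReal.ofReal_tsum_of_nonneg (fun n => pois_nonneg (h0 x) n)
      (hasSum_pois (a x)).summable, (hasSum_pois (a x)).tsum_eq, ENNReal.ofReal_one]
  simp only [h2, lintegral_one, measure_univ]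

lemma W_nonneg (h0 : ∀ x, 0 ≤ a x) (n : ℕ) : 0 ≤ ∫ x, pois (a x) n ∂μ :=
  integral_nonneg fun x => pois_nonneg (h0 x) n

lemma summable_W (hmeas : Measurable a) (h0 : ∀ x, 0 ≤ a x) :
    Summable (fun n : ℕ => ∫ x, pois (a x) n ∂μ) := by
  have h := ENNReal.summable_toReal (f := fun n : ℕ => ENNReal.ofReal (∫ x, pois (a x) n ∂μ))
    (by rw [tsum_ofReal_W hmeas h0]; exact ENNReal.one_ne_top)
  refine h.congr fun n => ?_
  rw [ENNReal.toReal_ofReal (W_nonneg h0 n)]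

lemma tsum_W (hmeas : Measurable a) (h0 : ∀ x, 0 ≤ a x) :
    ∑' n : ℕ, ∫ x, pois (a x) n ∂μ = 1 := by
  have h := ENNReal.tsum_toReal_eq (f := fun n : ℕ => ENNReal.ofReal (∫ x, pois (a x) n ∂μ))
    (fun n => ENNReal.ofReal_ne_top)
  rw [tsum_ofReal_W hmeas h0] at h
  simp only [ENNReal.toReal_one] at h
  rw [h]
  exact tsum_congr fun n => (ENNReal.toReal_ofReal (W_nonneg (μ := μ) h0 n)).symm

lemma mixture_cf (hmeas : Measurable a) (h0 : ∀ x, 0 ≤ a x) (t : ℝ) :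
    ∫ x, Complex.exp (-((a x : ℝ) : ℂ) * (1 - Complex.exp (I * (t : ℂ)))) ∂μ
      = ∑' n : ℕ, ((∫ x, pois (a x) n ∂μ : ℝ) : ℂ) * Complex.exp (I * (t : ℂ) * (n : ℂ)) := by
  set z : ℂ := Complex.exp (I * (t : ℂ)) with hzdef
  have hz1 : ‖z‖ = 1 := norm_exp_I_mul_real t
  have hnorm : ∀ (x : ℝ) (n : ℕ), ‖((pois (a x) n : ℝ) : ℂ) * z ^ n‖ = pois (a x) n := by
    intro x n
    rw [norm_mul, norm_pow, hz1, one_pow, mul_one, Complex.norm_real, Real.norm_eq_abs,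
      _root_.abs_of_nonneg (pois_nonneg (h0 x) n)]
  have hpt : (fun x => Complex.exp (-((a x : ℝ) : ℂ) * (1 - z)))
      = fun x => ∑' n : ℕ, ((pois (a x) n : ℝ) : ℂ) * z ^ n := by
    funext x
    exact (hasSum_pois_mul (a x) z).tsum_eq.symm
  rw [hpt, MeasureTheory.integral_tsum]
  · refine tsum_congr fun n => ?_
    have hsmul : (fun x => ((pois (a x) n : ℝ) : ℂ) * z ^ n)
        = fun x => (pois (a x) n) • (z ^ n) := by
      funext x; rw [Complex.real_smul]
    rw [hsmul, integral_smul_const, Complex.real_smul, exp_I_t_n]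
  · intro n
    exact ((Complex.measurable_ofReal.comp
      ((continuous_pois n).measurable.comp hmeas)).mul_const _).aestronglyMeasurable
  · have : ∀ n : ℕ, (∫⁻ x, ‖((pois (a x) n : ℝ) : ℂ) * z ^ n‖₊ ∂μ)
        = ENNReal.ofReal (∫ x, pois (a x) n ∂μ) := by
      intro n
      rw [← lintegral_pois hmeas h0 n]
      refine lintegral_congr fun x => ?_
      rw [← enorm_eq_nnnorm, ← ofReal_norm_eq_enorm, hnorm]
    simp only [enorm_eq_nnnorm, this]
    rw [tsum_ofReal_W hmeas h0]
    exact ENNReal.one_ne_top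

end Mixture
end Stmt17

namespace Stmt17
open scoped Real ENNReal NNReal

lemma norm_exp_le_one {c : ℝ} (hc : 0 ≤ c) (t : ℝ) :
    ‖Complex.exp (-((c : ℝ) : ℂ) * (1 - Complex.exp (I * (t : ℂ))))‖ ≤ 1 := by
  rw [Complex.norm_exp, Real.exp_le_one_iff]
  have hre : (-((c : ℝ) : ℂ) * (1 - Complex.exp (I * (t : ℂ)))).re
      = -c * (1 - Real.cos t) := by
    rw [show I * (t : ℂ) = (t : ℂ) * I by ring, Complex.exp_mul_I]
    simp [Complex.mul_re, Complex.sub_re, Complex.add_re, Complex.one_re, Complex.one_im,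
      Complex.ofReal_re, Complex.ofReal_im, Complex.mul_im, Complex.cos_ofReal_re,
      Complex.sin_ofReal_re, Complex.I_re, Complex.I_im, Complex.cos_ofReal_im,
      Complex.sin_ofReal_im]
  rw [hre]
  have h1 := Real.cos_le_one t
  nlinarith

lemma aemeasurable_of_cf {Ω : Type*} [MeasurableSpace Ω] (P : Measure Ω) (Y : Ω → ℕ) (t : ℝ)
    (hinj : ∀ m n : ℕ, Complex.exp (I * (t : ℂ) * m) = Complex.exp (I * (t : ℂ) * n) → m = n)
    (h0 : (∫ ω, Complex.exp (I * (t : ℂ) * (Y ω : ℂ)) ∂P) ≠ 0) : AEMeasurable Y P := by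
  classical
  have hInt : Integrable (fun ω => Complex.exp (I * (t : ℂ) * (Y ω : ℂ))) P := by
    by_contra hni
    exact h0 (integral_undef hni)
  obtain ⟨g, hg, hge⟩ := hInt.aestronglyMeasurable
  set R : Set ℂ := Set.range (fun n : ℕ => Complex.exp (I * (t : ℂ) * n)) with hR
  have hRc : R.Countable := countable_range _
  set u : ℂ → ℕ := fun z =>
    if hz : ∃ n : ℕ, Complex.exp (I * (t : ℂ) * n) = z then hz.choose else 0 with hu
  have hum : Measurable u := by
    refine measurable_to_countable' fun n => ?_
    by_cases hn : n = 0
    · subst hn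
      have hset : u ⁻¹' {0} = (u ⁻¹' {0} ∩ R) ∪ Rᶜ := by
        ext z
        simp only [mem_union, mem_inter_iff, mem_preimage, mem_singleton_iff, mem_compl_iff]
        constructor
        · intro hz
          by_cases h : z ∈ R
          · exact Or.inl ⟨hz, h⟩
          · exact Or.inr h
        · rintro (⟨hz, _⟩ | hz)
          · exact hz
          · simp only [hu]
            rw [dif_neg]
            rintro ⟨k, hk⟩
            exact hz ⟨k, hk⟩
      rw [hset]
      exact ((hRc.mono inter_subset_right).measurableSet).union hRc.measurableSet.compl
    · have hsub : u ⁻¹' {n} ⊆ R := by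
        intro z hz
        simp only [mem_preimage, mem_singleton_iff, hu] at hz
        by_cases h : ∃ k : ℕ, Complex.exp (I * (t : ℂ) * k) = z
        · obtain ⟨k, hk⟩ := h
          exact ⟨k, hk⟩
        · rw [dif_neg h] at hz
          exact absurd hz.symm hn
      exact (hRc.mono hsub).measurableSet
  refine ⟨u ∘ g, hum.comp hg.measurable, ?_⟩
  filter_upwards [hge] with ω hω
  have hex : ∃ n : ℕ, Complex.exp (I * (t : ℂ) * n) = g ω := ⟨Y ω, hω⟩
  simp only [Function.comp_apply, hu]
  rw [dif_pos hex]
  exact (hinj _ _ (hω.trans hex.choose_spec.symm))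

lemma exists_good_t {φ : ℝ → ℂ} (hφ : Continuous φ) (h1 : φ 0 = 1) :
    ∃ t : ℝ, φ t ≠ 0 ∧
      ∀ m n : ℕ, Complex.exp (I * (t : ℂ) * m) = Complex.exp (I * (t : ℂ) * n) → m = n := by
  have hopen : IsOpen {t : ℝ | φ t ≠ 0} := (isOpen_compl_singleton).preimage hφ
  have h0mem : (0 : ℝ) ∈ {t : ℝ | φ t ≠ 0} := by simp [h1]
  obtain ⟨δ, hδ, hball⟩ := Metric.isOpen_iff.1 hopen 0 h0mem
  set B : Set ℝ :=
    Set.range (fun p : ℕ × ℕ × ℤ => 2 * π * (p.2.2 : ℝ) / ((p.1 : ℝ) - (p.2.1 : ℝ))) with hB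
  have hBc : B.Countable := countable_range _
  have hne : (Ioo (0 : ℝ) δ \ B).Nonempty := by
    rw [nonempty_iff_ne_empty]
    intro hcon
    have hsub : Ioo (0 : ℝ) δ ⊆ B := by
      intro x hx
      by_contra hxB
      exact (eq_empty_iff_forall_notMem.1 hcon x) ⟨hx, hxB⟩
    have h2 : volume (Ioo (0 : ℝ) δ) = 0 := measure_mono_null hsub (hBc.measure_zero _)
    rw [Real.volume_Ioo] at h2
    simp only [sub_zero, ENNReal.ofReal_eq_zero] at h2
    linarith
  obtain ⟨t, ⟨ht1, ht2⟩, htB⟩ := hne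
  refine ⟨t, hball (by rw [Metric.mem_ball, Real.dist_eq, sub_zero, abs_of_pos ht1]; exact ht2),
    ?_⟩
  intro m n hmn
  by_contra hne'
  obtain ⟨k, hk⟩ := Complex.exp_eq_exp_iff_exists_int.1 hmn
  have h2 : I * ((t * m : ℝ) : ℂ) = I * ((t * n + 2 * π * k : ℝ) : ℂ) := by
    push_cast
    linear_combination hk
  have hreal : (t * m : ℝ) = t * n + 2 * π * k := by
    exact_mod_cast mul_left_cancel₀ Complex.I_ne_zero h2
  have hmn' : (m : ℝ) - (n : ℝ) ≠ 0 := by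
    rw [sub_ne_zero]
    exact_mod_cast hne'
  refine htB ⟨(m, n, k), ?_⟩
  show 2 * π * (k : ℝ) / ((m : ℝ) - (n : ℝ)) = t
  field_simp
  linarith

end Stmt17

namespace Stmt17
open scoped Real ENNReal NNReal

def Gf (g : ℕ → ℝ) (c : ℝ) : ℝ := ∑' n : ℕ, pois c n * g n

section G
variable {g : ℕ → ℝ} {K : ℝ}

lemma K_nonneg (hg : ∀ n, |g n| ≤ K) : 0 ≤ K := le_trans (abs_nonneg _) (hg 0)

lemma summable_pois_mul (hg : ∀ n, |g n| ≤ K) {c : ℝ} (hc : 0 ≤ c) : Summable (fun n : ℕ => pois c n * g n) := by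
  refine Summable.of_norm_bounded (g := fun n => pois c n * K)
    (((hasSum_pois c).summable).mul_right K) fun n => ?_
  rw [Real.norm_eq_abs, abs_mul, _root_.abs_of_nonneg (pois_nonneg hc n)]
  exact mul_le_mul_of_nonneg_left (hg n) (pois_nonneg hc n)

lemma abs_Gf_le (hg : ∀ n, |g n| ≤ K) {c : ℝ} (hc : 0 ≤ c) : ‖Gf g c‖ ≤ K := by
  have h1 : ‖Gf g c‖ ≤ ∑' n : ℕ, ‖pois c n * g n‖ :=
    norm_tsum_le_tsum_norm (by
      refine Summable.of_nonneg_of_le (fun n => norm_nonneg _) (fun n => ?_)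
        (((hasSum_pois c).summable).mul_right K)
      rw [Real.norm_eq_abs, abs_mul, _root_.abs_of_nonneg (pois_nonneg hc n)]
      exact mul_le_mul_of_nonneg_left (hg n) (pois_nonneg hc n))
  refine h1.trans ?_
  have h2 : ∑' n : ℕ, ‖pois c n * g n‖ ≤ ∑' n : ℕ, pois c n * K := by
    refine Summable.tsum_le_tsum (fun n => ?_) ?_ (((hasSum_pois c).summable).mul_right K)
    · rw [Real.norm_eq_abs, abs_mul, _root_.abs_of_nonneg (pois_nonneg hc n)]
      exact mul_le_mul_of_nonneg_left (hg n) (pois_nonneg hc n)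
    · refine Summable.of_nonneg_of_le (fun n => norm_nonneg _) (fun n => ?_)
        (((hasSum_pois c).summable).mul_right K)
      rw [Real.norm_eq_abs, abs_mul, _root_.abs_of_nonneg (pois_nonneg hc n)]
      exact mul_le_mul_of_nonneg_left (hg n) (pois_nonneg hc n)
  refine h2.trans ?_
  rw [tsum_mul_right, (hasSum_pois c).tsum_eq, one_mul]

lemma continuousOn_Gf (hg : ∀ n, |g n| ≤ K) (M : ℝ) (hM : 0 ≤ M) : ContinuousOn (Gf g) (Icc 0 M) := by
  have hu : Summable (fun n : ℕ => M ^ n / n.factorial * K) :=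
    (Real.summable_pow_div_factorial M).mul_right K
  have htu := tendstoUniformlyOn_tsum (f := fun (n : ℕ) (c : ℝ) => pois c n * g n) hu
    (s := Icc 0 M) ?_
  · exact htu.continuousOn (Filter.Eventually.of_forall fun N =>
      (continuous_finset_sum _ fun i _ => (continuous_pois i).mul continuous_const).continuousOn).frequently
  · intro n c hc
    rw [Real.norm_eq_abs, abs_mul, _root_.abs_of_nonneg (pois_nonneg hc.1 n)]
    have hp : pois c n ≤ M ^ n / n.factorial := by
      unfold pois
      rw [div_le_div_iff_of_pos_right (by exact_mod_cast Nat.factorial_pos n)]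
      calc Real.exp (-c) * c ^ n ≤ 1 * c ^ n := by
            refine mul_le_mul_of_nonneg_right ?_ (pow_nonneg hc.1 n)
            rw [Real.exp_le_one_iff]; linarith [hc.1]
        _ = c ^ n := one_mul _
        _ ≤ M ^ n := pow_le_pow_left₀ hc.1 hc.2 n
    calc pois c n * |g n| ≤ pois c n * K := mul_le_mul_of_nonneg_left (hg n) (pois_nonneg hc.1 n)
      _ ≤ M ^ n / n.factorial * K :=
          mul_le_mul_of_nonneg_right hp (K_nonneg hg)

lemma measurable_Gf (hg : ∀ n, |g n| ≤ K) {a : ℝ → ℝ} (hmeas : Measurable a) (h0 : ∀ x, 0 ≤ a x) :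
    Measurable (fun x => Gf g (a x)) := by
  refine measurable_of_tendsto_metrizable
    (f := fun (N : ℕ) (x : ℝ) => ∑ n ∈ Finset.range N, pois (a x) n * g n)
    (fun N => Finset.measurable_sum _ fun n _ =>
      ((continuous_pois n).measurable.comp hmeas).mul measurable_const) ?_
  rw [tendsto_pi_nhds]
  intro x
  exact (summable_pois_mul hg (h0 x)).hasSum.tendsto_sum_nat

variable {μ : Measure ℝ} [IsProbabilityMeasure μ]

lemma tsum_W_mul_g (hg : ∀ n, |g n| ≤ K) {a : ℝ → ℝ} (hmeas : Measurable a) (h0 : ∀ x, 0 ≤ a x) :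
    ∑' n : ℕ, (∫ x, pois (a x) n ∂μ) * g n = ∫ x, Gf g (a x) ∂μ := by
  unfold Gf
  rw [MeasureTheory.integral_tsum]
  · exact tsum_congr fun n => (integral_mul_const (g n) _).symm
  · intro n
    exact (((continuous_pois n).measurable.comp hmeas).mul measurable_const).aestronglyMeasurable
  · refine ne_top_of_le_ne_top (b := ENNReal.ofReal K) ?_ ?_
    swap
    · calc ∑' n : ℕ, ∫⁻ x, ‖pois (a x) n * g n‖₊ ∂μ
          ≤ ∑' n : ℕ, ∫⁻ x, ENNReal.ofReal (pois (a x) n) * ENNReal.ofReal K ∂μ := by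
            refine ENNReal.tsum_le_tsum fun n => lintegral_mono fun x => ?_
            rw [← enorm_eq_nnnorm, ← ofReal_norm_eq_enorm, Real.norm_eq_abs, abs_mul,
              _root_.abs_of_nonneg (pois_nonneg (h0 x) n), ← ENNReal.ofReal_mul
              (pois_nonneg (h0 x) n)]
            exact ENNReal.ofReal_le_ofReal
              (mul_le_mul_of_nonneg_left (hg n) (pois_nonneg (h0 x) n))
        _ = (∑' n : ℕ, ∫⁻ x, ENNReal.ofReal (pois (a x) n) ∂μ) * ENNReal.ofReal K := by
            rw [← ENNReal.tsum_mul_right]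
            exact tsum_congr fun n => lintegral_mul_const _
              (ENNReal.measurable_ofReal.comp ((continuous_pois n).measurable.comp hmeas))
        _ = ENNReal.ofReal K := by
            have : ∀ n : ℕ, (∫⁻ x, ENNReal.ofReal (pois (a x) n) ∂μ)
                = ENNReal.ofReal (∫ x, pois (a x) n ∂μ) := fun n => lintegral_pois hmeas h0 n
            simp only [this, tsum_ofReal_W hmeas h0, one_mul]
    · exact ENNReal.ofReal_ne_top

end G
end Stmt17

section
open Stmt17
open scoped Real ENNReal NNReal

/-- In the spatial threshold model, if
`C_r(x) = ∫_0^r ρ^{d-1}(1 - F(θρ^β - x)) dρ → C(x) < ∞` as `r → ∞` for every `x`, then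
`Δ_r` converges in distribution to a random variable `Δ` with characteristic function
`φ_Δ(t) = ∫ exp(-Λ c_d C(x)(1 - e^{it})) μ(dx)`, where `c_d` is the volume of the
`(d-1)`-dimensional unit sphere.  (Conditionally on `X_0 = x`, `Δ_r` is Poisson with
parameter `Λ c_d C_r(x)`; this is encoded by the characteristic function identity
`hcf`.) -/
theorem stmt_17 {Ω : Type*} [MeasurableSpace Ω] (P : Measure Ω) [IsProbabilityMeasure P]
    (d : ℕ) (hd : 1 ≤ d) (μ : Measure ℝ) [IsProbabilityMeasure μ]
    (Λ θ β cd : ℝ) (hΛ : 0 < Λ) (hθ : 0 < θ)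
    (hcd : cd = (d : ℝ) *
      (volume (Metric.ball (0 : EuclideanSpace ℝ (Fin d)) 1)).toReal)
    (F : ℝ → ℝ) (hF : F = fun y => (μ (Iic y)).toReal)
    (Cr : ℝ → ℝ → ℝ)
    (hCr : ∀ r x, Cr r x = ∫ ρ in (0 : ℝ)..r, ρ ^ (d - 1) * (1 - F (θ * ρ ^ β - x)))
    (Δ : ℝ → Ω → ℕ)
    -- conditionally on `X_0 = x`, `Δ_r` is Poisson with parameter `Λ c_d C_r(x)`:
    (hcf : ∀ t r : ℝ, ∫ ω, Complex.exp (I * t * (Δ r ω : ℂ)) ∂P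
      = ∫ x, Complex.exp (-(Λ * cd * Cr r x : ℂ) * (1 - Complex.exp (I * t))) ∂μ)
    (C : ℝ → ℝ) (hC : ∀ x, Tendsto (fun r => Cr r x) atTop (nhds (C x))) :
    ∃ ν : Measure ℝ, IsProbabilityMeasure ν ∧
      (∀ t : ℝ, ∫ y, Complex.exp (I * t * (y : ℂ)) ∂ν
        = ∫ x, Complex.exp (-(Λ * cd * C x : ℂ) * (1 - Complex.exp (I * t))) ∂μ) ∧
      (∀ f : BoundedContinuousFunction ℝ ℝ,
        Tendsto (fun r : ℝ => ∫ ω, f (Δ r ω : ℝ) ∂P) atTop (nhds (∫ y, f y ∂ν))) := by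
  classical
  have hcd0 : 0 ≤ cd := by rw [hcd]; positivity
  have hΛcd : 0 ≤ Λ * cd := mul_nonneg hΛ.le hcd0
  have hcastCr : ∀ r x : ℝ, ((Λ : ℂ) * (cd : ℂ) * ((Cr r x : ℝ) : ℂ))
      = (((Λ * cd * Cr r x : ℝ)) : ℂ) := fun r x => by push_cast; ring
  have hcastC : ∀ x : ℝ, ((Λ : ℂ) * (cd : ℂ) * ((C x : ℝ) : ℂ))
      = (((Λ * cd * C x : ℝ)) : ℂ) := fun x => by push_cast; ring
  have hcf' : ∀ t r : ℝ, (∫ ω, Complex.exp (I * (t : ℂ) * (Δ r ω : ℂ)) ∂P)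
      = ∫ x, Complex.exp (-((Λ * cd * Cr r x : ℝ) : ℂ) * (1 - Complex.exp (I * (t : ℂ)))) ∂μ := by
    intro t r
    rw [hcf t r]
    refine integral_congr_ae (Filter.Eventually.of_forall fun x => ?_)
    simp only [Complex.ofReal_mul]
  -- facts about F
  have hFmono : Monotone F := by
    intro y y' hy
    rw [hF]
    exact ENNReal.toReal_mono (measure_ne_top μ _) (measure_mono (Iic_subset_Iic.2 hy))
  have hFmeas : Measurable F := hFmono.measurable
  have hFle1 : ∀ y, F y ≤ 1 := by
    intro y
    rw [hF]
    calc (μ (Iic y)).toReal ≤ (μ univ).toReal :=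
          ENNReal.toReal_mono (measure_ne_top μ _) (measure_mono (subset_univ _))
      _ = 1 := by rw [measure_univ, ENNReal.toReal_one]
  -- measurability of rpow
  have hrpow : Measurable fun ρ : ℝ => ρ ^ β := by
    have heq : (fun ρ : ℝ => ρ ^ β) = fun ρ =>
        if 0 < ρ then Real.exp (Real.log ρ * β)
        else if ρ < 0 then Real.exp (Real.log ρ * β) * Real.cos (β * π) else (0 : ℝ) ^ β := by
      funext ρ
      rcases lt_trichotomy ρ 0 with h | h | h
      · rw [if_neg (by linarith), if_pos h, Real.rpow_def_of_neg h, mul_comm β π]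
      · subst h; rw [if_neg (lt_irrefl _), if_neg (lt_irrefl _)]
      · rw [if_pos h, Real.rpow_def_of_pos h]
    rw [heq]
    refine Measurable.ite measurableSet_Ioi ((Real.measurable_log.mul measurable_const).exp) ?_
    exact Measurable.ite measurableSet_Iio
      (((Real.measurable_log.mul measurable_const).exp).mul measurable_const) measurable_const
  -- facts about Cr
  have hCrmeas : ∀ r : ℝ, 0 ≤ r → Measurable (fun x => Cr r x) := by
    intro r hr
    have h1 : (fun x => Cr r x)
        = fun x => ∫ ρ in Ioc (0 : ℝ) r, ρ ^ (d - 1) * (1 - F (θ * ρ ^ β - x)) := by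
      funext x
      rw [hCr, intervalIntegral.integral_of_le hr]
    rw [h1]
    have hsm : StronglyMeasurable
        (Function.uncurry (fun (x ρ : ℝ) => ρ ^ (d - 1) * (1 - F (θ * ρ ^ β - x)))) := by
      refine Measurable.stronglyMeasurable ?_
      refine Measurable.mul (measurable_snd.pow_const _) ?_
      refine Measurable.sub measurable_const ?_
      exact hFmeas.comp
        (((measurable_const.mul (hrpow.comp measurable_snd))).sub measurable_fst)
    exact hsm.integral_prod_right'.measurable
  have hCrnn : ∀ r : ℝ, 0 ≤ r → ∀ x, 0 ≤ Cr r x := by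
    intro r hr x
    rw [hCr]
    refine intervalIntegral.integral_nonneg hr fun u hu => ?_
    have h1 : (0 : ℝ) ≤ u ^ (d - 1) := pow_nonneg hu.1 _
    have h2 : F (θ * u ^ β - x) ≤ 1 := hFle1 _
    nlinarith
  have hCnn : ∀ x, 0 ≤ C x := by
    intro x
    refine ge_of_tendsto (hC x) ?_
    filter_upwards [eventually_ge_atTop (0 : ℝ)] with r hr
    exact hCrnn r hr x
  have hCmeas : Measurable C := by
    refine measurable_of_tendsto_metrizable (f := fun (n : ℕ) (x : ℝ) => Cr n x)
      (fun n => hCrmeas n (Nat.cast_nonneg n)) (tendsto_pi_nhds.2 fun x => ?_)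
    exact (hC x).comp tendsto_natCast_atTop_atTop
  -- the limiting weights
  set W : ℕ → ℝ := fun n => ∫ x, Stmt17.pois (Λ * cd * C x) n ∂μ with hWdef
  have haLmeas : Measurable (fun x => Λ * cd * C x) := measurable_const.mul hCmeas
  have haLnn : ∀ x, 0 ≤ Λ * cd * C x := fun x => mul_nonneg hΛcd (hCnn x)
  have hWnn : ∀ n, 0 ≤ W n := fun n => W_nonneg haLnn n
  have hWsum : ∑' n, ENNReal.ofReal (W n) = 1 := tsum_ofReal_W haLmeas haLnn
  -- the limit measure
  set ν : Measure ℝ :=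
    Measure.sum (fun n : ℕ => ENNReal.ofReal (W n) • Measure.dirac ((n : ℕ) : ℝ)) with hνdef
  have hνprob : IsProbabilityMeasure ν := by
    constructor
    rw [hνdef, Measure.sum_apply _ MeasurableSet.univ]
    simp only [Measure.smul_apply, smul_eq_mul]
    calc ∑' n : ℕ, ENNReal.ofReal (W n) * Measure.dirac ((n : ℕ) : ℝ) univ
        = ∑' n : ℕ, ENNReal.ofReal (W n) := by
          refine tsum_congr fun n => ?_
          rw [Measure.dirac_apply_of_mem (mem_univ _), mul_one]
      _ = 1 := hWsum
  -- integral over ν for ℂ-valued integrable functions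
  have hνint : ∀ (h : ℝ → ℂ), Integrable h ν → ∫ y, h y ∂ν = ∑' n : ℕ, W n • h ((n : ℕ) : ℝ) := by
    intro h hint
    rw [hνdef, integral_sum_measure (hνdef ▸ hint)]
    refine tsum_congr fun n => ?_
    rw [integral_smul_measure, integral_dirac, ENNReal.toReal_ofReal (hWnn n)]
  have hνintR : ∀ (h : ℝ → ℝ), Integrable h ν → ∫ y, h y ∂ν = ∑' n : ℕ, W n • h ((n : ℕ) : ℝ) := by
    intro h hint
    rw [hνdef, integral_sum_measure (hνdef ▸ hint)]
    refine tsum_congr fun n => ?_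
    rw [integral_smul_measure, integral_dirac, ENNReal.toReal_ofReal (hWnn n)]
  refine ⟨ν, hνprob, ?_, ?_⟩
  · -- characteristic function of ν
    intro t
    have hint : Integrable (fun y : ℝ => Complex.exp (I * t * (y : ℂ))) ν := by
      refine Integrable.mono' (integrable_const 1) ?_ ?_
      · exact (Complex.measurable_exp.comp
          ((measurable_const.mul Complex.measurable_ofReal))).aestronglyMeasurable
      · filter_upwards with y
        have : I * (t : ℂ) * (y : ℂ) = I * ((t * y : ℝ) : ℂ) := by push_cast; ring
        rw [this]
        rw [show I * ((t * y : ℝ) : ℂ) = (((t * y : ℝ)) : ℂ) * I by ring, norm_aux]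
    have hgoal : ∫ x, Complex.exp (-((Λ * cd * C x : ℝ) : ℂ) * (1 - Complex.exp (I * (t : ℂ)))) ∂μ
        = ∫ x, Complex.exp (-(((Λ : ℂ) * (cd : ℂ) * ((C x : ℝ) : ℂ)))
            * (1 - Complex.exp (I * (t : ℂ)))) ∂μ := by
      refine integral_congr_ae (Filter.Eventually.of_forall fun x => ?_)
      simp only [Complex.ofReal_mul]
    rw [hνint _ hint, ← hgoal, mixture_cf haLmeas haLnn t]
    refine (tsum_congr fun n => ?_).symm
    rw [Complex.real_smul]
    push_cast
    ring_nf
    simp only [hWdef]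
    ring
  · -- convergence in distribution
    intro f
    set g : ℕ → ℝ := fun n => f ((n : ℕ) : ℝ) with hgdef
    have hg : ∀ n, |g n| ≤ ‖f‖ := fun n => by
      rw [← Real.norm_eq_abs]; exact f.norm_coe_le_norm _
    -- identify the law of Δ r for r ≥ 0
    have hkey : ∀ r : ℝ, 0 ≤ r →
        ∫ ω, f ((Δ r ω : ℕ) : ℝ) ∂P
          = ∫ x, Gf g (Λ * cd * Cr r x) ∂μ := by
      intro r hr
      have harmeas : Measurable (fun x => Λ * cd * Cr r x) := measurable_const.mul (hCrmeas r hr)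
      have harnn : ∀ x, 0 ≤ Λ * cd * Cr r x := fun x => mul_nonneg hΛcd (hCrnn r hr x)
      -- the characteristic function of Δ r, as a function of t
      have hφcont : Continuous (fun t : ℝ => ∫ x, Complex.exp (-((Λ * cd * Cr r x : ℝ) : ℂ)
          * (1 - Complex.exp (I * (t : ℂ)))) ∂μ) := by
        refine continuous_of_dominated ?_ ?_ (integrable_const 1) ?_
        · intro t
          exact (Complex.measurable_exp.comp
            (((Complex.measurable_ofReal.comp harmeas).neg).mul_const _)).aestronglyMeasurable
        · intro t
          filter_upwards with x
          exact norm_exp_le_one (harnn x) t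
        · filter_upwards with x
          fun_prop
      have hφ0 : (fun t : ℝ => ∫ x, Complex.exp (-((Λ * cd * Cr r x : ℝ) : ℂ)
          * (1 - Complex.exp (I * (t : ℂ)))) ∂μ) 0 = 1 := by
        simp only [Complex.ofReal_zero, mul_zero, Complex.exp_zero, sub_self, neg_mul,
          neg_zero, integral_const, measure_univ, ENNReal.toReal_one, one_smul, probReal_univ]
      obtain ⟨t₀, ht₀, hinj⟩ := exists_good_t hφcont hφ0
      have hmeasΔ : AEMeasurable (Δ r) P := by
        refine aemeasurable_of_cf P (Δ r) t₀ hinj ?_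
        rw [hcf' t₀ r]
        exact ht₀
      -- the law of Δ r
      set κ : Measure ℕ := P.map (Δ r) with hκdef
      haveI hκprob : IsProbabilityMeasure κ := Measure.isProbabilityMeasure_map hmeasΔ
      set p : ℕ → ℝ := fun n => (κ {n}).toReal with hpdef
      have hpsum : ∑' n : ℕ, κ {n} = 1 := by
        have h := Measure.tsum_indicator_apply_singleton κ univ MeasurableSet.univ
        simpa [measure_univ] using h
      have hpsummable : Summable p :=
        ENNReal.summable_toReal (by rw [hpsum]; exact ENNReal.one_ne_top)
      -- cf identity for κ
      have hκcf : ∀ t : ℝ, ∑' n : ℕ, ((p n : ℝ) : ℂ) * Complex.exp (I * (t : ℂ) * (n : ℂ))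
          = ∑' n : ℕ, ((∫ x, Stmt17.pois (Λ * cd * Cr r x) n ∂μ : ℝ) : ℂ)
            * Complex.exp (I * (t : ℂ) * (n : ℂ)) := by
        intro t
        have h1 : ∫ ω, Complex.exp (I * (t : ℂ) * ((Δ r ω : ℕ) : ℂ)) ∂P
            = ∫ n : ℕ, Complex.exp (I * (t : ℂ) * (n : ℂ)) ∂κ := by
          rw [hκdef, integral_map hmeasΔ (measurable_from_nat.aestronglyMeasurable)]
        have h2 : Integrable (fun n : ℕ => Complex.exp (I * (t : ℂ) * (n : ℂ))) κ := by
          refine Integrable.mono' (integrable_const 1)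
            measurable_from_nat.aestronglyMeasurable ?_
          filter_upwards with n
          rw [show I * (t : ℂ) * (n : ℂ) = (((t * n : ℝ)) : ℂ) * I by push_cast; ring, norm_aux]
        have h3 := integral_countable' h2
        have h4 := hcf' t r
        rw [h1, h3] at h4
        calc ∑' n : ℕ, ((p n : ℝ) : ℂ) * Complex.exp (I * (t : ℂ) * (n : ℂ))
            = ∑' n : ℕ, (κ {n}).toReal • Complex.exp (I * (t : ℂ) * (n : ℂ)) := by
              refine tsum_congr fun n => ?_
              rw [Complex.real_smul]
          _ = ∫ x, Complex.exp (-((Λ * cd * Cr r x : ℝ) : ℂ)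
                * (1 - Complex.exp (I * (t : ℂ)))) ∂μ := h4
          _ = _ := mixture_cf harmeas harnn t
      have hpeq : p = fun n => ∫ x, Stmt17.pois (Λ * cd * Cr r x) n ∂μ := by
        refine coeff_unique hpsummable (summable_W harmeas harnn) (fun n => ENNReal.toReal_nonneg)
          (fun n => W_nonneg harnn n) hκcf
      -- compute the integral of f ∘ Δ r
      have h5 : ∫ ω, f ((Δ r ω : ℕ) : ℝ) ∂P = ∫ n : ℕ, g n ∂κ := by
        rw [hκdef, integral_map hmeasΔ measurable_from_nat.aestronglyMeasurable]
      have h6 : Integrable g κ := by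
        refine Integrable.mono' (integrable_const ‖f‖)
          measurable_from_nat.aestronglyMeasurable ?_
        filter_upwards with n
        exact f.norm_coe_le_norm _
      rw [h5, integral_countable' h6, ← tsum_W_mul_g hg harmeas harnn]
      refine tsum_congr fun n => ?_
      rw [smul_eq_mul]
      exact congrArg (· * g n) (congrFun hpeq n)
    -- the limit identity
    have hlim : ∫ y, f y ∂ν = ∫ x, Gf g (Λ * cd * C x) ∂μ := by
      rw [hνintR f (f.integrable ν), ← tsum_W_mul_g hg haLmeas haLnn]
      exact tsum_congr fun n => by rw [smul_eq_mul]
    -- dominated convergence in r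
    have htend : Tendsto (fun r : ℝ => ∫ x, Gf g (Λ * cd * Cr r x) ∂μ) atTop
        (nhds (∫ x, Gf g (Λ * cd * C x) ∂μ)) := by
      refine tendsto_integral_filter_of_dominated_convergence (fun _ => ‖f‖) ?_ ?_
        (integrable_const _) ?_
      · filter_upwards [eventually_ge_atTop (0 : ℝ)] with r hr
        exact (measurable_Gf hg (measurable_const.mul (hCrmeas r hr))
          (fun x => mul_nonneg hΛcd (hCrnn r hr x))).aestronglyMeasurable
      · filter_upwards [eventually_ge_atTop (0 : ℝ)] with r hr
        filter_upwards with x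
        exact abs_Gf_le hg (mul_nonneg hΛcd (hCrnn r hr x))
      · filter_upwards with x
        have hc0 : 0 ≤ Λ * cd * C x := haLnn x
        have hcont := continuousOn_Gf (g := g) hg (Λ * cd * C x + 1) (by linarith)
        have hcw : ContinuousWithinAt (Gf g) (Icc 0 (Λ * cd * C x + 1)) (Λ * cd * C x) :=
          hcont.continuousWithinAt ⟨hc0, by linarith⟩
        have htc : Tendsto (fun r => Λ * cd * Cr r x) atTop (nhds (Λ * cd * C x)) :=
          (hC x).const_mul _
        have hmem : ∀ᶠ r in atTop, (Λ * cd * Cr r x) ∈ Icc 0 (Λ * cd * C x + 1) := by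
          have h1 : ∀ᶠ r in atTop, 0 ≤ Λ * cd * Cr r x := by
            filter_upwards [eventually_ge_atTop (0 : ℝ)] with r hr
            exact mul_nonneg hΛcd (hCrnn r hr x)
          have h2 : ∀ᶠ r in atTop, Λ * cd * Cr r x < Λ * cd * C x + 1 :=
            htc.eventually_lt_const (by linarith)
          filter_upwards [h1, h2] with r ha hb
          exact ⟨ha, hb.le⟩
        have hcomp := (ContinuousWithinAt.tendsto hcw).comp (tendsto_nhdsWithin_iff.mpr ⟨htc, hmem⟩)
        exact hcomp
    rw [hlim]
    refine htend.congr' ?_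
    filter_upwards [eventually_ge_atTop (0 : ℝ)] with r hr
    exact (hkey r hr).symm
end
end
end

section
/- Suppose there is a sequence C_r → ∞ and a function g such that (C_r(x) - C_r)/√C_r → g(x) for every x. Then (Δ_r - λ c_d C_r)/√(λ c_d C_r) converges in distribution to Z + √(λ c_d) g(X_0), where Z is standard normal independent of X_0. Equivalently, the characteristic function converges to exp(-t²/2) ∫ F(dx) exp(it √(λ c_d) g(x)). -/
open MeasureTheory ProbabilityTheory Set Filter Complex

lemma rpow_const_measurable' (β : ℝ) : Measurable (fun ρ : ℝ => ρ ^ β) := by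
  measurability

lemma sqrt_tendsto_atTop' : Tendsto Real.sqrt atTop atTop := by
  rw [tendsto_atTop_atTop]
  intro M
  exact ⟨M ^ 2, fun x hx => le_trans (le_abs_self M)
    (by rw [← Real.sqrt_sq_eq_abs]; exact Real.sqrt_le_sqrt hx)⟩

lemma aux1' (t : ℝ) (n : ℕ) (q : ℝ) (hq : q ≠ 0) :
    I * (t : ℂ) * ((((n : ℝ) - q ^ 2) / q : ℝ) : ℂ)
      = I * ((t / q : ℝ) : ℂ) * (n : ℂ) + -(I * (t : ℂ) * ((q : ℝ) : ℂ)) := by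
  have hqC : (q : ℂ) ≠ 0 := by exact_mod_cast hq
  push_cast
  field_simp
  ring

lemma aux2' (t u v w q : ℝ) (hq : q ≠ 0) :
    -(u * v * w : ℂ) * (1 - Complex.exp (I * ((t / q : ℝ) : ℂ))) + -(I * (t : ℂ) * ((q : ℝ) : ℂ))
      = I * (t : ℂ) * (((u * v * w - q ^ 2) / q : ℝ) : ℂ)
        - ((u * v * w / q ^ 2 : ℝ) : ℂ) * ((t : ℂ) ^ 2 / 2)
        + (u * v * w : ℂ) * (Complex.exp (I * ((t / q : ℝ) : ℂ)) - 1 - I * ((t / q : ℝ) : ℂ)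
            - (I * ((t / q : ℝ) : ℂ)) ^ 2 / 2) := by
  have hqC : (q : ℂ) ≠ 0 := by exact_mod_cast hq
  push_cast
  field_simp
  linear_combination ((u : ℂ) * v * w * t ^ 2) * Complex.I_sq


lemma aux3' (L C X : ℝ) (hL : 0 < L) (hC : 0 < C) :
    (L * X - L * C) / Real.sqrt (L * C) = Real.sqrt L * ((X - C) / Real.sqrt C) := by
  have h1 : Real.sqrt L ≠ 0 := (Real.sqrt_pos.2 hL).ne'
  have h2 : Real.sqrt C ≠ 0 := (Real.sqrt_pos.2 hC).ne'
  have h3 : Real.sqrt L * Real.sqrt L = L := Real.mul_self_sqrt hL.le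
  rw [Real.sqrt_mul hL.le]
  field_simp
  linear_combination (C - X) * h3

lemma aux4' (L C X : ℝ) (hL : 0 < L) (hC : 0 < C) :
    L * X / (L * C) = 1 + (Real.sqrt C)⁻¹ * ((X - C) / Real.sqrt C) := by
  have h2 : Real.sqrt C ≠ 0 := (Real.sqrt_pos.2 hC).ne'
  have h4 : Real.sqrt C * Real.sqrt C = C := Real.mul_self_sqrt hC.le
  field_simp
  linear_combination (X - C) * h4

lemma aux5' (A s q : ℝ) (hq : q ≠ 0) : A * (s / q) ^ 3 = A / q ^ 2 * (s ^ 3 * q⁻¹) := by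
  field_simp

lemma aux6' (A s b c : ℝ) (hA : 0 ≤ A) :
    ‖Complex.exp (-(A : ℂ) * (1 - Complex.exp (I * (s : ℂ))) + -(I * (b : ℂ) * (c : ℂ)))‖ ≤ 1 := by
  rw [Complex.norm_exp, Real.exp_le_one_iff]
  have hre : (-(A : ℂ) * (1 - Complex.exp (I * (s : ℂ))) + -(I * (b : ℂ) * (c : ℂ))).re
      = -(A * (1 - Real.cos s)) := by
    simp [Complex.exp_re, Complex.add_re, Complex.mul_re, Complex.mul_im]
  rw [hre]
  have := Real.cos_le_one s
  nlinarith

lemma aux7' (z : ℂ) : ∑ m ∈ Finset.range 3, z ^ m / (Nat.factorial m) = 1 + z + z ^ 2 / 2 := by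
  simp [Finset.sum_range_succ, Nat.factorial]

/-- Suppose `C_r → ∞` and `(C_r(x) - C_r)/√C_r → g(x)` for every `x`.
Then `(Δ_r - Λ c_d C_r)/√(Λ c_d C_r)` converges in distribution to
`Z + √(Λ c_d) g(X₀)` with `Z` standard normal independent of `X₀`; equivalently the
characteristic function converges to `exp(-t²/2) ∫ exp(i t √(Λ c_d) g(x)) μ(dx)`.
(Conditionally on `X_0 = x`, `Δ_r` is Poisson with parameter `Λ c_d C_r(x)`; this is
encoded by the characteristic function identity `hcf`.) -/
theorem stmt_19 {Ω : Type*} [MeasurableSpace Ω] (P : Measure Ω) [IsProbabilityMeasure P]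
    (d : ℕ) (hd : 1 ≤ d) (μ : Measure ℝ) [IsProbabilityMeasure μ]
    (Λ θ β cd : ℝ) (hΛ : 0 < Λ) (hθ : 0 < θ) (hcd : 0 < cd)
    (F : ℝ → ℝ) (hF : F = fun y => (μ (Iic y)).toReal)
    (Cr : ℝ → ℝ → ℝ)
    (hCr : ∀ r x, Cr r x = ∫ ρ in (0 : ℝ)..r, ρ ^ (d - 1) * (1 - F (θ * ρ ^ β - x)))
    (Δ : ℝ → Ω → ℕ)
    -- conditionally on `X_0 = x`, `Δ_r` is Poisson with parameter `Λ c_d C_r(x)`: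
    (hcf : ∀ t r : ℝ, ∫ ω, Complex.exp (I * t * (Δ r ω : ℂ)) ∂P
      = ∫ x, Complex.exp (-(Λ * cd * Cr r x : ℂ) * (1 - Complex.exp (I * t))) ∂μ)
    (CrSeq : ℝ → ℝ) (hCrpos : ∀ r, 0 < CrSeq r)
    (hCrInf : Tendsto CrSeq atTop atTop)
    (g : ℝ → ℝ)
    (hg : ∀ x, Tendsto (fun r => (Cr r x - CrSeq r) / Real.sqrt (CrSeq r)) atTop
      (nhds (g x))) :
    ∀ t : ℝ, Tendsto (fun r : ℝ =>
        ∫ ω, Complex.exp (I * t *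
          ((((Δ r ω : ℝ) - Λ * cd * CrSeq r) / Real.sqrt (Λ * cd * CrSeq r) : ℝ) : ℂ)) ∂P)
      atTop
      (nhds (Complex.exp (-(t ^ 2 : ℂ) / 2)
        * ∫ x, Complex.exp (I * t * (Real.sqrt (Λ * cd) * g x : ℝ)) ∂μ)) := by
  intro t
  have hΛcd : (0:ℝ) < Λ * cd := mul_pos hΛ hcd
  have hapos : ∀ r, 0 < Λ * cd * CrSeq r := fun r => mul_pos hΛcd (hCrpos r)
  have hqpos : ∀ r, 0 < Real.sqrt (Λ * cd * CrSeq r) := fun r => Real.sqrt_pos.2 (hapos r)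
  have hq2 : ∀ r, Λ * cd * CrSeq r = Real.sqrt (Λ * cd * CrSeq r) ^ 2 :=
    fun r => (Real.sq_sqrt (hapos r).le).symm
  -- F properties
  have hFmono : Monotone F := by
    rw [hF]
    intro y y' hyy'
    exact ENNReal.toReal_mono (measure_ne_top μ _) (measure_mono (Iic_subset_Iic.2 hyy'))
  have hFmeas : Measurable F := hFmono.measurable
  have hF0 : ∀ y, 0 ≤ F y := by intro y; rw [hF]; exact ENNReal.toReal_nonneg
  have hF1 : ∀ y, F y ≤ 1 := by
    intro y; rw [hF]
    exact ENNReal.toReal_le_of_le_ofReal zero_le_one (by simpa using prob_le_one (μ := μ) (s := Iic y))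
  -- integrability of the Cr integrand
  have hint : ∀ r x : ℝ, IntervalIntegrable
      (fun ρ => ρ ^ (d - 1) * (1 - F (θ * ρ ^ β - x))) volume 0 r := by
    intro r x
    refine IntervalIntegrable.mono_fun ((continuous_pow (d - 1)).intervalIntegrable 0 r) ?_ ?_
    · refine Measurable.aestronglyMeasurable ?_
      have hβ : Measurable (fun ρ : ℝ => ρ ^ β) := rpow_const_measurable' β
      exact (measurable_id.pow_const (d - 1)).mul
        (measurable_const.sub (hFmeas.comp ((hβ.const_mul θ).sub measurable_const)))
    · filter_upwards with ρ
      rw [norm_mul]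
      have h1 : ‖1 - F (θ * ρ ^ β - x)‖ ≤ 1 := by
        rw [Real.norm_eq_abs, abs_le]
        constructor <;> [linarith [hF1 (θ * ρ ^ β - x)]; linarith [hF0 (θ * ρ ^ β - x)]]
      calc ‖ρ ^ (d-1)‖ * ‖1 - F (θ * ρ ^ β - x)‖ ≤ ‖ρ ^ (d-1)‖ * 1 :=
            mul_le_mul_of_nonneg_left h1 (norm_nonneg _)
        _ = ‖ρ ^ (d-1)‖ := mul_one _
  -- measurability and nonnegativity of Cr
  have hCrMeas : ∀ r : ℝ, 0 ≤ r → Measurable (fun x => Cr r x) := by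
    intro r hr
    have hmono : Monotone (fun x => Cr r x) := by
      intro x x' hxx'
      show Cr r x ≤ Cr r x'
      rw [hCr, hCr]
      refine intervalIntegral.integral_mono_on hr (hint r x) (hint r x') ?_
      intro ρ hρ
      have h1 : F (θ * ρ ^ β - x') ≤ F (θ * ρ ^ β - x) := hFmono (by linarith)
      have h2 : (0:ℝ) ≤ ρ ^ (d - 1) := pow_nonneg hρ.1 _
      nlinarith
    exact hmono.measurable
  have hCrNonneg : ∀ r : ℝ, 0 ≤ r → ∀ x, 0 ≤ Cr r x := by
    intro r hr x
    rw [hCr]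
    refine intervalIntegral.integral_nonneg hr ?_
    intro ρ hρ
    have h1 := hF1 (θ * ρ ^ β - x)
    have h2 : (0:ℝ) ≤ ρ ^ (d - 1) := pow_nonneg hρ.1 _
    nlinarith
  -- Step 1: rewrite the Ω-integral as a μ-integral
  have step1 : ∀ r : ℝ,
      (∫ ω, Complex.exp (I * t *
          ((((Δ r ω : ℝ) - Λ * cd * CrSeq r) / Real.sqrt (Λ * cd * CrSeq r) : ℝ) : ℂ)) ∂P)
      = ∫ x, Complex.exp (-(Λ * cd * Cr r x : ℂ)
          * (1 - Complex.exp (I * ((t / Real.sqrt (Λ * cd * CrSeq r) : ℝ) : ℂ)))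
          + -(I * (t : ℂ) * ((Real.sqrt (Λ * cd * CrSeq r) : ℝ) : ℂ))) ∂μ := by
    intro r
    calc (∫ ω, Complex.exp (I * t *
          ((((Δ r ω : ℝ) - Λ * cd * CrSeq r) / Real.sqrt (Λ * cd * CrSeq r) : ℝ) : ℂ)) ∂P)
        = ∫ ω, Complex.exp (I * ((t / Real.sqrt (Λ * cd * CrSeq r) : ℝ) : ℂ) * (Δ r ω : ℂ))
            * Complex.exp (-(I * (t : ℂ) * ((Real.sqrt (Λ * cd * CrSeq r) : ℝ) : ℂ))) ∂P := by
          refine integral_congr_ae (Filter.Eventually.of_forall fun ω => ?_)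
          dsimp only
          rw [← Complex.exp_add]
          congr 1
          set q := Real.sqrt (Λ * cd * CrSeq r) with hqdef
          rw [show Λ * cd * CrSeq r = q ^ 2 from (Real.sq_sqrt (hapos r).le).symm]
          exact aux1' t (Δ r ω) q (hqpos r).ne'
      _ = (∫ ω, Complex.exp (I * ((t / Real.sqrt (Λ * cd * CrSeq r) : ℝ) : ℂ) * (Δ r ω : ℂ)) ∂P)
            * Complex.exp (-(I * (t : ℂ) * ((Real.sqrt (Λ * cd * CrSeq r) : ℝ) : ℂ))) :=
          integral_mul_const _ _
      _ = (∫ x, Complex.exp (-(Λ * cd * Cr r x : ℂ)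
              * (1 - Complex.exp (I * ((t / Real.sqrt (Λ * cd * CrSeq r) : ℝ) : ℂ)))) ∂μ)
            * Complex.exp (-(I * (t : ℂ) * ((Real.sqrt (Λ * cd * CrSeq r) : ℝ) : ℂ))) := by
          rw [hcf (t / Real.sqrt (Λ * cd * CrSeq r)) r]
      _ = _ := by
          rw [← integral_mul_const]
          refine integral_congr_ae (Filter.Eventually.of_forall fun x => ?_)
          dsimp only
          rw [Complex.exp_add]
  -- basic limits
  have hinvC : Tendsto (fun r => (Real.sqrt (CrSeq r))⁻¹) atTop (nhds 0) :=
    (sqrt_tendsto_atTop'.comp hCrInf).inv_tendsto_atTop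
  have haInf : Tendsto (fun r => Λ * cd * CrSeq r) atTop atTop :=
    Tendsto.const_mul_atTop hΛcd hCrInf
  have hinvq : Tendsto (fun r => (Real.sqrt (Λ * cd * CrSeq r))⁻¹) atTop (nhds 0) :=
    (sqrt_tendsto_atTop'.comp haInf).inv_tendsto_atTop
  have hs0 : Tendsto (fun r => t / Real.sqrt (Λ * cd * CrSeq r)) atTop (nhds 0) := by
    simpa [div_eq_mul_inv] using hinvq.const_mul t
  have hb : ∀ x, Tendsto (fun r => (Λ * cd * Cr r x - Λ * cd * CrSeq r)
        / Real.sqrt (Λ * cd * CrSeq r)) atTop (nhds (Real.sqrt (Λ * cd) * g x)) := fun x =>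
    ((hg x).const_mul (Real.sqrt (Λ * cd))).congr fun r =>
      (aux3' (Λ * cd) (CrSeq r) (Cr r x) hΛcd (hCrpos r)).symm
  have hc : ∀ x, Tendsto (fun r => Λ * cd * Cr r x / (Λ * cd * CrSeq r)) atTop (nhds 1) := by
    intro x
    have h0 : Tendsto (fun r => 1 + (Real.sqrt (CrSeq r))⁻¹
        * ((Cr r x - CrSeq r) / Real.sqrt (CrSeq r))) atTop (nhds (1 + 0 * g x)) :=
      tendsto_const_nhds.add (hinvC.mul (hg x))
    rw [show (1:ℝ) + 0 * g x = 1 by ring] at h0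
    exact h0.congr fun r => (aux4' (Λ * cd) (CrSeq r) (Cr r x) hΛcd (hCrpos r)).symm
  -- pointwise limit of the integrand
  have hlim : ∀ x, Tendsto (fun r => Complex.exp (-(Λ * cd * Cr r x : ℂ)
        * (1 - Complex.exp (I * ((t / Real.sqrt (Λ * cd * CrSeq r) : ℝ) : ℂ)))
        + -(I * (t : ℂ) * ((Real.sqrt (Λ * cd * CrSeq r) : ℝ) : ℂ))))
      atTop (nhds (Complex.exp (-(t ^ 2 : ℂ) / 2)
        * Complex.exp (I * t * ((Real.sqrt (Λ * cd) * g x : ℝ) : ℂ)))) := by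
    intro x
    have hAR : Tendsto (fun r => (Λ * cd * Cr r x : ℂ)
        * (Complex.exp (I * ((t / Real.sqrt (Λ * cd * CrSeq r) : ℝ) : ℂ)) - 1
          - I * ((t / Real.sqrt (Λ * cd * CrSeq r) : ℝ) : ℂ)
          - (I * ((t / Real.sqrt (Λ * cd * CrSeq r) : ℝ) : ℂ)) ^ 2 / 2))
        atTop (nhds 0) := by
      rw [tendsto_zero_iff_norm_tendsto_zero]
      have hbound : Tendsto (fun r => Λ * cd * Cr r x / (Λ * cd * CrSeq r)
          * (|t| ^ 3 * (Real.sqrt (Λ * cd * CrSeq r))⁻¹)) atTop (nhds (1 * (|t| ^ 3 * 0))) :=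
        (hc x).mul (tendsto_const_nhds.mul hinvq)
      rw [show (1:ℝ) * (|t| ^ 3 * 0) = 0 by ring] at hbound
      refine squeeze_zero' (Filter.Eventually.of_forall fun r => norm_nonneg _) ?_ hbound
      have habs : ∀ᶠ r in atTop, |t / Real.sqrt (Λ * cd * CrSeq r)| ≤ 1 := by
        filter_upwards [Metric.tendsto_nhds.1 hs0 1 one_pos] with r hr
        rw [Real.dist_eq, sub_zero] at hr
        exact hr.le
      filter_upwards [habs, eventually_ge_atTop (0:ℝ)] with r hsr hr
      have hCrnn := hCrNonneg r hr x
      have hA0 : 0 ≤ Λ * cd * Cr r x := mul_nonneg hΛcd.le hCrnn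
      have hnormA : ‖((Λ : ℂ) * cd * ((Cr r x : ℝ) : ℂ))‖ = Λ * cd * Cr r x := by
        rw [norm_mul, norm_mul, Complex.norm_real, Complex.norm_real, Complex.norm_real,
          Real.norm_eq_abs, Real.norm_eq_abs, Real.norm_eq_abs,
          abs_of_pos hΛ, abs_of_pos hcd, _root_.abs_of_nonneg hCrnn]
      have hS3 : ‖Complex.exp (I * ((t / Real.sqrt (Λ * cd * CrSeq r) : ℝ) : ℂ)) - 1
          - I * ((t / Real.sqrt (Λ * cd * CrSeq r) : ℝ) : ℂ)
          - (I * ((t / Real.sqrt (Λ * cd * CrSeq r) : ℝ) : ℂ)) ^ 2 / 2‖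
          ≤ |t / Real.sqrt (Λ * cd * CrSeq r)| ^ 3 := by
        have h0 : ‖I * ((t / Real.sqrt (Λ * cd * CrSeq r) : ℝ) : ℂ)‖ ≤ 1 := by
          rw [norm_mul, Complex.norm_I, one_mul, Complex.norm_real, Real.norm_eq_abs]
          exact hsr
        have hb3 := Complex.exp_bound h0 (by norm_num : 0 < 3)
        rw [aux7'] at hb3
        have habsIs : ‖I * ((t / Real.sqrt (Λ * cd * CrSeq r) : ℝ) : ℂ)‖
            = |t / Real.sqrt (Λ * cd * CrSeq r)| := by
          rw [norm_mul, Complex.norm_I, one_mul, Complex.norm_real, Real.norm_eq_abs]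
        rw [habsIs] at hb3
        calc ‖Complex.exp (I * ((t / Real.sqrt (Λ * cd * CrSeq r) : ℝ) : ℂ)) - 1
              - I * ((t / Real.sqrt (Λ * cd * CrSeq r) : ℝ) : ℂ)
              - (I * ((t / Real.sqrt (Λ * cd * CrSeq r) : ℝ) : ℂ)) ^ 2 / 2‖
            = ‖Complex.exp (I * ((t / Real.sqrt (Λ * cd * CrSeq r) : ℝ) : ℂ))
              - (1 + I * ((t / Real.sqrt (Λ * cd * CrSeq r) : ℝ) : ℂ)
                + (I * ((t / Real.sqrt (Λ * cd * CrSeq r) : ℝ) : ℂ)) ^ 2 / 2)‖ := by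
              congr 1; ring
          _ ≤ |t / Real.sqrt (Λ * cd * CrSeq r)| ^ 3
                * ((3:ℕ).succ * (((3:ℕ).factorial : ℝ) * (3:ℕ))⁻¹) := hb3
          _ ≤ |t / Real.sqrt (Λ * cd * CrSeq r)| ^ 3 := by
              have h9 : ((3:ℕ).succ : ℝ) * (((3:ℕ).factorial : ℝ) * (3:ℕ))⁻¹ = 2/9 := by
                norm_num [Nat.factorial]
              rw [h9]
              nlinarith [pow_nonneg (abs_nonneg (t / Real.sqrt (Λ * cd * CrSeq r))) 3]
      calc ‖((Λ : ℂ) * cd * ((Cr r x : ℝ) : ℂ))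
            * (Complex.exp (I * ((t / Real.sqrt (Λ * cd * CrSeq r) : ℝ) : ℂ)) - 1
              - I * ((t / Real.sqrt (Λ * cd * CrSeq r) : ℝ) : ℂ)
              - (I * ((t / Real.sqrt (Λ * cd * CrSeq r) : ℝ) : ℂ)) ^ 2 / 2)‖
          = (Λ * cd * Cr r x) * ‖Complex.exp (I * ((t / Real.sqrt (Λ * cd * CrSeq r) : ℝ) : ℂ)) - 1
              - I * ((t / Real.sqrt (Λ * cd * CrSeq r) : ℝ) : ℂ)
              - (I * ((t / Real.sqrt (Λ * cd * CrSeq r) : ℝ) : ℂ)) ^ 2 / 2‖ := by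
            rw [norm_mul, hnormA]
        _ ≤ (Λ * cd * Cr r x) * |t / Real.sqrt (Λ * cd * CrSeq r)| ^ 3 :=
            mul_le_mul_of_nonneg_left hS3 hA0
        _ = Λ * cd * Cr r x / (Λ * cd * CrSeq r)
              * (|t| ^ 3 * (Real.sqrt (Λ * cd * CrSeq r))⁻¹) := by
            rw [abs_div, abs_of_pos (hqpos r)]
            have h5 := aux5' (Λ * cd * Cr r x) |t| (Real.sqrt (Λ * cd * CrSeq r)) (hqpos r).ne'
            rw [← hq2 r] at h5
            exact h5
    have key2 : ∀ r, (-(Λ * cd * Cr r x : ℂ)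
        * (1 - Complex.exp (I * ((t / Real.sqrt (Λ * cd * CrSeq r) : ℝ) : ℂ)))
        + -(I * (t : ℂ) * ((Real.sqrt (Λ * cd * CrSeq r) : ℝ) : ℂ)))
        = I * (t : ℂ) * (((Λ * cd * Cr r x - Λ * cd * CrSeq r)
              / Real.sqrt (Λ * cd * CrSeq r) : ℝ) : ℂ)
          - ((Λ * cd * Cr r x / (Λ * cd * CrSeq r) : ℝ) : ℂ) * ((t : ℂ) ^ 2 / 2)
          + (Λ * cd * Cr r x : ℂ)
            * (Complex.exp (I * ((t / Real.sqrt (Λ * cd * CrSeq r) : ℝ) : ℂ)) - 1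
              - I * ((t / Real.sqrt (Λ * cd * CrSeq r) : ℝ) : ℂ)
              - (I * ((t / Real.sqrt (Λ * cd * CrSeq r) : ℝ) : ℂ)) ^ 2 / 2) := by
      intro r
      have h := aux2' t Λ cd (Cr r x) (Real.sqrt (Λ * cd * CrSeq r)) (hqpos r).ne'
      rw [← hq2 r] at h
      exact h
    have h1 : Tendsto (fun r => I * (t : ℂ) * (((Λ * cd * Cr r x - Λ * cd * CrSeq r)
          / Real.sqrt (Λ * cd * CrSeq r) : ℝ) : ℂ)) atTop
        (nhds (I * (t : ℂ) * ((Real.sqrt (Λ * cd) * g x : ℝ) : ℂ))) :=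
      Tendsto.const_mul _ ((Complex.continuous_ofReal.tendsto _).comp (hb x))
    have h2 : Tendsto (fun r => ((Λ * cd * Cr r x / (Λ * cd * CrSeq r) : ℝ) : ℂ)
          * ((t : ℂ) ^ 2 / 2)) atTop (nhds (((1:ℝ) : ℂ) * ((t : ℂ) ^ 2 / 2))) :=
      Tendsto.mul_const _ ((Complex.continuous_ofReal.tendsto _).comp (hc x))
    have hsum := (h1.sub h2).add hAR
    have hexp := (Complex.continuous_exp.tendsto _).comp hsum
    have hval : Complex.exp ((I * (t : ℂ) * ((Real.sqrt (Λ * cd) * g x : ℝ) : ℂ))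
          - (((1:ℝ) : ℂ) * ((t : ℂ) ^ 2 / 2)) + 0)
        = Complex.exp (-(t ^ 2 : ℂ) / 2)
          * Complex.exp (I * t * ((Real.sqrt (Λ * cd) * g x : ℝ) : ℂ)) := by
      rw [← Complex.exp_add]
      congr 1
      push_cast
      ring
    rw [hval] at hexp
    exact hexp.congr fun r => congrArg Complex.exp (key2 r).symm
  -- dominated convergence
  have hfinal : Tendsto (fun r => ∫ x, Complex.exp (-(Λ * cd * Cr r x : ℂ)
      * (1 - Complex.exp (I * ((t / Real.sqrt (Λ * cd * CrSeq r) : ℝ) : ℂ)))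
      + -(I * (t : ℂ) * ((Real.sqrt (Λ * cd * CrSeq r) : ℝ) : ℂ))) ∂μ) atTop
      (nhds (∫ x, Complex.exp (-(t ^ 2 : ℂ) / 2)
        * Complex.exp (I * t * ((Real.sqrt (Λ * cd) * g x : ℝ) : ℂ)) ∂μ)) := by
    refine tendsto_integral_filter_of_dominated_convergence (fun _ => 1) ?_ ?_
      (integrable_const 1) (Filter.Eventually.of_forall hlim)
    · filter_upwards [eventually_ge_atTop (0:ℝ)] with r hr
      refine Measurable.aestronglyMeasurable ?_
      exact Complex.measurable_exp.comp ((((Complex.measurable_ofReal.comp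
        (hCrMeas r hr)).const_mul ((Λ : ℂ) * cd)).neg.mul_const _).add_const _)
    · filter_upwards [eventually_ge_atTop (0:ℝ)] with r hr
      refine Filter.Eventually.of_forall fun x => ?_
      have hA0 : 0 ≤ Λ * cd * Cr r x := mul_nonneg hΛcd.le (hCrNonneg r hr x)
      have h6 := aux6' (Λ * cd * Cr r x) (t / Real.sqrt (Λ * cd * CrSeq r)) t
        (Real.sqrt (Λ * cd * CrSeq r)) hA0
      refine le_trans (le_of_eq ?_) h6
      congr 2
      push_cast
      ring
  have hres := hfinal.congr fun r => (step1 r).symm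
  rw [show (∫ x, Complex.exp (-(t ^ 2 : ℂ) / 2)
      * Complex.exp (I * t * ((Real.sqrt (Λ * cd) * g x : ℝ) : ℂ)) ∂μ)
      = Complex.exp (-(t ^ 2 : ℂ) / 2)
        * ∫ x, Complex.exp (I * t * ((Real.sqrt (Λ * cd) * g x : ℝ) : ℂ)) ∂μ
    from integral_const_mul _ _] at hres
  exact hres
end
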